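/- arXiv:2201.11437 — 9 statements merged into one kernel-verified Lean document; each statement's English description precedes it below -/
import Mathlib

section
/- Let n ∈ ℤ, let {x_k}_{k=n-1}^∞ be a strictly increasing sequence of real numbers, and let {τ_k}_{k=n}^∞ be a geometrically decreasing sequence. Then sup_{n ≤ k < ∞} τ_k (∫_{x_{n-1}}^{x_k} g) ≈ sup_{n ≤ k < ∞} τ_k (∫_{x_{k-1}}^{x_k} g) holds for all non-negative Lebesgue measurable functions g on (x_{n-1}, ∞), with implicit constants depending only on the geometric-decrease ratio sup_k τ_{k+1}/τ_k. -/
open MeasureTheory Set ENNReal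

theorem sup_sum_equiv (ρ : ℝ≥0∞) (hρ : ρ < 1) :
    ∃ c₁ c₂ : ℝ≥0∞, 0 < c₁ ∧ c₂ < ⊤ ∧
      ∀ (n : ℤ) (x : ℤ → ℝ) (τ : ℤ → ℝ≥0∞),
        (∀ k : ℤ, n - 1 ≤ k → x k < x (k + 1)) →
        (∀ k : ℤ, n ≤ k → 0 < τ k ∧ τ k < ⊤) →
        (∀ k : ℤ, n ≤ k → τ (k + 1) ≤ ρ * τ k) →
        ∀ g : ℝ → ℝ≥0∞, Measurable g →
          c₁ * (⨆ j : ℕ, τ (n + j) * ∫⁻ s in Ioo (x (n - 1)) (x (n + j)), g s) ≤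
              (⨆ j : ℕ, τ (n + j) * ∫⁻ s in Ioo (x (n + j - 1)) (x (n + j)), g s) ∧
            (⨆ j : ℕ, τ (n + j) * ∫⁻ s in Ioo (x (n + j - 1)) (x (n + j)), g s) ≤
              c₂ * ⨆ j : ℕ, τ (n + j) * ∫⁻ s in Ioo (x (n - 1)) (x (n + j)), g s := by
  refine ⟨1 - ρ, 1, tsub_pos_iff_lt.mpr hρ, one_lt_top, ?_⟩
  intro n x τ hx hτ hgeo g hg
  -- monotonicity of x
  have hmono : ∀ a b : ℤ, n - 1 ≤ a → a ≤ b → x a ≤ x b := by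
    intro a b ha hab
    exact Int.le_induction (motive := fun b _ => x a ≤ x b) le_rfl
      (fun b hb ih => ih.trans (hx b (ha.trans hb)).le) b hab
  -- geometric decay
  have hdecay : ∀ (i m : ℕ), τ (n + i + m) ≤ ρ ^ m * τ (n + i) := by
    intro i m
    induction m with
    | zero => simp
    | succ m ih =>
        have h1 : τ (n + i + m + 1) ≤ ρ * τ (n + i + m) := by
          apply hgeo
          have : (0:ℤ) ≤ (i:ℤ) + m := by positivity
          omega
        calc τ (n + i + (m+1 : ℕ)) = τ (n + i + m + 1) := by push_cast; ring_nf
          _ ≤ ρ * τ (n + i + m) := h1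
          _ ≤ ρ * (ρ ^ m * τ (n + i)) := by gcongr
          _ = ρ ^ (m+1) * τ (n + i) := by ring
  set S := ⨆ j : ℕ, τ (n + j) * ∫⁻ s in Ioo (x (n + j - 1)) (x (n + j)), g s with hS
  set T := ⨆ j : ℕ, τ (n + j) * ∫⁻ s in Ioo (x (n - 1)) (x (n + j)), g s with hT
  -- splitting of the integral
  have hsplit : ∀ j : ℕ, (∫⁻ s in Ioo (x (n - 1)) (x (n + j)), g s) =
      ∑ i ∈ Finset.range (j+1), ∫⁻ s in Ioo (x (n + i - 1)) (x (n + i)), g s := by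
    intro j
    induction j with
    | zero => norm_num
    | succ j ih =>
        rw [Finset.sum_range_succ, ← ih]
        have hab : x (n - 1) < x (n + j) := by
          calc x (n - 1) < x (n - 1 + 1) := hx _ le_rfl
            _ ≤ x (n + j) := hmono _ _ (by omega) (by omega)
        have hbc : x (n + j) ≤ x (n + j + 1) := (hx _ (by omega)).le
        have hunion : Ioo (x (n-1)) (x (n + j)) ∪ Ico (x (n + j)) (x (n + j + 1)) =
            Ioo (x (n-1)) (x (n + j + 1)) := Set.Ioo_union_Ico_eq_Ioo hab hbc
        have hdisj : Disjoint (Ioo (x (n-1)) (x (n + j))) (Ico (x (n + j)) (x (n + j + 1))) := by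
          rw [Set.disjoint_left]
          rintro a ⟨_, h2⟩ ⟨h3, _⟩
          exact absurd h3 (not_le.mpr h2)
        have key : (∫⁻ s in Ioo (x (n-1)) (x (n + j + 1)), g s) =
            (∫⁻ s in Ioo (x (n-1)) (x (n + j)), g s) +
            (∫⁻ s in Ico (x (n + j)) (x (n + j + 1)), g s) := by
          rw [← hunion, lintegral_union measurableSet_Ico hdisj]
        have hico : (∫⁻ s in Ico (x (n + j)) (x (n + j + 1)), g s) =
            (∫⁻ s in Ioo (x (n + j)) (x (n + j + 1)), g s) :=
          (setLIntegral_congr (Ioo_ae_eq_Ico).symm)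
        push_cast
        rw [show n + ((j:ℤ)+1) = n + j + 1 from by ring,
          show n + (j:ℤ) + 1 - 1 = n + j from by ring, key, hico]
  -- second inequality
  have hST : S ≤ T := by
    apply iSup_le
    intro j
    have hsub : Ioo (x (n + j - 1)) (x (n + j)) ⊆ Ioo (x (n - 1)) (x (n + j)) := by
      apply Set.Ioo_subset_Ioo _ le_rfl
      exact hmono _ _ le_rfl (by omega)
    calc τ (n + j) * ∫⁻ s in Ioo (x (n + j - 1)) (x (n + j)), g s
        ≤ τ (n + j) * ∫⁻ s in Ioo (x (n - 1)) (x (n + j)), g s := by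
          gcongr
      _ ≤ T := le_iSup (fun j : ℕ => τ (n + j) * ∫⁻ s in Ioo (x (n - 1)) (x (n + j)), g s) j
  constructor
  · -- first inequality : (1-ρ) * T ≤ S
    have hkey : ∀ j : ℕ, τ (n + j) * ∫⁻ s in Ioo (x (n - 1)) (x (n + j)), g s ≤ (1 - ρ)⁻¹ * S := by
      intro j
      rw [hsplit j, Finset.mul_sum]
      have hterm : ∀ i ∈ Finset.range (j+1),
          τ (n + j) * ∫⁻ s in Ioo (x (n + i - 1)) (x (n + i)), g s ≤ ρ ^ (j - i) * S := by
        intro i hi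
        have hij : i ≤ j := Nat.lt_succ_iff.mp (Finset.mem_range.mp hi)
        have hτij : τ (n + j) ≤ ρ ^ (j - i) * τ (n + i) := by
          have := hdecay i (j - i)
          have e : n + (i:ℤ) + ((j - i : ℕ) : ℤ) = n + j := by
            rw [Nat.cast_sub hij]; ring
          rwa [e] at this
        calc τ (n + j) * ∫⁻ s in Ioo (x (n + i - 1)) (x (n + i)), g s
            ≤ ρ ^ (j - i) * (τ (n + i) * ∫⁻ s in Ioo (x (n + i - 1)) (x (n + i)), g s) := by
              rw [← mul_assoc]; gcongr
          _ ≤ ρ ^ (j - i) * S := by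
              gcongr
              exact le_iSup (fun i : ℕ => τ (n + i) * ∫⁻ s in Ioo (x (n + i - 1)) (x (n + i)), g s) i
      calc ∑ i ∈ Finset.range (j+1), τ (n + j) * ∫⁻ s in Ioo (x (n + i - 1)) (x (n + i)), g s
          ≤ ∑ i ∈ Finset.range (j+1), ρ ^ (j - i) * S := Finset.sum_le_sum hterm
        _ = (∑ i ∈ Finset.range (j+1), ρ ^ (j - i)) * S := by rw [Finset.sum_mul]
        _ ≤ (1 - ρ)⁻¹ * S := by
            gcongr
            calc ∑ i ∈ Finset.range (j+1), ρ ^ (j - i)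
                = ∑ m ∈ Finset.range (j+1), ρ ^ m := by
                  simpa using Finset.sum_range_reflect (fun m => ρ ^ m) (j+1)
              _ ≤ ∑' m : ℕ, ρ ^ m := ENNReal.sum_le_tsum _
              _ = (1 - ρ)⁻¹ := ENNReal.tsum_geometric ρ
    have hT' : T ≤ (1 - ρ)⁻¹ * S := iSup_le hkey
    calc (1 - ρ) * T ≤ (1 - ρ) * ((1 - ρ)⁻¹ * S) := by gcongr
      _ = ((1 - ρ) * (1 - ρ)⁻¹) * S := by rw [mul_assoc]
      _ = S := by
          rw [ENNReal.mul_inv_cancel (tsub_pos_iff_lt.mpr hρ).ne'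
            (by exact ne_top_of_le_ne_top one_ne_top tsub_le_self), one_mul]
  · simpa using hST
end

section
/- Let α > 0, let n ∈ ℤ, let {x_k}_{k=n-1}^∞ be a strictly increasing sequence of real numbers, and let {τ_k}_{k=n}^∞ be a geometrically decreasing sequence. Then Σ_{k=n}^∞ τ_k (∫_{x_{n-1}}^{x_k} g)^α ≈ Σ_{k=n}^∞ τ_k (∫_{x_{k-1}}^{x_k} g)^α holds for all non-negative Lebesgue measurable functions g on (x_{n-1}, ∞), with implicit constants depending only on α and the geometric-decrease ratio sup_k τ_{k+1}/τ_k. -/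
/-!
Split `∫_{x_{n-1}}^{x_{k+1}} g = ∫_{x_{n-1}}^{x_k} g + ∫_{x_k}^{x_{k+1}} g` and use
`(a + b)^α ≤ s^{-α} a^α + (1 - s)^{-α} b^α`, valid for every `s ∈ (0, 1)` because `a + b` is a
convex combination of `a / s` and `b / (1 - s)`. Choosing `s^α` strictly between the decay ratio
`ρ` and `1`, the terms `F_k` of the left sum and `G_k` of the right sum satisfy
`F_{k+1} ≤ σ F_k + C G_{k+1}` with `σ = ρ s^{-α} < 1`. Unrolling this recursion bounds `F_k` by
`C ∑_{i ≤ k} σ^{k-i} G_i`, and summing a Cauchy product gives `∑ F ≤ C (1 - σ)⁻¹ ∑ G`.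
The reverse inequality holds termwise.
-/

open MeasureTheory Set ENNReal

namespace ENNReal

open Finset

theorem tsum_mul_tsum_eq_tsum_sum_antidiagonal {A : Type*} [AddCommMonoid A]
    [HasAntidiagonal A] (f g : A → ℝ≥0∞) :
    (∑' n, f n) * ∑' n, g n = ∑' n, ∑ kl ∈ antidiagonal n, f kl.1 * g kl.2 :=
  calc (∑' n, f n) * ∑' n, g n = ∑' kl : A × A, f kl.1 * g kl.2 := by
        rw [ENNReal.tsum_prod (f := fun a b => f a * g b), ← ENNReal.tsum_mul_right]
        exact tsum_congr fun n => ENNReal.tsum_mul_left.symm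
    _ = ∑' n, ∑' kl : antidiagonal n, f kl.1.1 * g kl.1.2 := by
        rw [← HasAntidiagonal.sigmaAntidiagonalEquivProd.tsum_eq, ENNReal.tsum_sigma']
        rfl
    _ = _ := tsum_congr fun n => Finset.tsum_subtype _ fun kl : A × A => f kl.1 * g kl.2

lemma add_le_max_inv_mul {s : ℝ≥0∞} (hs0 : s ≠ 0) (hs1 : s < 1) (a b : ℝ≥0∞) :
    a + b ≤ max (s⁻¹ * a) ((1 - s)⁻¹ * b) := by
  set M := max (s⁻¹ * a) ((1 - s)⁻¹ * b)
  have hs1' : 1 - s ≠ 0 := (tsub_pos_of_lt hs1).ne'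
  calc a + b = s * (s⁻¹ * a) + (1 - s) * ((1 - s)⁻¹ * b) := by
        rw [ENNReal.mul_inv_cancel_left hs0 (hs1.trans one_lt_top).ne,
          ENNReal.mul_inv_cancel_left hs1' (ENNReal.sub_ne_top one_ne_top)]
    _ ≤ s * M + (1 - s) * M := by gcongr <;> simp [M]
    _ = M := by rw [← add_mul, add_tsub_cancel_of_le hs1.le, one_mul]

lemma add_rpow_le_inv_rpow_mul_add {α : ℝ} (hα : 0 ≤ α) {s : ℝ≥0∞} (hs0 : s ≠ 0) (hs1 : s < 1)
    (a b : ℝ≥0∞) : (a + b) ^ α ≤ s⁻¹ ^ α * a ^ α + (1 - s)⁻¹ ^ α * b ^ α := by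
  rw [← mul_rpow_of_nonneg _ _ hα, ← mul_rpow_of_nonneg _ _ hα]
  calc (a + b) ^ α ≤ (max (s⁻¹ * a) ((1 - s)⁻¹ * b)) ^ α :=
        rpow_le_rpow (add_le_max_inv_mul hs0 hs1 a b) hα
    _ = max ((s⁻¹ * a) ^ α) (((1 - s)⁻¹ * b) ^ α) := (monotone_rpow_of_nonneg hα).map_max
    _ ≤ _ := max_le le_self_add le_add_self

lemma le_sum_antidiagonal_of_le_mul_add {σ : ℝ≥0∞} {F H : ℕ → ℝ≥0∞} (h0 : F 0 ≤ H 0)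
    (hstep : ∀ j, F (j + 1) ≤ σ * F j + H (j + 1)) (j : ℕ) :
    F j ≤ ∑ p ∈ antidiagonal j, σ ^ p.1 * H p.2 := by
  induction j with
  | zero => simpa using h0
  | succ j ih =>
    rw [Nat.sum_antidiagonal_succ, pow_zero, one_mul]
    calc F (j + 1) ≤ σ * ∑ p ∈ antidiagonal j, σ ^ p.1 * H p.2 + H (j + 1) := by
          grw [hstep j, ih]
      _ = _ := by rw [add_comm, Finset.mul_sum]; simp only [pow_succ', mul_assoc]

theorem tsum_le_inv_one_sub_mul_tsum_of_le_mul_add {σ : ℝ≥0∞} {F H : ℕ → ℝ≥0∞}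
    (h0 : F 0 ≤ H 0) (hstep : ∀ j, F (j + 1) ≤ σ * F j + H (j + 1)) :
    ∑' j, F j ≤ (1 - σ)⁻¹ * ∑' j, H j :=
  calc ∑' j, F j ≤ ∑' j, ∑ p ∈ antidiagonal j, σ ^ p.1 * H p.2 :=
        ENNReal.tsum_le_tsum (le_sum_antidiagonal_of_le_mul_add h0 hstep)
    _ = (∑' i, σ ^ i) * ∑' j, H j :=
        (tsum_mul_tsum_eq_tsum_sum_antidiagonal _ _).symm
    _ = (1 - σ)⁻¹ * ∑' j, H j := by rw [ENNReal.tsum_geometric]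

theorem exists_tsum_mul_rpow_le_of_le_add {α : ℝ} (hα : 0 < α) {ρ : ℝ≥0∞} (hρ : ρ < 1) :
    ∃ c : ℝ≥0∞, 0 < c ∧ ∀ τ A a : ℕ → ℝ≥0∞, (∀ j, τ (j + 1) ≤ ρ * τ j) → A 0 ≤ a 0 →
      (∀ j, A (j + 1) ≤ A j + a (j + 1)) →
        c * ∑' j, τ j * A j ^ α ≤ ∑' j, τ j * a j ^ α := by
  obtain ⟨r, hρr, hr1⟩ := exists_between hρ
  have hr0 : r ≠ 0 := (zero_le.trans_lt hρr).ne'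
  set s := r ^ α⁻¹
  have hsα : s ^ α = r := by rw [← rpow_mul, inv_mul_cancel₀ hα.ne', rpow_one]
  have hs0 : s ≠ 0 := by simp [s, rpow_eq_zero_iff, hr0, hα.le]
  have hs1 : s < 1 := rpow_lt_one hr1 (inv_pos.2 hα)
  set C := (1 - s)⁻¹ ^ α
  have hC1 : 1 ≤ C := one_le_rpow (ENNReal.one_le_inv.2 tsub_le_self) hα
  have hσ1 : ρ * r⁻¹ < 1 := by
    rw [← div_eq_mul_inv]
    exact div_lt_of_lt_mul (by rwa [one_mul])
  set D := (1 - ρ * r⁻¹)⁻¹ * C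
  have hD0 : D ≠ 0 :=
    mul_ne_zero (ENNReal.inv_ne_zero.2 (sub_ne_top one_ne_top)) (one_pos.trans_le hC1).ne'
  have hDtop : D ≠ ⊤ := mul_ne_top (inv_ne_top.2 (tsub_pos_of_lt hσ1).ne')
    (rpow_ne_top_of_nonneg hα.le (inv_ne_top.2 (tsub_pos_of_lt hs1).ne'))
  refine ⟨D⁻¹, ENNReal.inv_pos.2 hDtop, fun τ A a hτ h0 hA => ?_⟩
  rw [ENNReal.inv_mul_le_iff hD0 hDtop, mul_assoc, ← ENNReal.tsum_mul_left]
  refine tsum_le_inv_one_sub_mul_tsum_of_le_mul_add ?_ fun j => ?_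
  · calc τ 0 * A 0 ^ α ≤ τ 0 * a 0 ^ α := by gcongr
      _ ≤ C * (τ 0 * a 0 ^ α) := le_mul_of_one_le_left' hC1
  · have hsplit := add_rpow_le_inv_rpow_mul_add hα.le hs0 hs1 (A j) (a (j + 1))
    rw [inv_rpow, hsα] at hsplit
    calc τ (j + 1) * A (j + 1) ^ α ≤ τ (j + 1) * (r⁻¹ * A j ^ α + C * a (j + 1) ^ α) := by
          grw [hA j, hsplit]
      _ = r⁻¹ * (τ (j + 1) * A j ^ α) + C * (τ (j + 1) * a (j + 1) ^ α) := by ring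
      _ ≤ r⁻¹ * (ρ * τ j * A j ^ α) + C * (τ (j + 1) * a (j + 1) ^ α) := by gcongr; exact hτ j
      _ = ρ * r⁻¹ * (τ j * A j ^ α) + C * (τ (j + 1) * a (j + 1) ^ α) := by ring

end ENNReal

lemma setLIntegral_Ioo_le_add (g : ℝ → ℝ≥0∞) (u v w : ℝ) :
    ∫⁻ s in Ioo u w, g s ≤ (∫⁻ s in Ioo u v, g s) + ∫⁻ s in Ioo v w, g s :=
  calc ∫⁻ s in Ioo u w, g s ≤ ∫⁻ s in Ioo u v ∪ Ico v w, g s :=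
        lintegral_mono_set fun s hs => (lt_or_ge s v).imp (⟨hs.1, ·⟩) (⟨·, hs.2⟩)
    _ ≤ (∫⁻ s in Ioo u v, g s) + ∫⁻ s in Ico v w, g s := lintegral_union_le _ _ _
    _ = (∫⁻ s in Ioo u v, g s) + ∫⁻ s in Ioo v w, g s := by
        rw [setLIntegral_congr (Ioo_ae_eq_Ico (a := v) (b := w))]

theorem sum_sum_equiv (α : ℝ) (hα : 0 < α) (ρ : ℝ≥0∞) (hρ : ρ < 1) :
    ∃ c₁ c₂ : ℝ≥0∞, 0 < c₁ ∧ c₂ < ⊤ ∧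
      ∀ (n : ℤ) (x : ℤ → ℝ) (τ : ℤ → ℝ≥0∞),
        (∀ k : ℤ, n - 1 ≤ k → x k < x (k + 1)) →
        (∀ k : ℤ, n ≤ k → 0 < τ k ∧ τ k < ⊤) →
        (∀ k : ℤ, n ≤ k → τ (k + 1) ≤ ρ * τ k) →
        ∀ g : ℝ → ℝ≥0∞, Measurable g →
          c₁ * (∑' j : ℕ, τ (n + j) * (∫⁻ s in Ioo (x (n - 1)) (x (n + j)), g s) ^ α) ≤
              (∑' j : ℕ, τ (n + j) * (∫⁻ s in Ioo (x (n + j - 1)) (x (n + j)), g s) ^ α) ∧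
            (∑' j : ℕ, τ (n + j) * (∫⁻ s in Ioo (x (n + j - 1)) (x (n + j)), g s) ^ α) ≤
              c₂ * ∑' j : ℕ, τ (n + j) * (∫⁻ s in Ioo (x (n - 1)) (x (n + j)), g s) ^ α := by
  obtain ⟨c, hc, hHardy⟩ := ENNReal.exists_tsum_mul_rpow_le_of_le_add hα hρ
  refine ⟨c, 1, hc, one_lt_top, fun n x τ hx _ hτ g _ => ⟨?_, ?_⟩⟩
  · have hdecay (j : ℕ) : τ (n + (j + 1 : ℕ)) ≤ ρ * τ (n + j) := by
      rw [Nat.cast_succ, ← add_assoc]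
      exact hτ _ (by omega)
    have hsplit (j : ℕ) := setLIntegral_Ioo_le_add g (x (n - 1)) (x (n + j)) (x (n + (j + 1 : ℕ)))
    refine hHardy _ _ _ hdecay (by simp) fun j => ?_
    simpa only [Nat.cast_succ, add_sub_cancel_right, ← add_assoc] using hsplit j
  · have hxmono : Monotone fun i : ℕ => x (n - 1 + i) := monotone_nat_of_le_succ fun i => by
      simpa only [Nat.cast_succ, ← add_assoc] using (hx _ (by omega)).le
    rw [one_mul]
    refine ENNReal.tsum_le_tsum fun j => mul_le_mul_right (rpow_le_rpow ?_ hα.le) _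
    refine lintegral_mono_set (Ioo_subset_Ioo_left ?_)
    simpa [sub_add_eq_add_sub] using hxmono (Nat.zero_le j)
end

section
/- Let n ∈ ℤ, let {x_k}_{k=n-1}^∞ be a strictly increasing sequence of real numbers, and let {τ_k}_{k=n}^∞ be a geometrically decreasing sequence. Then Σ_{k=n}^∞ τ_k · ess sup_{s∈(x_{n-1}, x_k)} g(s) ≈ Σ_{k=n}^∞ τ_k · ess sup_{s∈(x_{k-1}, x_k)} g(s) holds for all non-negative Lebesgue measurable functions g on (x_{n-1}, ∞), with implicit constants depending only on the geometric-decrease ratio sup_k τ_{k+1}/τ_k. -/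
open MeasureTheory Set ENNReal

private lemma essSup_restrict_union_le (g : ℝ → ℝ≥0∞) (s t : Set ℝ) :
    essSup g ((volume : Measure ℝ).restrict (s ∪ t)) ≤
      essSup g ((volume : Measure ℝ).restrict s) +
        essSup g ((volume : Measure ℝ).restrict t) := by
  set a := essSup g ((volume : Measure ℝ).restrict s) with ha
  set b := essSup g ((volume : Measure ℝ).restrict t) with hb
  refine le_trans (essSup_le_of_ae_le (a ⊔ b) ?_) (sup_le le_self_add le_add_self)
  have hab : ∀ᵐ y ∂((volume : Measure ℝ).restrict s + (volume : Measure ℝ).restrict t),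
      g y ≤ a ⊔ b := by
    rw [ae_add_measure_iff]
    exact ⟨(ae_le_essSup g).mono fun y hy => hy.trans le_sup_left,
      (ae_le_essSup g).mono fun y hy => hy.trans le_sup_right⟩
  exact hab.filter_mono
    (Measure.absolutelyContinuous_of_le (Measure.restrict_union_le s t)).ae_le

theorem sum_essSup_equiv (ρ : ℝ≥0∞) (hρ : ρ < 1) :
    ∃ c₁ c₂ : ℝ≥0∞, 0 < c₁ ∧ c₂ < ⊤ ∧
      ∀ (n : ℤ) (x : ℤ → ℝ) (τ : ℤ → ℝ≥0∞),
        (∀ k : ℤ, n - 1 ≤ k → x k < x (k + 1)) →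
        (∀ k : ℤ, n ≤ k → 0 < τ k ∧ τ k < ⊤) →
        (∀ k : ℤ, n ≤ k → τ (k + 1) ≤ ρ * τ k) →
        ∀ g : ℝ → ℝ≥0∞, Measurable g →
          c₁ * (∑' j : ℕ,
              τ (n + j) * essSup g (volume.restrict (Ioo (x (n - 1)) (x (n + j))))) ≤
              (∑' j : ℕ,
                τ (n + j) * essSup g (volume.restrict (Ioo (x (n + j - 1)) (x (n + j))))) ∧
            (∑' j : ℕ,
              τ (n + j) * essSup g (volume.restrict (Ioo (x (n + j - 1)) (x (n + j))))) ≤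
              c₂ * ∑' j : ℕ,
                τ (n + j) * essSup g (volume.restrict (Ioo (x (n - 1)) (x (n + j)))) := by
  refine ⟨1 - ρ, 1, tsub_pos_of_lt hρ, one_lt_top, ?_⟩
  intro n x τ hx hτ hτρ g hg
  -- reindex over ℕ
  set y : ℕ → ℝ := fun j => x (n - 1 + j) with hy
  set T : ℕ → ℝ≥0∞ := fun j => τ (n + j) with hT
  have hxa : ∀ j : ℕ, x (n + (j : ℤ)) = y (j + 1) := by
    intro j; simp only [hy]; congr 1; push_cast; ring
  have hxb : ∀ j : ℕ, x (n + (j : ℤ) - 1) = y j := by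
    intro j; simp only [hy]; congr 1; ring
  have hx0 : x (n - 1) = y 0 := by simp only [hy]; congr 1; push_cast; ring
  have hTa : ∀ j : ℕ, τ (n + (j : ℤ)) = T j := fun j => rfl
  simp only [hxa, hxb, hx0, hTa]
  -- basic facts about y and T
  have hys : StrictMono y := by
    refine strictMono_nat_of_lt_succ fun j => ?_
    have h1 : y (j + 1) = x (n - 1 + j + 1) := by
      simp only [hy]; congr 1; push_cast; ring
    rw [h1]
    exact hx (n - 1 + j) (by linarith [Int.ofNat_nonneg j])
  have hTgeo : ∀ i d : ℕ, T (i + d) ≤ ρ ^ d * T i := by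
    intro i d
    induction d with
    | zero => simp
    | succ d ih =>
      have h1 : T (i + (d + 1)) = τ (n + (i + d : ℕ) + 1) := by
        simp only [hT]; congr 1; push_cast; ring
      calc T (i + (d + 1)) = τ (n + (i + d : ℕ) + 1) := h1
        _ ≤ ρ * τ (n + (i + d : ℕ)) := hτρ _ (by linarith [Int.ofNat_nonneg (i + d)])
        _ = ρ * T (i + d) := rfl
        _ ≤ ρ * (ρ ^ d * T i) := by exact mul_le_mul_right ih ρ
        _ = ρ ^ (d + 1) * T i := by ring
  -- abbreviations
  set s : ℕ → ℝ≥0∞ := fun j => essSup g (volume.restrict (Ioo (y j) (y (j + 1)))) with hs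
  set E : ℕ → ℝ≥0∞ := fun j => essSup g (volume.restrict (Ioo (y 0) (y (j + 1)))) with hE
  have hsE : ∀ j : ℕ, essSup g (volume.restrict (Ioo (y j) (y (j + 1)))) = s j := fun _ => rfl
  have hEE : ∀ j : ℕ, essSup g (volume.restrict (Ioo (y 0) (y (j + 1)))) = E j := fun _ => rfl
  simp only [hsE, hEE]
  have hmono : ∀ u v : Set ℝ, u ⊆ v →
      essSup g (volume.restrict u) ≤ essSup g (volume.restrict v) := fun u v huv =>
    essSup_mono_measure' (Measure.restrict_mono huv le_rfl)
  -- the upper bound (c₂ = 1)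
  have hupper : (∑' j : ℕ, T j * s j) ≤ ∑' j : ℕ, T j * E j := by
    refine Summable.tsum_le_tsum (fun j => ?_) ENNReal.summable ENNReal.summable
    refine mul_le_mul_right (hmono _ _ (Ioo_subset_Ioo ?_ le_rfl)) _
    exact hys.monotone (Nat.zero_le j)
  -- key: E j ≤ ∑_{i ≤ j} s i
  have hEkey : ∀ j : ℕ, E j ≤ ∑ i ∈ Finset.range (j + 1), s i := by
    intro j
    induction j with
    | zero => simp [hE, hs]
    | succ j ih =>
      have hsub : Ioo (y 0) (y (j + 1 + 1)) ⊆
          Ioo (y 0) (y (j + 1)) ∪ Ico (y (j + 1)) (y (j + 1 + 1)) := by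
        intro z hz
        rcases lt_or_ge z (y (j + 1)) with h | h
        · exact Or.inl ⟨hz.1, h⟩
        · exact Or.inr ⟨h, hz.2⟩
      calc E (j + 1) ≤ essSup g (volume.restrict
            (Ioo (y 0) (y (j + 1)) ∪ Ico (y (j + 1)) (y (j + 1 + 1)))) := hmono _ _ hsub
        _ ≤ essSup g (volume.restrict (Ioo (y 0) (y (j + 1)))) +
            essSup g (volume.restrict (Ico (y (j + 1)) (y (j + 1 + 1)))) :=
              essSup_restrict_union_le g _ _
        _ = E j + s (j + 1) := by
              rw [← MeasureTheory.restrict_Ioo_eq_restrict_Ico]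
        _ ≤ (∑ i ∈ Finset.range (j + 1), s i) + s (j + 1) := add_le_add_left ih _
        _ = ∑ i ∈ Finset.range (j + 1 + 1), s i := (Finset.sum_range_succ s (j + 1)).symm
  -- geometric tail estimate
  have htail : ∀ i : ℕ, (∑' j : ℕ, if i ≤ j then T j else 0) ≤ (1 - ρ)⁻¹ * T i := by
    intro i
    have h1 : (∑' j : ℕ, if i ≤ j then T j else 0) ≤
        ∑' j : ℕ, (if i ≤ j then ρ ^ (j - i) * T i else 0) := by
      refine Summable.tsum_le_tsum (fun j => ?_) ENNReal.summable ENNReal.summable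
      by_cases h : i ≤ j
      · simp only [h, if_true]
        have := hTgeo i (j - i)
        rwa [Nat.add_sub_cancel' h] at this
      · simp [h]
    have h2 : (∑' j : ℕ, (if i ≤ j then ρ ^ (j - i) * T i else 0)) =
        ∑' d : ℕ, ρ ^ d * T i := by
      rw [← (add_right_injective i).tsum_eq
        (f := fun j => if i ≤ j then ρ ^ (j - i) * T i else 0)]
      · refine tsum_congr fun d => ?_
        simp [Nat.add_sub_cancel_left]
      · intro j hj
        simp only [Function.mem_support, ne_eq, ite_eq_right_iff, not_forall] at hj
        exact ⟨j - i, Nat.add_sub_cancel' hj.1⟩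
    calc (∑' j : ℕ, if i ≤ j then T j else 0) ≤ ∑' d : ℕ, ρ ^ d * T i := h1.trans h2.le
      _ = (∑' d : ℕ, ρ ^ d) * T i := ENNReal.tsum_mul_right
      _ = (1 - ρ)⁻¹ * T i := by rw [ENNReal.tsum_geometric]
  -- lower bound chain
  have hlower : (∑' j : ℕ, T j * E j) ≤ (1 - ρ)⁻¹ * ∑' j : ℕ, T j * s j := by
    calc (∑' j : ℕ, T j * E j)
        ≤ ∑' j : ℕ, T j * ∑ i ∈ Finset.range (j + 1), s i := by
          exact Summable.tsum_le_tsum (fun j => mul_le_mul_right (hEkey j) _)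
            ENNReal.summable ENNReal.summable
      _ = ∑' j : ℕ, ∑' i : ℕ, (if i ≤ j then T j * s i else 0) := by
          refine tsum_congr fun j => ?_
          rw [Finset.mul_sum, tsum_eq_sum (s := Finset.range (j + 1))
            (fun i hi => if_neg fun h => hi (Finset.mem_range.mpr (Nat.lt_succ_of_le h)))]
          exact Finset.sum_congr rfl fun i hi =>
            (if_pos (Nat.lt_succ_iff.mp (Finset.mem_range.mp hi))).symm
      _ = ∑' i : ℕ, ∑' j : ℕ, (if i ≤ j then T j * s i else 0) := ENNReal.tsum_comm
      _ = ∑' i : ℕ, s i * ∑' j : ℕ, (if i ≤ j then T j else 0) := by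
          refine tsum_congr fun i => ?_
          rw [← ENNReal.tsum_mul_left]
          exact tsum_congr fun j => by by_cases h : i ≤ j <;> simp [h, mul_comm]
      _ ≤ ∑' i : ℕ, s i * ((1 - ρ)⁻¹ * T i) := by
          exact Summable.tsum_le_tsum (fun i => mul_le_mul_right (htail i) _)
            ENNReal.summable ENNReal.summable
      _ = (1 - ρ)⁻¹ * ∑' i : ℕ, T i * s i := by
          rw [← ENNReal.tsum_mul_left]
          exact tsum_congr fun i => by ring
  constructor
  · calc (1 - ρ) * ∑' j : ℕ, T j * E j
        ≤ (1 - ρ) * ((1 - ρ)⁻¹ * ∑' j : ℕ, T j * s j) := mul_le_mul_right hlower _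
      _ = ((1 - ρ) * (1 - ρ)⁻¹) * ∑' j : ℕ, T j * s j := by rw [mul_assoc]
      _ = ∑' j : ℕ, T j * s j := by
          rw [ENNReal.mul_inv_cancel (tsub_pos_of_lt hρ).ne'
            (ne_top_of_le_ne_top one_ne_top tsub_le_self), one_mul]
  · rw [one_mul]; exact hupper
end

section
/- Let α > 0 and n ∈ ℤ. Let {x_k}_{k=n}^∞ be a strictly increasing sequence of real numbers, {τ_k}_{k=n}^∞ a geometrically decreasing sequence, and {σ_k}_{k=n}^∞ a positive non-decreasing sequence. Then sup_{n+1 ≤ k < ∞} τ_k · sup_{n ≤ i < k} (∫_{x_i}^{x_k} g)^α σ_i ≈ sup_{n+1 ≤ k < ∞} τ_k (∫_{x_{k-1}}^{x_k} g)^α σ_{k-1} holds for all non-negative Lebesgue measurable functions g on (x_n, ∞), with implicit constants depending only on α and the geometric-decrease ratio sup_k τ_{k+1}/τ_k. -/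
/-!
Split `∫_{x_i}^{x_k} g` into the pieces `A_m = ∫_{x_m}^{x_{m+1}} g`, `i ≤ m < k`, and fix `d < 1`
with `ρ < d^α`. The crude bound `(∑ a_m)^α ≤ (∑ w_m)^α ∑ (a_m / w_m)^α` with the weights
`w_m = d^(k-1-m)` costs a factor `d^(-α(k-1-m))` on the piece `m`, while `τ_k ≤ ρ^(k-1-m) τ_{m+1}`
and `σ_i ≤ σ_m`. So the piece `m` contributes at most `(ρ / d^α)^(k-1-m)` times the right-hand
supremum, and both geometric series, in `d` and in `ρ / d^α`, converge.
-/

open MeasureTheory Set ENNReal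

lemma ENNReal.rpow_sum_le_rpow_sum_mul_sum_rpow_div {ι : Type*} (s : Finset ι)
    (a w : ι → ℝ≥0∞) (hw0 : ∀ i ∈ s, w i ≠ 0) (hwt : ∀ i ∈ s, w i ≠ ⊤) {p : ℝ} (hp : 0 < p) :
    (∑ i ∈ s, a i) ^ p ≤ (∑ i ∈ s, w i) ^ p * ∑ i ∈ s, (a i / w i) ^ p := by
  set T := ∑ i ∈ s, (a i / w i) ^ p
  have hle : ∀ i ∈ s, a i ≤ w i * T ^ p⁻¹ := fun i hi => calc
    a i = w i * (a i / w i) := (ENNReal.mul_div_cancel (hw0 i hi) (hwt i hi)).symm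
    _ ≤ w i * T ^ p⁻¹ := by
      gcongr
      exact (ENNReal.le_rpow_inv_iff hp).2
        (Finset.single_le_sum (f := fun i => (a i / w i) ^ p) (fun _ _ => zero_le) hi)
  calc (∑ i ∈ s, a i) ^ p ≤ (∑ i ∈ s, w i * T ^ p⁻¹) ^ p := by gcongr; exact hle _ ‹_›
    _ = (∑ i ∈ s, w i) ^ p * T := by
      rw [← Finset.sum_mul, ENNReal.mul_rpow_of_nonneg _ _ hp.le, ← ENNReal.rpow_mul,
        inv_mul_cancel₀ hp.ne', ENNReal.rpow_one]

lemma ENNReal.sum_Ico_pow_sub_le (r : ℝ≥0∞) (i j : ℕ) :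
    ∑ m ∈ Finset.Ico i (j + 1), r ^ (j - m) ≤ (1 - r)⁻¹ := by
  rw [Finset.sum_Ico_reflect _ _ le_rfl, ← ENNReal.tsum_geometric]
  exact ENNReal.sum_le_tsum _

lemma ENNReal.rpow_sum_Ico_le_mul_sum_rpow_div_pow {p : ℝ} (hp : 0 < p) {d : ℝ≥0∞} (hd0 : d ≠ 0)
    (hdt : d ≠ ⊤) (A : ℕ → ℝ≥0∞) (i j : ℕ) :
    (∑ m ∈ Finset.Ico i (j + 1), A m) ^ p ≤
      (1 - d)⁻¹ ^ p * ∑ m ∈ Finset.Ico i (j + 1), (A m / d ^ (j - m)) ^ p := calc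
  _ ≤ (∑ m ∈ Finset.Ico i (j + 1), d ^ (j - m)) ^ p *
        ∑ m ∈ Finset.Ico i (j + 1), (A m / d ^ (j - m)) ^ p :=
    ENNReal.rpow_sum_le_rpow_sum_mul_sum_rpow_div _ _ _ (fun _ _ => pow_ne_zero _ hd0)
      (fun _ _ => pow_ne_top hdt) hp
  _ ≤ _ := by gcongr; exact ENNReal.sum_Ico_pow_sub_le d i j

lemma le_pow_mul_of_forall_succ_le_mul {M : Type*} [Monoid M] [Preorder M] [MulLeftMono M]
    {τ : ℕ → M} {ρ : M} (h : ∀ m, τ (m + 1) ≤ ρ * τ m) (m k : ℕ) :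
    τ (m + k) ≤ ρ ^ k * τ m := by
  induction k with
  | zero => simp
  | succ k ih => calc
      τ (m + k + 1) ≤ ρ * τ (m + k) := h _
      _ ≤ ρ * (ρ ^ k * τ m) := mul_le_mul_right ih ρ
      _ = ρ ^ (k + 1) * τ m := by rw [pow_succ', mul_assoc]

lemma setLIntegral_Ioc_le_sum {X : Type*} [LinearOrder X] [MeasurableSpace X] (μ : Measure X)
    (g : X → ℝ≥0∞) (u : ℕ → X) {i j : ℕ} (hij : i ≤ j) :
    ∫⁻ s in Ioc (u i) (u j), g s ∂μ ≤
      ∑ m ∈ Finset.Ico i j, ∫⁻ s in Ioc (u m) (u (m + 1)), g s ∂μ := by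
  induction j, hij using Nat.le_induction with
  | base => simp
  | succ j hij ih => calc
      ∫⁻ s in Ioc (u i) (u (j + 1)), g s ∂μ
          ≤ ∫⁻ s in Ioc (u i) (u j) ∪ Ioc (u j) (u (j + 1)), g s ∂μ :=
        lintegral_mono_set Ioc_subset_Ioc_union_Ioc
      _ ≤ ∫⁻ s in Ioc (u i) (u j), g s ∂μ + ∫⁻ s in Ioc (u j) (u (j + 1)), g s ∂μ :=
        lintegral_union_le _ _ _
      _ ≤ _ := by rw [Finset.sum_Ico_succ_top hij]; gcongr

lemma mul_rpow_sum_mul_le_mul_iSup {p : ℝ} (hp : 0 < p) {ρ d : ℝ≥0∞} (hd0 : d ≠ 0) (hdt : d ≠ ⊤)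
    (τ σ A : ℕ → ℝ≥0∞) (hτ : ∀ m, τ (m + 1) ≤ ρ * τ m) (hσ : Monotone σ) (i j : ℕ) :
    τ j * ((∑ m ∈ Finset.Ico i (j + 1), A m) ^ p * σ i) ≤
      ((1 - d)⁻¹ ^ p * (1 - ρ / d ^ p)⁻¹) * ⨆ m, τ m * (A m ^ p * σ m) := by
  set B := ⨆ m, τ m * (A m ^ p * σ m)
  have hterm : ∀ m ∈ Finset.Ico i (j + 1),
      τ j * ((A m / d ^ (j - m)) ^ p * σ i) ≤ (ρ / d ^ p) ^ (j - m) * B := by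
    intro m hm
    obtain ⟨him, hmj⟩ := Finset.mem_Ico.1 hm
    have hτm : τ j ≤ ρ ^ (j - m) * τ m := by
      simpa [Nat.add_sub_cancel' (Nat.lt_succ_iff.1 hmj)] using
        le_pow_mul_of_forall_succ_le_mul hτ m (j - m)
    calc τ j * ((A m / d ^ (j - m)) ^ p * σ i)
        ≤ ρ ^ (j - m) * τ m * (A m ^ p / (d ^ p) ^ (j - m) * σ m) := by
          rw [ENNReal.div_rpow_of_nonneg _ _ hp.le, ← ENNReal.rpow_natCast_mul,
            mul_comm (_ : ℝ), ENNReal.rpow_mul_natCast]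
          gcongr
          exact hσ him
      _ = (ρ / d ^ p) ^ (j - m) * (τ m * (A m ^ p * σ m)) := by
          simp only [div_eq_mul_inv, mul_pow, ENNReal.inv_pow]; ring
      _ ≤ (ρ / d ^ p) ^ (j - m) * B := by gcongr; exact le_iSup (fun m => τ m * (A m ^ p * σ m)) m
  calc τ j * ((∑ m ∈ Finset.Ico i (j + 1), A m) ^ p * σ i)
      ≤ τ j * ((1 - d)⁻¹ ^ p * (∑ m ∈ Finset.Ico i (j + 1), (A m / d ^ (j - m)) ^ p) * σ i) := by
        gcongr; exact ENNReal.rpow_sum_Ico_le_mul_sum_rpow_div_pow hp hd0 hdt A i j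
    _ = (1 - d)⁻¹ ^ p * ∑ m ∈ Finset.Ico i (j + 1), τ j * ((A m / d ^ (j - m)) ^ p * σ i) := by
        simp only [Finset.mul_sum, Finset.sum_mul]
        exact Finset.sum_congr rfl fun _ _ => by ring
    _ ≤ (1 - d)⁻¹ ^ p * ∑ m ∈ Finset.Ico i (j + 1), (ρ / d ^ p) ^ (j - m) * B :=
        mul_le_mul_right (Finset.sum_le_sum hterm) _
    _ ≤ (1 - d)⁻¹ ^ p * ((1 - ρ / d ^ p)⁻¹ * B) := by
        rw [← Finset.sum_mul]; gcongr; exact ENNReal.sum_Ico_pow_sub_le _ i j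
    _ = _ := (mul_assoc _ _ _).symm

lemma iSup_mul_iSup_rpow_setLIntegral_le {X : Type*} [LinearOrder X] [MeasurableSpace X]
    (μ : Measure X) [NullSingletonClass μ] {p : ℝ} (hp : 0 < p) {ρ d : ℝ≥0∞} (hd0 : d ≠ 0)
    (hdt : d ≠ ⊤) (u : ℕ → X) (τ σ : ℕ → ℝ≥0∞) (hτ : ∀ m, τ (m + 1) ≤ ρ * τ m)
    (hσ : Monotone σ) (g : X → ℝ≥0∞) :
    ⨆ j : ℕ, τ j * ⨆ i ∈ Finset.range (j + 1),
        (∫⁻ s in Ioo (u i) (u (j + 1)), g s ∂μ) ^ p * σ i ≤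
      ((1 - d)⁻¹ ^ p * (1 - ρ / d ^ p)⁻¹) *
        ⨆ j, τ j * ((∫⁻ s in Ioo (u j) (u (j + 1)), g s ∂μ) ^ p * σ j) := by
  simp only [setLIntegral_congr Ioo_ae_eq_Ioc]
  refine iSup_le fun j => ?_
  rw [ENNReal.mul_iSup]
  refine iSup_le fun i => ?_
  rw [ENNReal.mul_iSup]
  refine iSup_le fun hi => ?_
  calc τ j * ((∫⁻ s in Ioc (u i) (u (j + 1)), g s ∂μ) ^ p * σ i)
      ≤ τ j * ((∑ m ∈ Finset.Ico i (j + 1), ∫⁻ s in Ioc (u m) (u (m + 1)), g s ∂μ) ^ p * σ i) := by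
        gcongr
        exact setLIntegral_Ioc_le_sum μ g u ((Finset.mem_range_succ_iff.1 hi).trans j.le_succ)
    _ ≤ _ := mul_rpow_sum_mul_le_mul_iSup hp hd0 hdt τ σ _ hτ hσ i j

theorem sup_sup_weighted_equiv (α : ℝ) (hα : 0 < α) (ρ : ℝ≥0∞) (hρ : ρ < 1) :
    ∃ c₁ c₂ : ℝ≥0∞, 0 < c₁ ∧ c₂ < ⊤ ∧
      ∀ (n : ℤ) (x : ℤ → ℝ) (τ σ : ℤ → ℝ≥0∞),
        (∀ k : ℤ, n ≤ k → x k < x (k + 1)) →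
        (∀ k : ℤ, n ≤ k → 0 < τ k ∧ τ k < ⊤) →
        (∀ k : ℤ, n ≤ k → τ (k + 1) ≤ ρ * τ k) →
        (∀ k : ℤ, n ≤ k → 0 < σ k ∧ σ k < ⊤) →
        (∀ k : ℤ, n ≤ k → σ k ≤ σ (k + 1)) →
        ∀ g : ℝ → ℝ≥0∞, Measurable g →
          c₁ * (⨆ j : ℕ, τ (n + 1 + j) *
                ⨆ i ∈ Finset.range (j + 1),
                  (∫⁻ s in Ioo (x (n + i)) (x (n + 1 + j)), g s) ^ α * σ (n + i)) ≤
              (⨆ j : ℕ, τ (n + 1 + j) *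
                ((∫⁻ s in Ioo (x (n + j)) (x (n + 1 + j)), g s) ^ α * σ (n + j))) ∧
            (⨆ j : ℕ, τ (n + 1 + j) *
              ((∫⁻ s in Ioo (x (n + j)) (x (n + 1 + j)), g s) ^ α * σ (n + j))) ≤
              c₂ * ⨆ j : ℕ, τ (n + 1 + j) *
                ⨆ i ∈ Finset.range (j + 1),
                  (∫⁻ s in Ioo (x (n + i)) (x (n + 1 + j)), g s) ^ α * σ (n + i) := by
  obtain ⟨d, hρd, hd1⟩ := exists_between (ENNReal.rpow_lt_one hρ (inv_pos.2 hα))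
  have hd0 : d ≠ 0 := (zero_le.trans_lt hρd).ne'
  have hq1 : ρ / d ^ α < 1 :=
    ENNReal.div_lt_of_lt_mul' (by simpa using (ENNReal.rpow_inv_lt_iff hα).1 hρd)
  set C := (1 - d)⁻¹ ^ α * (1 - ρ / d ^ α)⁻¹
  have hC0 : C ≠ 0 := by simp [C, hα.le]
  have hCt : C ≠ ⊤ := ENNReal.mul_ne_top
    (ENNReal.rpow_ne_top_of_nonneg hα.le (ENNReal.inv_ne_top.2 (tsub_pos_of_lt hd1).ne'))
    (ENNReal.inv_ne_top.2 (tsub_pos_of_lt hq1).ne')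
  refine ⟨C⁻¹, 1, ENNReal.inv_pos.2 hCt, one_lt_top, fun n x τ σ _ _ hτ _ hσ g _ => ⟨?_, ?_⟩⟩
  · have hτ' : ∀ m : ℕ, τ (n + 1 + (m + 1 : ℕ)) ≤ ρ * τ (n + 1 + m) := fun m => by
      simpa [add_assoc] using hτ (n + 1 + m) (by omega)
    have hσ' : Monotone fun m : ℕ => σ (n + m) := monotone_nat_of_le_succ fun m => by
      simpa [add_assoc] using hσ (n + m) (by omega)
    have hx : ∀ j : ℕ, x (n + (j + 1 : ℕ)) = x (n + 1 + j) := fun j => by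
      rw [Nat.cast_succ, add_comm (j : ℤ), add_assoc]
    rw [ENNReal.inv_mul_le_iff hC0 hCt]
    simpa only [hx] using iSup_mul_iSup_rpow_setLIntegral_le volume hα hd0 hd1.ne_top
      (fun m => x (n + m)) _ _ hτ' hσ' g
  · rw [one_mul]
    refine iSup_mono fun j => ?_
    gcongr
    exact le_iSup₂_of_le j (Finset.self_mem_range_succ j) le_rfl
end

section
/- Let α > 0 and n ∈ ℤ. Let {x_k}_{k=n}^∞ be a strictly increasing sequence of real numbers, {τ_k}_{k=n}^∞ a geometrically decreasing sequence, and {σ_k}_{k=n}^∞ a positive non-decreasing sequence. Then Σ_{k=n+1}^∞ τ_k · sup_{n ≤ i < k} (∫_{x_i}^{x_k} g)^α σ_i ≈ Σ_{k=n+1}^∞ τ_k (∫_{x_{k-1}}^{x_k} g)^α σ_{k-1} holds for all non-negative Lebesgue measurable functions g on (x_n, ∞), with implicit constants depending only on α and the geometric-decrease ratio sup_k τ_{k+1}/τ_k. -/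
open MeasureTheory Set ENNReal

-- finset version of (∑ f)^α ≤ ∑ f^α for 0 < α ≤ 1
lemma aux_sum_rpow {ι : Type*} (s : Finset ι) (f : ι → ℝ≥0∞) {α : ℝ} (hα : 0 < α)
    (hα1 : α ≤ 1) : (∑ i ∈ s, f i) ^ α ≤ ∑ i ∈ s, f i ^ α := by
  induction s using Finset.cons_induction with
  | empty => simp [ENNReal.zero_rpow_of_pos hα]
  | cons a s ha ih =>
      rw [Finset.sum_cons, Finset.sum_cons]
      exact le_trans (ENNReal.rpow_add_le_add_rpow _ _ hα.le hα1)
        (add_le_add le_rfl ih)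

-- Jensen
lemma aux_jensen {ι : Type*} (s : Finset ι) {α : ℝ} (hα : 1 < α) (w f : ι → ℝ≥0∞) :
    (∑ i ∈ s, w i * f i) ^ α ≤ (∑ i ∈ s, w i) ^ (α - 1) * ∑ i ∈ s, w i * f i ^ α := by
  have hα0 : (0:ℝ) < α := by linarith
  have h := ENNReal.inner_le_weight_mul_Lp_of_nonneg s hα.le w f
  calc (∑ i ∈ s, w i * f i) ^ α
      ≤ ((∑ i ∈ s, w i) ^ (1 - α⁻¹) * (∑ i ∈ s, w i * f i ^ α) ^ α⁻¹) ^ α :=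
        ENNReal.rpow_le_rpow h hα0.le
    _ = (∑ i ∈ s, w i) ^ ((1 - α⁻¹) * α) * (∑ i ∈ s, w i * f i ^ α) ^ (α⁻¹ * α) := by
        rw [ENNReal.mul_rpow_of_nonneg _ _ hα0.le, ← ENNReal.rpow_mul, ← ENNReal.rpow_mul]
    _ = (∑ i ∈ s, w i) ^ (α - 1) * ∑ i ∈ s, w i * f i ^ α := by
        rw [inv_mul_cancel₀ hα0.ne', ENNReal.rpow_one]
        congr 1
        rw [sub_mul, one_mul, inv_mul_cancel₀ hα0.ne']

-- rpow/pow algebra for a single term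
lemma aux_term (η : ℝ≥0∞) (hη0 : η ≠ 0) (hηt : η ≠ ⊤) {α : ℝ} (hα : 0 ≤ α) (d : ℕ)
    (f : ℝ≥0∞) :
    η ^ d * (f * (η ^ d)⁻¹) ^ α = (η ^ ((1 - α) : ℝ)) ^ d * f ^ α := by
  rw [← ENNReal.rpow_natCast η d, ← ENNReal.rpow_natCast (η ^ ((1-α):ℝ)) d,
    ← ENNReal.rpow_mul, ← ENNReal.rpow_neg, ENNReal.mul_rpow_of_nonneg _ _ hα,
    ← ENNReal.rpow_mul]
  rw [mul_comm (f ^ α), ← mul_assoc, ← ENNReal.rpow_add _ _ hη0 hηt]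
  congr 2
  ring

-- swap double sum
lemma aux_swap (F : ℕ → ℕ → ℝ≥0∞) :
    ∑' j : ℕ, ∑ m ∈ Finset.range (j + 1), F m j = ∑' (m : ℕ) (d : ℕ), F m (m + d) := by
  have h1 : ∀ j : ℕ, ∑ m ∈ Finset.range (j + 1), F m j
      = ∑' m : ℕ, (if m ≤ j then F m j else 0) := by
    intro j
    rw [tsum_eq_sum (s := Finset.range (j + 1))
      (by intro m hm; simp at hm; rw [if_neg (by omega)])]
    exact (Finset.sum_congr rfl fun m hm => by
      simp at hm; rw [if_pos (by omega)]).symm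
  simp_rw [h1]
  rw [ENNReal.tsum_comm]
  refine tsum_congr fun m => ?_
  have hinj : Function.Injective (fun d : ℕ => m + d) := fun a b h => by simpa using h
  rw [← Function.Injective.tsum_eq hinj (f := fun j => if m ≤ j then F m j else 0)]
  · exact tsum_congr fun d => by simp
  · intro j hj
    simp only [Function.mem_support] at hj
    rcases le_or_gt m j with h | h
    · exact ⟨j - m, by show m + (j - m) = j; omega⟩
    · exact absurd (if_neg (by omega)) hj

-- key pointwise estimate
lemma key_exists (α : ℝ) (hα : 0 < α) (ρ : ℝ≥0∞) (hρ : ρ < 1) :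
    ∃ ν K : ℝ≥0∞, K ≠ 0 ∧ K ≠ ⊤ ∧ ρ * ν < 1 ∧
      ∀ (f : ℕ → ℝ≥0∞) (i j : ℕ), i ≤ j →
        (∑ m ∈ Finset.Icc i j, f m) ^ α
          ≤ K * ∑ m ∈ Finset.Icc i j, ν ^ (j - m) * f m ^ α := by
  rcases le_or_gt α 1 with hα1 | hα1
  · refine ⟨1, 1, one_ne_zero, one_ne_top, by simpa using hρ, fun f i j _ => ?_⟩
    simpa using aux_sum_rpow (Finset.Icc i j) f hα hα1
  · -- α > 1
    set r : ℝ≥0∞ := max ρ 2⁻¹ with hr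
    have hr0 : r ≠ 0 := by
      intro h
      have : (2⁻¹ : ℝ≥0∞) ≤ r := le_max_right _ _
      rw [h] at this
      simp at this
    have hr1 : r < 1 := by
      apply max_lt hρ
      rw [ENNReal.inv_lt_one]
      exact one_lt_two
    have hrt : r ≠ ⊤ := (hr1.trans one_lt_top).ne
    have hc : (0:ℝ) < (2 * (α - 1))⁻¹ := by
      apply inv_pos.2; nlinarith
    set η : ℝ≥0∞ := r ^ ((2 * (α - 1))⁻¹ : ℝ) with hη
    have hη1 : η < 1 := ENNReal.rpow_lt_one hr1 hc
    have hη0 : η ≠ 0 := by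
      rw [hη, Ne, ENNReal.rpow_eq_zero_iff]
      push_neg
      exact ⟨fun h => absurd h hr0, fun h => absurd h hrt⟩
    have hηt : η ≠ ⊤ := (hη1.trans one_lt_top).ne
    set ν : ℝ≥0∞ := η ^ ((1 - α) : ℝ) with hν
    set W : ℝ≥0∞ := (1 - η)⁻¹ with hW
    have hW0 : W ≠ 0 := by
      rw [hW, Ne, ENNReal.inv_eq_zero]
      exact (lt_of_le_of_lt (tsub_le_self) (lt_of_le_of_lt le_rfl one_lt_top)).ne
    have hWt : W ≠ ⊤ := by
      rw [hW, Ne, ENNReal.inv_eq_top, tsub_eq_zero_iff_le]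
      exact fun h => absurd h hη1.not_ge
    set K : ℝ≥0∞ := W ^ (α - 1 : ℝ) with hK
    have hα1' : (0:ℝ) < α - 1 := by linarith
    refine ⟨ν, K, ?_, ?_, ?_, ?_⟩
    · rw [hK, Ne, ENNReal.rpow_eq_zero_iff]
      push_neg
      exact ⟨fun h => absurd h hW0, fun h => absurd h hWt⟩
    · rw [hK, Ne, ENNReal.rpow_eq_top_iff]
      push_neg
      exact ⟨fun h => absurd h hW0, fun h => absurd h hWt⟩
    · -- ρ * ν < 1
      have hν' : ν = r ^ (-(2⁻¹:ℝ)) := by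
        rw [hν, hη, ← ENNReal.rpow_mul]
        congr 1
        field_simp
        ring
      calc ρ * ν ≤ r * r ^ (-(2⁻¹:ℝ)) := by
            rw [hν']; exact mul_le_mul_left (le_max_left _ _) _
        _ = r ^ (1:ℝ) * r ^ (-(2⁻¹:ℝ)) := by rw [ENNReal.rpow_one]
        _ = r ^ ((1:ℝ) + -2⁻¹) := (ENNReal.rpow_add _ _ hr0 hrt).symm
        _ < 1 := by
            rw [show ((1:ℝ) + -2⁻¹) = 2⁻¹ by norm_num]
            exact ENNReal.rpow_lt_one hr1 (by norm_num)
    · intro f i j hij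
      have hwsum : ∑ m ∈ Finset.Icc i j, η ^ (j - m) ≤ W := by
        have himg : ∑ m ∈ Finset.Icc i j, η ^ (j - m)
            = ∑ d ∈ (Finset.Icc i j).image (fun m => j - m), η ^ d := by
          rw [Finset.sum_image]
          intro a ha b hb hab
          simp only [Finset.coe_Icc, Set.mem_Icc, Finset.mem_coe, Finset.mem_Icc] at ha hb hab
          omega
        rw [himg, hW, ← ENNReal.tsum_geometric]
        exact ENNReal.sum_le_tsum _
      have hpow0 : ∀ d : ℕ, (η:ℝ≥0∞) ^ d ≠ 0 := fun d => pow_ne_zero d hη0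
      have hpowt : ∀ d : ℕ, (η:ℝ≥0∞) ^ d ≠ ⊤ := fun d => ENNReal.pow_ne_top hηt
      calc (∑ m ∈ Finset.Icc i j, f m) ^ α
          = (∑ m ∈ Finset.Icc i j, η ^ (j - m) * (f m * (η ^ (j - m))⁻¹)) ^ α := by
            congr 1
            refine Finset.sum_congr rfl fun m _ => ?_
            rw [mul_comm (η ^ (j - m)), mul_assoc,
              ENNReal.inv_mul_cancel (hpow0 _) (hpowt _), mul_one]
        _ ≤ (∑ m ∈ Finset.Icc i j, η ^ (j - m)) ^ (α - 1)
              * ∑ m ∈ Finset.Icc i j, η ^ (j - m) * (f m * (η ^ (j - m))⁻¹) ^ α :=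
            aux_jensen _ hα1 _ _
        _ ≤ K * ∑ m ∈ Finset.Icc i j, ν ^ (j - m) * f m ^ α := by
            refine mul_le_mul' (by rw [hK]; exact ENNReal.rpow_le_rpow hwsum hα1'.le) ?_
            refine le_of_eq (Finset.sum_congr rfl fun m _ => ?_)
            exact aux_term η hη0 hηt hα.le (j - m) (f m)

-- ℕ-indexed main estimate
lemma main_nat (α : ℝ) (hα : 0 < α) (ρ ν K : ℝ≥0∞) (hρν : ρ * ν < 1)
    (hkey : ∀ (f : ℕ → ℝ≥0∞) (i j : ℕ), i ≤ j →
      (∑ m ∈ Finset.Icc i j, f m) ^ α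
        ≤ K * ∑ m ∈ Finset.Icc i j, ν ^ (j - m) * f m ^ α)
    (X : ℕ → ℝ) (T S : ℕ → ℝ≥0∞)
    (hX : ∀ k : ℕ, X k < X (k + 1))
    (hTρ : ∀ k : ℕ, T (k + 1) ≤ ρ * T k)
    (hS : ∀ k l : ℕ, k ≤ l → S k ≤ S l) (g : ℝ → ℝ≥0∞) :
    ∑' j : ℕ, T (j + 1) * ⨆ i ∈ Finset.range (j + 1),
        (∫⁻ s in Ioo (X i) (X (j + 1)), g s) ^ α * S i
      ≤ K * (1 - ρ * ν)⁻¹ *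
        ∑' j : ℕ, T (j + 1) * ((∫⁻ s in Ioo (X j) (X (j + 1)), g s) ^ α * S j) := by
  set A : ℕ → ℝ≥0∞ := fun m => ∫⁻ s in Ioo (X m) (X (m + 1)), g s with hA
  set b : ℕ → ℝ≥0∞ := fun m => A m ^ α * S m with hb
  have hXmono : Monotone X := monotone_nat_of_le_succ fun k => (hX k).le
  -- step 1
  have hstep1 : ∀ i j : ℕ, i ≤ j →
      (∫⁻ s in Ioo (X i) (X (j + 1)), g s) ≤ ∑ m ∈ Finset.Icc i j, A m := by
    intro i j hij
    induction j, hij using Nat.le_induction with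
    | base => simp [hA]
    | succ j hij IH =>
        calc (∫⁻ s in Ioo (X i) (X (j + 2)), g s)
            = ∫⁻ s in Ioc (X i) (X (j + 2)), g s := by
              rw [restrict_Ioo_eq_restrict_Ioc]
          _ = ∫⁻ s in Ioc (X i) (X (j + 1)) ∪ Ioc (X (j + 1)) (X (j + 2)), g s := by
              rw [Set.Ioc_union_Ioc_eq_Ioc (hXmono (by omega)) (hXmono (by omega))]
          _ ≤ (∫⁻ s in Ioc (X i) (X (j + 1)), g s)
                + ∫⁻ s in Ioc (X (j + 1)) (X (j + 2)), g s := lintegral_union_le _ _ _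
          _ = (∫⁻ s in Ioo (X i) (X (j + 1)), g s)
                + ∫⁻ s in Ioo (X (j + 1)) (X (j + 2)), g s := by
              rw [← restrict_Ioo_eq_restrict_Ioc,
                ← restrict_Ioo_eq_restrict_Ioc]
          _ ≤ (∑ m ∈ Finset.Icc i j, A m) + A (j + 1) := add_le_add IH le_rfl
          _ = ∑ m ∈ Finset.Icc i (j + 1), A m := (Finset.sum_Icc_succ_top (by omega) _).symm
  -- step 2
  have hstep2 : ∀ j : ℕ,
      (⨆ i ∈ Finset.range (j + 1), (∫⁻ s in Ioo (X i) (X (j + 1)), g s) ^ α * S i)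
        ≤ K * ∑ m ∈ Finset.range (j + 1), ν ^ (j - m) * b m := by
    intro j
    refine iSup₂_le fun i hi => ?_
    have hij : i ≤ j := by simpa [Nat.lt_succ_iff] using hi
    calc (∫⁻ s in Ioo (X i) (X (j + 1)), g s) ^ α * S i
        ≤ (∑ m ∈ Finset.Icc i j, A m) ^ α * S i :=
          mul_le_mul_left (ENNReal.rpow_le_rpow (hstep1 i j hij) hα.le) _
      _ ≤ (K * ∑ m ∈ Finset.Icc i j, ν ^ (j - m) * A m ^ α) * S i :=
          mul_le_mul_left (hkey A i j hij) _
      _ = K * ∑ m ∈ Finset.Icc i j, ν ^ (j - m) * A m ^ α * S i := by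
          rw [mul_assoc, Finset.sum_mul]
      _ ≤ K * ∑ m ∈ Finset.Icc i j, ν ^ (j - m) * b m := by
          refine mul_le_mul_right (Finset.sum_le_sum fun m hm => ?_) _
          rw [hb, mul_assoc]
          exact mul_le_mul_right (mul_le_mul_right (hS i m (Finset.mem_Icc.1 hm).1) _) _
      _ ≤ K * ∑ m ∈ Finset.range (j + 1), ν ^ (j - m) * b m := by
          refine mul_le_mul_right (Finset.sum_le_sum_of_subset ?_) _
          intro m hm
          simp only [Finset.mem_Icc] at hm
          simp [Finset.mem_range]; omega
  -- T decay
  have hTpow : ∀ m d : ℕ, T (m + d + 1) ≤ ρ ^ d * T (m + 1) := by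
    intro m d
    induction d with
    | zero => simp
    | succ d IH =>
        calc T (m + (d + 1) + 1) = T ((m + d + 1) + 1) := by ring_nf
          _ ≤ ρ * T (m + d + 1) := hTρ _
          _ ≤ ρ * (ρ ^ d * T (m + 1)) := mul_le_mul_right IH _
          _ = ρ ^ (d + 1) * T (m + 1) := by rw [pow_succ]; ring
  calc ∑' j : ℕ, T (j + 1) * ⨆ i ∈ Finset.range (j + 1),
          (∫⁻ s in Ioo (X i) (X (j + 1)), g s) ^ α * S i
      ≤ ∑' j : ℕ, T (j + 1) * (K * ∑ m ∈ Finset.range (j + 1), ν ^ (j - m) * b m) :=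
        ENNReal.tsum_le_tsum fun j => mul_le_mul_right (hstep2 j) _
    _ = K * ∑' j : ℕ, ∑ m ∈ Finset.range (j + 1), T (j + 1) * (ν ^ (j - m) * b m) := by
        rw [← ENNReal.tsum_mul_left]
        exact tsum_congr fun j => by rw [Finset.mul_sum]; rw [← Finset.mul_sum, ← Finset.mul_sum]; ring
    _ = K * ∑' (m : ℕ) (d : ℕ), T (m + d + 1) * (ν ^ d * b m) := by
        rw [aux_swap (fun m j => T (j + 1) * (ν ^ (j - m) * b m))]
        congr 1
        exact tsum_congr fun m => tsum_congr fun d => by rw [Nat.add_sub_cancel_left]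
    _ ≤ K * ∑' (m : ℕ) (d : ℕ), (ρ * ν) ^ d * (T (m + 1) * b m) := by
        refine mul_le_mul_right (ENNReal.tsum_le_tsum fun m =>
          ENNReal.tsum_le_tsum fun d => ?_) _
        calc T (m + d + 1) * (ν ^ d * b m)
            ≤ (ρ ^ d * T (m + 1)) * (ν ^ d * b m) := mul_le_mul_left (hTpow m d) _
          _ = (ρ * ν) ^ d * (T (m + 1) * b m) := by rw [mul_pow]; ring
    _ = K * (1 - ρ * ν)⁻¹ * ∑' m : ℕ, T (m + 1) * b m := by
        rw [mul_assoc]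
        congr 1
        rw [← ENNReal.tsum_mul_left]
        refine tsum_congr fun m => ?_
        rw [ENNReal.tsum_mul_right, ENNReal.tsum_geometric]

theorem sum_sup_weighted_equiv (α : ℝ) (hα : 0 < α) (ρ : ℝ≥0∞) (hρ : ρ < 1) :
    ∃ c₁ c₂ : ℝ≥0∞, 0 < c₁ ∧ c₂ < ⊤ ∧
      ∀ (n : ℤ) (x : ℤ → ℝ) (τ σ : ℤ → ℝ≥0∞),
        (∀ k : ℤ, n ≤ k → x k < x (k + 1)) →
        (∀ k : ℤ, n ≤ k → 0 < τ k ∧ τ k < ⊤) →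
        (∀ k : ℤ, n ≤ k → τ (k + 1) ≤ ρ * τ k) →
        (∀ k : ℤ, n ≤ k → 0 < σ k ∧ σ k < ⊤) →
        (∀ k : ℤ, n ≤ k → σ k ≤ σ (k + 1)) →
        ∀ g : ℝ → ℝ≥0∞, Measurable g →
          c₁ * (∑' j : ℕ, τ (n + 1 + j) *
                ⨆ i ∈ Finset.range (j + 1),
                  (∫⁻ s in Ioo (x (n + i)) (x (n + 1 + j)), g s) ^ α * σ (n + i)) ≤
              (∑' j : ℕ, τ (n + 1 + j) *
                ((∫⁻ s in Ioo (x (n + j)) (x (n + 1 + j)), g s) ^ α * σ (n + j))) ∧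
            (∑' j : ℕ, τ (n + 1 + j) *
              ((∫⁻ s in Ioo (x (n + j)) (x (n + 1 + j)), g s) ^ α * σ (n + j))) ≤
              c₂ * ∑' j : ℕ, τ (n + 1 + j) *
                ⨆ i ∈ Finset.range (j + 1),
                  (∫⁻ s in Ioo (x (n + i)) (x (n + 1 + j)), g s) ^ α * σ (n + i) := by
  obtain ⟨ν, K, hK0, hKt, hρν, hkey⟩ := key_exists α hα ρ hρ
  set C : ℝ≥0∞ := K * (1 - ρ * ν)⁻¹ with hC
  have hCt : C ≠ ⊤ := by
    rw [hC]
    refine ENNReal.mul_ne_top hKt ?_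
    rw [Ne, ENNReal.inv_eq_top, tsub_eq_zero_iff_le]
    exact fun h => absurd h hρν.not_ge
  have hC0 : C ≠ 0 := by
    rw [hC]
    refine mul_ne_zero hK0 ?_
    rw [Ne, ENNReal.inv_eq_zero]
    exact (lt_of_le_of_lt tsub_le_self one_lt_top).ne
  refine ⟨C⁻¹, 1, ENNReal.inv_pos.2 hCt, one_lt_top, ?_⟩
  intro n x τ σ hx hτ hτρ hσ hσmono g hg
  have hre : ∀ j : ℕ, (n + 1 + (j : ℤ)) = (n + ((j + 1 : ℕ) : ℤ)) := by
    intro j; push_cast; ring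
  simp only [hre]
  constructor
  · -- hard direction
    have hmain := main_nat α hα ρ ν K hρν hkey
      (fun m : ℕ => x (n + (m : ℤ))) (fun k : ℕ => τ (n + (k : ℤ)))
      (fun k : ℕ => σ (n + (k : ℤ)))
      (fun k => by
        have := hx (n + (k : ℤ)) (by omega)
        have hcast : (n + (k : ℤ) + 1) = n + ((k + 1 : ℕ) : ℤ) := by push_cast; ring
        rwa [hcast] at this)
      (fun k => by
        have := hτρ (n + (k : ℤ)) (by omega)
        have hcast : (n + (k : ℤ) + 1) = n + ((k + 1 : ℕ) : ℤ) := by push_cast; ring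
        rwa [hcast] at this)
      (fun k l hkl => by
        clear hre
        induction l, hkl using Nat.le_induction with
        | base => exact le_rfl
        | succ l hkl IH =>
            refine le_trans IH ?_
            have := hσmono (n + (l : ℤ)) (by omega)
            have hcast : (n + (l : ℤ) + 1) = n + ((l + 1 : ℕ) : ℤ) := by push_cast; ring
            rwa [hcast] at this) g
    have hmain' : (∑' j : ℕ, τ (n + ((j + 1 : ℕ) : ℤ)) *
        ⨆ i ∈ Finset.range (j + 1),
          (∫⁻ s in Ioo (x (n + (i : ℤ))) (x (n + ((j + 1 : ℕ) : ℤ))), g s) ^ α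
            * σ (n + (i : ℤ)))
        ≤ C * ∑' j : ℕ, τ (n + ((j + 1 : ℕ) : ℤ)) *
          ((∫⁻ s in Ioo (x (n + (j : ℤ))) (x (n + ((j + 1 : ℕ) : ℤ))), g s) ^ α
            * σ (n + (j : ℤ))) := by
      rw [hC]
      exact hmain
    calc C⁻¹ * _ ≤ C⁻¹ * (C * ∑' j : ℕ, τ (n + ((j + 1 : ℕ) : ℤ)) *
          ((∫⁻ s in Ioo (x (n + (j : ℤ))) (x (n + ((j + 1 : ℕ) : ℤ))), g s) ^ α
            * σ (n + (j : ℤ)))) := mul_le_mul_right hmain' _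
      _ = _ := by rw [← mul_assoc, ENNReal.inv_mul_cancel hC0 hCt, one_mul]
  · -- easy direction
    rw [one_mul]
    refine ENNReal.tsum_le_tsum fun j => mul_le_mul_right ?_ _
    exact le_iSup₂ (f := fun i (_ : i ∈ Finset.range (j + 1)) =>
      (∫⁻ s in Ioo (x (n + (i : ℤ))) (x (n + ((j + 1 : ℕ) : ℤ))), g s) ^ α * σ (n + (i : ℤ)))
      j (Finset.self_mem_range_succ j)
end

section
/- Let α ≥ 0 and N ∈ ℤ. Let w be a weight on (a,b), set W*(t) := ∫_t^b w(s) ds for t ∈ [a,b], and let {x_k}_{k=N}^∞ be a discretizing sequence of W*. Then for any integer n ≥ N, ∫_{x_n}^b W*(x)^α w(x) h(x) dx ≈ Σ_{k=n+1}^∞ 2^{-k(α+1)} h(x_k) holds for all non-negative non-decreasing functions h on (a,b), with implicit constants depending only on α and the constants in the discretizing property W*(x_k) ≈ 2^{-k}. -/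
open MeasureTheory Set ENNReal

noncomputable section

/-- The open interval `(a, b)` with extended-real endpoints, viewed as a set of reals. -/
def io (a b : EReal) : Set ℝ := {x : ℝ | a < (x : EReal) ∧ (x : EReal) < b}

/-- A weight on `(a, b)`: a measurable function which is positive and finite on `(a, b)`. -/
def IsWeight (a b : EReal) (u : ℝ → ℝ≥0∞) : Prop :=
  Measurable u ∧ ∀ x ∈ io a b, 0 < u x ∧ u x < ⊤

/-- `W*(t) = ∫_t^b w`. -/
def Wstar (b : EReal) (w : ℝ → ℝ≥0∞) (t : ℝ) : ℝ≥0∞ := ∫⁻ s in io t b, w s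

/-- `{x_k}_{k=N}^∞ ⊂ [a, b]` is a discretizing sequence of `W*` with constants
`d₁, d₂`: it is strictly increasing, starts at `a`, and `W*(x_k) ≈ 2 ^ (-k)`. -/
def IsDiscretizing (a b : EReal) (w : ℝ → ℝ≥0∞) (N : ℤ) (x : ℤ → ℝ)
    (d₁ d₂ : ℝ≥0∞) : Prop :=
  (x N : EReal) = a ∧
  (∀ k : ℤ, N ≤ k → x k < x (k + 1)) ∧
  (∀ k : ℤ, N ≤ k → a ≤ (x k : EReal) ∧ (x k : EReal) ≤ b) ∧
  ∀ k : ℤ, N ≤ k →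
    d₁ * (2 : ℝ≥0∞) ^ (-(k : ℝ)) ≤ Wstar b w (x k) ∧
    Wstar b w (x k) ≤ d₂ * (2 : ℝ≥0∞) ^ (-(k : ℝ))

/-! ### Auxiliary lemmas -/

lemma two_rpow_ne_zero (y : ℝ) : (2 : ℝ≥0∞) ^ y ≠ 0 :=
  (ENNReal.rpow_pos (by norm_num) (by norm_num)).ne'

lemma two_rpow_ne_top (y : ℝ) : (2 : ℝ≥0∞) ^ y ≠ ⊤ := by
  rcases le_or_gt 0 y with hy | hy
  · exact (ENNReal.rpow_lt_top_of_nonneg hy (by norm_num)).ne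
  · rw [show y = -(-y) by ring, ENNReal.rpow_neg]
    simpa using (ENNReal.rpow_pos (x := 2) (p := -y) (by norm_num) (by norm_num)).ne'

lemma two_rpow_add (y z : ℝ) : (2 : ℝ≥0∞) ^ (y + z) = 2 ^ y * 2 ^ z :=
  ENNReal.rpow_add y z (by norm_num) (by norm_num)

lemma io_measurable (t : ℝ) (b : EReal) : MeasurableSet (io t b) := by
  have : io t b = Ioi t ∩ (Real.toEReal ⁻¹' Iio b) := by
    ext s
    simp [io, Set.mem_Ioi, EReal.coe_lt_coe_iff]
  rw [this]
  exact measurableSet_Ioi.inter (measurable_coe_real_ereal measurableSet_Iio)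

lemma alg_rpow (d : ℝ≥0∞) (hd0 : d ≠ 0) (hdt : d ≠ ⊤) {α : ℝ} (hα : 0 ≤ α) (u v : ℝ) :
    (d * (2 : ℝ≥0∞) ^ u) ^ α * (d * (2 : ℝ≥0∞) ^ v)
      = d ^ (α + 1) * (2 : ℝ≥0∞) ^ (u * α + v) := by
  rw [ENNReal.mul_rpow_of_nonneg _ _ hα, ← ENNReal.rpow_mul,
    two_rpow_add (u * α) v, ENNReal.rpow_add α 1 hd0 hdt, ENNReal.rpow_one]
  ring

lemma exists_small (c : ℝ≥0∞) (hc : c ≠ ⊤) {ε : ℝ≥0∞} (hε : ε ≠ 0) :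
    ∃ j : ℕ, c * (2 : ℝ≥0∞) ^ (-(j : ℝ)) < ε := by
  rcases eq_or_ne ε ⊤ with rfl | hεt
  · exact ⟨0, by simpa using hc.lt_top⟩
  obtain ⟨K, hK⟩ := ENNReal.exists_nat_gt (ENNReal.mul_ne_top hc (ENNReal.inv_ne_top.mpr hε))
  refine ⟨K, ?_⟩
  have h2K : (K : ℝ≥0∞) ≤ (2 : ℝ≥0∞) ^ (K : ℝ) := by
    rw [ENNReal.rpow_natCast]
    exact_mod_cast (Nat.lt_two_pow_self (n := K)).le
  have hlt : c < (2 : ℝ≥0∞) ^ (K : ℝ) * ε := by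
    have : c / ε < (2 : ℝ≥0∞) ^ (K : ℝ) := lt_of_lt_of_le hK h2K
    exact (ENNReal.div_lt_iff (Or.inl hε) (Or.inr hc)).mp this
  have := (ENNReal.mul_lt_mul_iff_left (two_rpow_ne_zero (-(K : ℝ)))
    (two_rpow_ne_top (-(K : ℝ)))).mpr hlt
  calc c * (2 : ℝ≥0∞) ^ (-(K : ℝ)) < (2 : ℝ≥0∞) ^ (K : ℝ) * ε * 2 ^ (-(K : ℝ)) := this
    _ = ε * ((2 : ℝ≥0∞) ^ ((K : ℝ) + -(K : ℝ))) := by rw [two_rpow_add]; ring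
    _ = ε := by rw [show (K : ℝ) + -(K : ℝ) = 0 by ring, ENNReal.rpow_zero, mul_one]

lemma sum_lintegral_le {ι : Type*} (s : Finset ι) (f : ι → ℝ → ℝ≥0∞) (μ : Measure ℝ) :
    ∑ i ∈ s, ∫⁻ t, f i t ∂μ ≤ ∫⁻ t, ∑ i ∈ s, f i t ∂μ := by
  classical
  induction s using Finset.induction with
  | empty => simp
  | insert _ _ hx ih =>
    rename_i i s
    simp only [Finset.sum_insert hx]
    exact le_trans (add_le_add_right ih _) (le_lintegral_add _ _)

theorem discretization_integral_equiv (α : ℝ) (hα : 0 ≤ α) (d₁ d₂ : ℝ≥0∞)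
    (hd₁ : 0 < d₁) (hd₂ : d₂ < ⊤) :
    ∃ c₁ c₂ : ℝ≥0∞, 0 < c₁ ∧ c₂ < ⊤ ∧
      ∀ (a b : EReal), a < b → ∀ w : ℝ → ℝ≥0∞, IsWeight a b w →
        ∀ (N : ℤ) (x : ℤ → ℝ), IsDiscretizing a b w N x d₁ d₂ →
        ∀ n : ℤ, N ≤ n →
        ∀ h : ℝ → ℝ≥0∞, MonotoneOn h (io a b) →
          c₁ * (∑' j : ℕ, (2 : ℝ≥0∞) ^ (-((n + 1 + j : ℤ) : ℝ) * (α + 1)) *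
                h (x (n + 1 + j))) ≤
              (∫⁻ t in io (x n) b, Wstar b w t ^ α * w t * h t) ∧
            (∫⁻ t in io (x n) b, Wstar b w t ^ α * w t * h t) ≤
              c₂ * ∑' j : ℕ, (2 : ℝ≥0∞) ^ (-((n + 1 + j : ℤ) : ℝ) * (α + 1)) *
                h (x (n + 1 + j)) := by
  classical
  set d₁' : ℝ≥0∞ := min d₁ 1 with hd₁'def
  set d₂' : ℝ≥0∞ := max d₂ 1 with hd₂'def
  have hd₁'0 : d₁' ≠ 0 := (lt_min hd₁ one_pos).ne'
  have hd₁'t : d₁' ≠ ⊤ := ((min_le_right _ _).trans_lt one_lt_top).ne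
  have hd₂'0 : d₂' ≠ 0 := (lt_of_lt_of_le one_pos (le_max_right _ _)).ne'
  have hd₂'t : d₂' ≠ ⊤ := (max_lt hd₂ one_lt_top).ne
  -- choose m
  obtain ⟨m, hm1, hm⟩ : ∃ m : ℕ, 1 ≤ m ∧ 2 * d₂' * (2 : ℝ≥0∞) ^ (-(m : ℝ)) ≤ d₁' := by
    obtain ⟨M, hM⟩ := ENNReal.exists_nat_gt
      (show 2 * d₂' / d₁' ≠ ⊤ from ENNReal.mul_ne_top
        (ENNReal.mul_ne_top (by norm_num) hd₂'t) (ENNReal.inv_ne_top.mpr hd₁'0))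
    have h2M : (M : ℝ≥0∞) ≤ (2 : ℝ≥0∞) ^ (M : ℝ) := by
      rw [ENNReal.rpow_natCast]
      exact_mod_cast (Nat.lt_two_pow_self (n := M)).le
    have hlt : 2 * d₂' < (2 : ℝ≥0∞) ^ (M : ℝ) * d₁' :=
      (ENNReal.div_lt_iff (Or.inl hd₁'0) (Or.inl hd₁'t)).mp (lt_of_lt_of_le hM h2M)
    have hMle : 2 * d₂' * (2 : ℝ≥0∞) ^ (-(M : ℝ)) ≤ d₁' := by
      have := mul_le_mul_left hlt.le ((2 : ℝ≥0∞) ^ (-(M : ℝ)))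
      calc 2 * d₂' * (2 : ℝ≥0∞) ^ (-(M : ℝ))
          ≤ (2 : ℝ≥0∞) ^ (M : ℝ) * d₁' * 2 ^ (-(M : ℝ)) := this
        _ = d₁' * ((2 : ℝ≥0∞) ^ ((M : ℝ) + -(M : ℝ))) := by rw [two_rpow_add]; ring
        _ = d₁' := by rw [show (M : ℝ) + -(M : ℝ) = 0 by ring, ENNReal.rpow_zero, mul_one]
    refine ⟨M + 1, by omega, le_trans (mul_le_mul_right ?_ _) hMle⟩
    exact ENNReal.rpow_le_rpow_of_exponent_le (by norm_num) (by push_cast; linarith)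
  set e : ℝ≥0∞ := d₁' ^ (α + 1) * (2 : ℝ≥0∞) ^ (-(m : ℝ) * α - 1) with hedef
  have he0 : e ≠ 0 :=
    mul_ne_zero (ENNReal.rpow_pos (hd₁'0.bot_lt) hd₁'t).ne' (two_rpow_ne_zero _)
  have hm0 : (m : ℝ≥0∞) ≠ 0 := Nat.cast_ne_zero.mpr (by omega)
  have hmt : (m : ℝ≥0∞) ≠ ⊤ := ENNReal.natCast_ne_top m
  refine ⟨e / m, d₂' ^ (α + 1) * (2 : ℝ≥0∞) ^ (α + 1), ENNReal.div_pos he0 hmt,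
    mul_lt_top (ENNReal.rpow_lt_top_of_nonneg (by linarith) hd₂'t)
      (ENNReal.rpow_lt_top_of_nonneg (by linarith) (by norm_num)), ?_⟩
  intro a b hab w hw N x hdisc n hn h hh
  obtain ⟨hw_meas, hw_pos⟩ := hw
  obtain ⟨hxN, hxinc, hxmem, hxW⟩ := hdisc
  have hxW1 : ∀ k, N ≤ k → d₁' * (2 : ℝ≥0∞) ^ (-(k : ℝ)) ≤ Wstar b w (x k) :=
    fun k hk => le_trans (mul_le_mul_left (min_le_left _ _) _) (hxW k hk).1
  have hxW2 : ∀ k, N ≤ k → Wstar b w (x k) ≤ d₂' * (2 : ℝ≥0∞) ^ (-(k : ℝ)) :=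
    fun k hk => le_trans (hxW k hk).2 (mul_le_mul_left (le_max_left _ _) _)
  have xlt : ∀ k l : ℤ, N ≤ k → k < l → x k < x l := by
    intro k l hk hkl
    have : ∀ l : ℤ, k + 1 ≤ l → x k < x l := by
      refine Int.le_induction ?_ ?_
      · exact hxinc k hk
      · intro p hp ih
        exact lt_trans ih (hxinc p (by omega))
    exact this l (by omega)
  have xle : ∀ k l : ℤ, N ≤ k → k ≤ l → x k ≤ x l := by
    intro k l hk hkl
    rcases eq_or_lt_of_le hkl with rfl | hkl
    · exact le_rfl
    · exact (xlt k l hk hkl).le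
  have hxb : ∀ k, N ≤ k → (x k : EReal) < b := fun k hk =>
    lt_of_lt_of_le (EReal.coe_lt_coe_iff.mpr (hxinc k hk)) (hxmem (k + 1) (by omega)).2
  have hxa : ∀ k, N ≤ k → a ≤ (x k : EReal) := fun k hk => (hxmem k hk).1
  have hxio : ∀ k, N < k → x k ∈ io a b := by
    intro k hk
    refine ⟨?_, hxb k (by omega)⟩
    rw [← hxN]
    exact EReal.coe_lt_coe_iff.mpr (xlt N k le_rfl hk)
  have hIoc_io : ∀ k l : ℤ, N ≤ k → N ≤ l → Ioc (x k) (x l) ⊆ io a b := by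
    intro k l hk hl t ht
    refine ⟨lt_of_le_of_lt (hxa k hk) (EReal.coe_lt_coe_iff.mpr ht.1), ?_⟩
    exact lt_of_le_of_lt (EReal.coe_le_coe_iff.mpr ht.2) (hxb l hl)
  have hIoc_sub : ∀ k l : ℤ, N ≤ l → Ioc (x k) (x l) ⊆ io (x k) b := by
    intro k l hl t ht
    exact ⟨EReal.coe_lt_coe_iff.mpr ht.1,
      lt_of_le_of_lt (EReal.coe_le_coe_iff.mpr ht.2) (hxb l hl)⟩
  have Wmono : ∀ s t : ℝ, s ≤ t → Wstar b w t ≤ Wstar b w s := by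
    intro s t hst
    refine lintegral_mono_set fun u hu => ⟨?_, hu.2⟩
    exact lt_of_le_of_lt (EReal.coe_le_coe_iff.mpr hst) hu.1
  have Wsplit : ∀ k l : ℤ, N ≤ k → k ≤ l →
      Wstar b w (x k) = (∫⁻ t in Ioc (x k) (x l), w t) + Wstar b w (x l) := by
    intro k l hk hkl
    have hset : io (x k) b = Ioc (x k) (x l) ∪ io (x l) b := by
      ext t
      constructor
      · rintro ⟨h1, h2⟩
        rcases le_or_gt t (x l) with h3 | h3
        · exact Or.inl ⟨EReal.coe_lt_coe_iff.mp h1, h3⟩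
        · exact Or.inr ⟨EReal.coe_lt_coe_iff.mpr h3, h2⟩
      · rintro (⟨h1, h2⟩ | ⟨h1, h2⟩)
        · exact ⟨EReal.coe_lt_coe_iff.mpr h1,
            lt_of_le_of_lt (EReal.coe_le_coe_iff.mpr h2) (hxb l (hk.trans hkl))⟩
        · exact ⟨lt_of_le_of_lt (EReal.coe_le_coe_iff.mpr (xle k l hk hkl)) h1, h2⟩
    have hdisj : Disjoint (Ioc (x k) (x l)) (io (x l) b) := by
      refine Set.disjoint_left.mpr fun t ht ht' => ?_
      exact absurd (EReal.coe_lt_coe_iff.mp ht'.1) (not_lt.mpr ht.2)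
    rw [Wstar, hset, lintegral_union (io_measurable _ _) hdisj]
    rfl
  have Wpos : ∀ t : ℝ, a < (t : EReal) → (t : EReal) < b → Wstar b w t ≠ 0 := by
    intro t ha' hb' h0
    have hμ : 0 < volume (io t b) := by
      obtain ⟨c, hc1, hc2⟩ := exists_between hb'
      have hc_ne_top : c ≠ ⊤ := hc2.ne_top
      have hc_ne_bot : c ≠ ⊥ := (lt_of_le_of_lt bot_le hc1).ne'
      set s := c.toReal with hs
      have hcs : (s : EReal) = c := EReal.coe_toReal hc_ne_top hc_ne_bot
      have hts : t < s := EReal.coe_lt_coe_iff.mp (by rw [hcs]; exact hc1)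
      have hsub : Ioo t s ⊆ io t b := by
        intro u hu
        refine ⟨EReal.coe_lt_coe_iff.mpr hu.1, ?_⟩
        calc (u : EReal) < (s : EReal) := EReal.coe_lt_coe_iff.mpr hu.2
          _ = c := hcs
          _ < b := hc2
      calc (0 : ℝ≥0∞) < volume (Ioo t s) := by
            rw [Real.volume_Ioo]; exact ENNReal.ofReal_pos.mpr (by linarith)
        _ ≤ volume (io t b) := measure_mono hsub
    have hae := (lintegral_eq_zero_iff hw_meas).mp h0
    rw [Filter.EventuallyEq, ae_restrict_iff' (io_measurable _ _)] at hae
    have h0' : volume (io t b) = 0 := by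
      refine measure_mono_null ?_ (ae_iff.mp hae)
      intro u hu
      simp only [Set.mem_setOf_eq]
      intro himp
      have humem : u ∈ io a b := ⟨lt_trans ha' hu.1, hu.2⟩
      have hw0 : w u = 0 := by simpa using himp hu
      exact (hw_pos u humem).1.ne' hw0
    exact absurd h0' hμ.ne'
  -- the cover for the upper bound
  have hcover : io (x n) b ⊆ ⋃ j : ℕ, Ioc (x (n + j)) (x (n + 1 + j)) := by
    intro t ht
    by_contra hnot
    simp only [Set.mem_iUnion, not_exists] at hnot
    have hmono : ∀ j : ℕ, x (n + j) < t := by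
      intro j
      induction j with
      | zero => simpa using EReal.coe_lt_coe_iff.mp ht.1
      | succ i ihi =>
        have h1 : t ∉ Ioc (x (n + i)) (x (n + 1 + i)) := hnot i
        have h2 : ¬ t ≤ x (n + 1 + i) := fun hle => h1 ⟨ihi, hle⟩
        have heq : (n + ((i + 1 : ℕ) : ℤ)) = n + 1 + (i : ℤ) := by push_cast; ring
        rw [heq]
        exact not_le.mp h2
    have hWt0 : Wstar b w t = 0 := by
      by_contra hW
      obtain ⟨j, hj⟩ := exists_small (d₂' * (2 : ℝ≥0∞) ^ (-(n : ℝ)))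
        (ENNReal.mul_ne_top hd₂'t (two_rpow_ne_top _)) hW
      have h1 : Wstar b w t ≤ Wstar b w (x (n + j)) := Wmono _ _ (hmono j).le
      have h2 : Wstar b w (x (n + j)) ≤ d₂' * (2 : ℝ≥0∞) ^ (-((n + j : ℤ) : ℝ)) :=
        hxW2 (n + j) (by omega)
      have h3 : d₂' * (2 : ℝ≥0∞) ^ (-((n + j : ℤ) : ℝ))
          = d₂' * (2 : ℝ≥0∞) ^ (-(n : ℝ)) * (2 : ℝ≥0∞) ^ (-(j : ℝ)) := by
        rw [mul_assoc, ← two_rpow_add]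
        congr 1
        push_cast
        ring
      rw [h3] at h2
      exact absurd (lt_of_le_of_lt (h1.trans h2) hj) (lt_irrefl _)
    refine Wpos t ?_ ht.2 hWt0
    exact lt_of_le_of_lt (hxa n hn) ht.1
  -- notation for the integrand
  set F : ℝ → ℝ≥0∞ := fun t => Wstar b w t ^ α * w t * h t with hFdef
  set I : ℝ≥0∞ := ∫⁻ t in io (x n) b, F t with hIdef
  constructor
  · -- LOWER BOUND
    set A : ℕ → Set ℝ := fun j => Ioc (x (n + 1 + j)) (x (n + 1 + j + m)) with hAdef
    -- per-term estimate
    have claim1 : ∀ j : ℕ,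
        e * ((2 : ℝ≥0∞) ^ (-((n + 1 + j : ℤ) : ℝ) * (α + 1)) * h (x (n + 1 + j)))
          ≤ ∫⁻ t in A j, F t := by
      intro j
      set k : ℤ := n + 1 + j with hkdef
      have hkN : N ≤ k := by omega
      have hkmN : N ≤ k + m := by omega
      set C : ℝ≥0∞ := (d₁' * (2 : ℝ≥0∞) ^ (-((k + m : ℤ) : ℝ))) ^ α * h (x k) with hCdef
      have hpt : ∀ t ∈ A j, C * w t ≤ F t := by
        intro t ht
        have ht' : t ∈ Ioc (x k) (x (k + m)) := ht
        have h1 : (d₁' * (2 : ℝ≥0∞) ^ (-((k + m : ℤ) : ℝ))) ^ α ≤ Wstar b w t ^ α :=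
          ENNReal.rpow_le_rpow
            (le_trans (hxW1 (k + m) hkmN) (Wmono t (x (k + m)) ht'.2)) hα
        have h2 : h (x k) ≤ h t :=
          hh (hxio k (by omega)) (hIoc_io k (k + m) hkN hkmN ht') ht'.1.le
        calc C * w t = (d₁' * (2 : ℝ≥0∞) ^ (-((k + m : ℤ) : ℝ))) ^ α * h (x k) * w t := rfl
          _ ≤ Wstar b w t ^ α * h t * w t :=
            mul_le_mul_left (mul_le_mul' h1 h2) _
          _ = F t := by rw [hFdef]; ring
      have hint : C * ∫⁻ t in A j, w t ≤ ∫⁻ t in A j, F t := by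
        rw [← lintegral_const_mul C hw_meas]
        exact setLIntegral_mono' measurableSet_Ioc hpt
      have hwlow : d₁' / 2 * (2 : ℝ≥0∞) ^ (-(k : ℝ)) ≤ ∫⁻ t in A j, w t := by
        have hsplit := Wsplit k (k + m) hkN (by omega)
        have h2 : d₂' * (2 : ℝ≥0∞) ^ (-((k + m : ℤ) : ℝ))
            = d₂' * (2 : ℝ≥0∞) ^ (-(m : ℝ)) * (2 : ℝ≥0∞) ^ (-(k : ℝ)) := by
          rw [mul_assoc, ← two_rpow_add]
          congr 1
          push_cast
          ring
        have h3 : d₂' * (2 : ℝ≥0∞) ^ (-(m : ℝ)) ≤ d₁' / 2 := by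
          rw [ENNReal.le_div_iff_mul_le (Or.inl (by norm_num)) (Or.inl (by norm_num))]
          calc d₂' * (2 : ℝ≥0∞) ^ (-(m : ℝ)) * 2 = 2 * d₂' * (2 : ℝ≥0∞) ^ (-(m : ℝ)) := by ring
            _ ≤ d₁' := hm
        have h4 : d₁' * (2 : ℝ≥0∞) ^ (-(k : ℝ))
            ≤ (∫⁻ t in A j, w t) + d₁' / 2 * (2 : ℝ≥0∞) ^ (-(k : ℝ)) := by
          calc d₁' * (2 : ℝ≥0∞) ^ (-(k : ℝ)) ≤ Wstar b w (x k) := hxW1 k hkN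
            _ = (∫⁻ t in A j, w t) + Wstar b w (x (k + m)) := hsplit
            _ ≤ (∫⁻ t in A j, w t) + d₂' * (2 : ℝ≥0∞) ^ (-((k + m : ℤ) : ℝ)) :=
              add_le_add_right (hxW2 (k + m) hkmN) _
            _ ≤ (∫⁻ t in A j, w t) + d₁' / 2 * (2 : ℝ≥0∞) ^ (-(k : ℝ)) := by
              rw [h2]
              exact add_le_add_right (mul_le_mul_left h3 _) _
        calc d₁' / 2 * (2 : ℝ≥0∞) ^ (-(k : ℝ))
            = (d₁' - d₁' / 2) * (2 : ℝ≥0∞) ^ (-(k : ℝ)) := by rw [ENNReal.sub_half hd₁'t]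
          _ = d₁' * (2 : ℝ≥0∞) ^ (-(k : ℝ)) - d₁' / 2 * (2 : ℝ≥0∞) ^ (-(k : ℝ)) :=
            ENNReal.sub_mul (fun _ _ => two_rpow_ne_top _)
          _ ≤ ∫⁻ t in A j, w t := tsub_le_iff_right.mpr h4
      have halg : e * ((2 : ℝ≥0∞) ^ (-((n + 1 + j : ℤ) : ℝ) * (α + 1)) * h (x (n + 1 + j)))
          = C * (d₁' / 2 * (2 : ℝ≥0∞) ^ (-(k : ℝ))) := by
        have hdiv : d₁' / 2 * (2 : ℝ≥0∞) ^ (-(k : ℝ)) = d₁' * (2 : ℝ≥0∞) ^ (-(k : ℝ) - 1) := by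
          rw [div_eq_mul_inv, ← ENNReal.rpow_neg_one 2, mul_assoc, ← two_rpow_add]
          congr 2
          ring
        have h1 : C * (d₁' / 2 * (2 : ℝ≥0∞) ^ (-(k : ℝ)))
            = (d₁' * (2 : ℝ≥0∞) ^ (-((k + m : ℤ) : ℝ))) ^ α
              * (d₁' * (2 : ℝ≥0∞) ^ (-(k : ℝ) - 1)) * h (x k) := by
          rw [hCdef, hdiv]; ring
        rw [h1, alg_rpow d₁' hd₁'0 hd₁'t hα, hedef]
        rw [show ((k + m : ℤ) : ℝ) = (k : ℝ) + (m : ℝ) from by push_cast; ring]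
        rw [show -((k : ℝ) + (m : ℝ)) * α + (-(k : ℝ) - 1)
            = (-(m : ℝ) * α - 1) + (-(k : ℝ) * (α + 1)) from by ring, two_rpow_add]
        rw [show ((n + 1 + j : ℤ) : ℝ) = (k : ℝ) from by rw [hkdef]]
        ring
      calc e * ((2 : ℝ≥0∞) ^ (-((n + 1 + j : ℤ) : ℝ) * (α + 1)) * h (x (n + 1 + j)))
          = C * (d₁' / 2 * (2 : ℝ≥0∞) ^ (-(k : ℝ))) := halg
        _ ≤ C * ∫⁻ t in A j, w t := mul_le_mul_right hwlow C
        _ ≤ ∫⁻ t in A j, F t := hint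
    -- overlap count
    have count : ∀ (t : ℝ) (s : Finset ℕ),
        (∑ j ∈ s, (A j).indicator F t) ≤ (m : ℝ≥0∞) * (io (x n) b).indicator F t := by
      intro t s
      set s' : Finset ℕ := s.filter (fun j => t ∈ A j) with hs'def
      have hsum : (∑ j ∈ s, (A j).indicator F t) = s'.card * F t := by
        rw [hs'def, ← Finset.sum_filter_add_sum_filter_not s (fun j => t ∈ A j)]
        have h1 : ∑ j ∈ s.filter (fun j => t ∈ A j), (A j).indicator F t
            = ∑ j ∈ s.filter (fun j => t ∈ A j), F t := by
          refine Finset.sum_congr rfl fun j hj => ?_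
          exact Set.indicator_of_mem (Finset.mem_filter.mp hj).2 F
        have h2 : ∑ j ∈ s.filter (fun j => ¬ t ∈ A j), (A j).indicator F t = 0 := by
          refine Finset.sum_eq_zero fun j hj => ?_
          exact Set.indicator_of_notMem (Finset.mem_filter.mp hj).2 F
        rw [h1, h2, add_zero, Finset.sum_const, nsmul_eq_mul]
      rw [hsum]
      rcases s'.eq_empty_or_nonempty with hemp | hne
      · simp [hemp]
      have hj₀mem := s'.min'_mem hne
      set j₀ : ℕ := s'.min' hne with hj₀def
      have hj₀ : t ∈ A j₀ := (Finset.mem_filter.mp hj₀mem).2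
      have hcard : s'.card ≤ m := by
        have hsub : s' ⊆ Finset.Ico j₀ (j₀ + m) := by
          intro j hj
          have htj : t ∈ A j := (Finset.mem_filter.mp hj).2
          refine Finset.mem_Ico.mpr ⟨Finset.min'_le _ _ hj, ?_⟩
          by_contra hge
          push_neg at hge
          have hle : x (n + 1 + (j₀ : ℤ) + m) ≤ x (n + 1 + j) :=
            xle _ _ (by omega) (by push_cast; omega)
          exact absurd ((hj₀.2.trans hle).trans_lt htj.1) (lt_irrefl t)
        calc s'.card ≤ (Finset.Ico j₀ (j₀ + m)).card := Finset.card_le_card hsub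
          _ = m := by rw [Nat.card_Ico]; omega
      have htio : t ∈ io (x n) b := by
        constructor
        · have h1 : x n ≤ x (n + 1 + j₀) := xle _ _ hn (by omega)
          exact EReal.coe_lt_coe_iff.mpr (lt_of_le_of_lt h1 hj₀.1)
        · exact lt_of_le_of_lt (EReal.coe_le_coe_iff.mpr hj₀.2)
            (hxb (n + 1 + j₀ + m) (by omega))
      rw [Set.indicator_of_mem htio]
      exact mul_le_mul_left (by exact_mod_cast hcard) _
    -- summing
    have claim2 : (∑' j : ℕ, ∫⁻ t in A j, F t) ≤ m * I := by
      rw [ENNReal.tsum_eq_iSup_sum]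
      refine iSup_le fun s => ?_
      calc ∑ j ∈ s, ∫⁻ t in A j, F t
          = ∑ j ∈ s, ∫⁻ t, (A j).indicator F t := by
            refine Finset.sum_congr rfl fun j _ => ?_
            rw [lintegral_indicator measurableSet_Ioc]
        _ ≤ ∫⁻ t, ∑ j ∈ s, (A j).indicator F t := sum_lintegral_le s _ _
        _ ≤ ∫⁻ t, (m : ℝ≥0∞) * (io (x n) b).indicator F t := lintegral_mono fun t => count t s
        _ = (m : ℝ≥0∞) * ∫⁻ t, (io (x n) b).indicator F t := lintegral_const_mul' _ _ hmt
        _ = m * I := by rw [lintegral_indicator (io_measurable _ _)]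
    have final : e * (∑' j : ℕ, (2 : ℝ≥0∞) ^ (-((n + 1 + j : ℤ) : ℝ) * (α + 1)) *
        h (x (n + 1 + j))) ≤ m * I := by
      rw [← ENNReal.tsum_mul_left]
      exact le_trans (ENNReal.tsum_le_tsum claim1) claim2
    have hrw : e / m * (∑' j : ℕ, (2 : ℝ≥0∞) ^ (-((n + 1 + j : ℤ) : ℝ) * (α + 1)) *
        h (x (n + 1 + j)))
        = e * (∑' j : ℕ, (2 : ℝ≥0∞) ^ (-((n + 1 + j : ℤ) : ℝ) * (α + 1)) *
          h (x (n + 1 + j))) / m := by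
      rw [div_eq_mul_inv, div_eq_mul_inv]
      ring
    rw [hrw, ENNReal.div_le_iff hm0 hmt]
    exact final.trans (le_of_eq (mul_comm _ _))
  · -- UPPER BOUND
    have step1 : I ≤ ∑' j : ℕ, ∫⁻ t in Ioc (x (n + j)) (x (n + 1 + j)), F t :=
      le_trans (lintegral_mono_set hcover) (lintegral_iUnion_le _ _)
    have step2 : ∀ j : ℕ, (∫⁻ t in Ioc (x (n + j)) (x (n + 1 + j)), F t)
        ≤ d₂' ^ (α + 1) * (2 : ℝ≥0∞) ^ (α + 1) *
          ((2 : ℝ≥0∞) ^ (-((n + 1 + j : ℤ) : ℝ) * (α + 1)) * h (x (n + 1 + j))) := by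
      intro j
      set k : ℤ := n + j with hkdef
      have hkN : N ≤ k := by omega
      have hk1N : N ≤ k + 1 := by omega
      have hkk1 : n + 1 + (j : ℤ) = k + 1 := by omega
      set C : ℝ≥0∞ := (d₂' * (2 : ℝ≥0∞) ^ (-(k : ℝ))) ^ α * h (x (n + 1 + j)) with hCdef
      have hpt : ∀ t ∈ Ioc (x (n + j)) (x (n + 1 + j)), F t ≤ C * w t := by
        intro t ht
        have ht' : t ∈ Ioc (x k) (x (k + 1)) := by rwa [hkk1] at ht
        have h1 : Wstar b w t ^ α ≤ (d₂' * (2 : ℝ≥0∞) ^ (-(k : ℝ))) ^ α :=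
          ENNReal.rpow_le_rpow (le_trans (Wmono (x k) t ht'.1.le) (hxW2 k hkN)) hα
        have h2 : h t ≤ h (x (n + 1 + j)) := by
          rw [hkk1]
          exact hh (hIoc_io k (k + 1) hkN hk1N ht') (hxio (k + 1) (by omega)) ht'.2
        calc F t = Wstar b w t ^ α * h t * w t := by rw [hFdef]; ring
          _ ≤ (d₂' * (2 : ℝ≥0∞) ^ (-(k : ℝ))) ^ α * h (x (n + 1 + j)) * w t :=
            mul_le_mul_left (mul_le_mul' h1 h2) _
          _ = C * w t := rfl
      have hint : (∫⁻ t in Ioc (x (n + j)) (x (n + 1 + j)), F t)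
          ≤ C * ∫⁻ t in Ioc (x (n + j)) (x (n + 1 + j)), w t := by
        rw [← lintegral_const_mul C hw_meas]
        exact setLIntegral_mono' measurableSet_Ioc hpt
      have hwup : (∫⁻ t in Ioc (x (n + j)) (x (n + 1 + j)), w t)
          ≤ d₂' * (2 : ℝ≥0∞) ^ (-(k : ℝ)) := by
        refine le_trans (lintegral_mono_set ?_) (hxW2 k hkN)
        have : Ioc (x (n + j)) (x (n + 1 + j)) = Ioc (x k) (x (k + 1)) := by rw [hkk1]
        rw [this]
        exact hIoc_sub k (k + 1) hk1N
      have halg : C * (d₂' * (2 : ℝ≥0∞) ^ (-(k : ℝ)))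
          = d₂' ^ (α + 1) * (2 : ℝ≥0∞) ^ (α + 1) *
            ((2 : ℝ≥0∞) ^ (-((n + 1 + j : ℤ) : ℝ) * (α + 1)) * h (x (n + 1 + j))) := by
        have h1 : C * (d₂' * (2 : ℝ≥0∞) ^ (-(k : ℝ)))
            = (d₂' * (2 : ℝ≥0∞) ^ (-(k : ℝ))) ^ α
              * (d₂' * (2 : ℝ≥0∞) ^ (-(k : ℝ))) * h (x (n + 1 + j)) := by
          rw [hCdef]; ring
        rw [h1, alg_rpow d₂' hd₂'0 hd₂'t hα]
        rw [show ((n + 1 + j : ℤ) : ℝ) = (k : ℝ) + 1 from by rw [hkk1]; push_cast; ring]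
        rw [show -(k : ℝ) * α + -(k : ℝ)
            = (α + 1) + -((k : ℝ) + 1) * (α + 1) from by ring, two_rpow_add]
        ring
      calc (∫⁻ t in Ioc (x (n + j)) (x (n + 1 + j)), F t)
          ≤ C * ∫⁻ t in Ioc (x (n + j)) (x (n + 1 + j)), w t := hint
        _ ≤ C * (d₂' * (2 : ℝ≥0∞) ^ (-(k : ℝ))) := mul_le_mul_right hwup C
        _ = _ := halg
    calc I ≤ ∑' j : ℕ, ∫⁻ t in Ioc (x (n + j)) (x (n + 1 + j)), F t := step1
      _ ≤ ∑' j : ℕ, d₂' ^ (α + 1) * (2 : ℝ≥0∞) ^ (α + 1) *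
          ((2 : ℝ≥0∞) ^ (-((n + 1 + j : ℤ) : ℝ) * (α + 1)) * h (x (n + 1 + j))) :=
        ENNReal.tsum_le_tsum step2
      _ = d₂' ^ (α + 1) * (2 : ℝ≥0∞) ^ (α + 1) *
          ∑' j : ℕ, (2 : ℝ≥0∞) ^ (-((n + 1 + j : ℤ) : ℝ) * (α + 1)) * h (x (n + 1 + j)) :=
        ENNReal.tsum_mul_left
end
end

section
/- Let α ≥ 0 and N ∈ ℤ. Let w be a weight on (a,b), set W*(t) := ∫_t^b w(s) ds for t ∈ [a,b], and let {x_k}_{k=N}^∞ be a discretizing sequence of W*. Then for any integer n ≥ N, ess sup_{x∈(x_n, b)} W*(x)^α h(x) ≈ sup_{n+1 ≤ k < ∞} 2^{-kα} h(x_k) holds for all non-negative non-decreasing functions h on (a,b), with implicit constants depending only on α and the constants in the discretizing property W*(x_k) ≈ 2^{-k}. -/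
open MeasureTheory Set ENNReal

noncomputable section

/-!
Every `t ∈ (x_n, b)` lies in some `(x_{k-1}, x_k]` with `k > n`: the `x_k` exhaust `(a, b)`
because `W*(x_k) ≤ d₂ 2^{-k} → 0` while `W* > 0` on `(a, b)`. There `W*(t) ≤ d₂ 2^{1-k}` and
`h(t) ≤ h(x_k)`, which gives the upper bound. Conversely, on `(x_k, x_{k+1})`, a set of positive
measure, `W* ≥ d₁ 2^{-k-1}` and `h ≥ h(x_k)`, which gives the lower bound.
-/

open Filter Topology

lemma le_essSup_of_forall_mem_le {α : Type*} [MeasurableSpace α] {μ : Measure α}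
    {f : α → ℝ≥0∞} {s : Set α} {c : ℝ≥0∞} (hs : μ s ≠ 0) (hf : ∀ x ∈ s, c ≤ f x) :
    c ≤ essSup f μ := by
  obtain ⟨x, hx, hle⟩ := Measure.exists_mem_of_measure_ne_zero_of_ae hs
    (ae_restrict_of_ae (ae_le_essSup f))
  exact (hf x hx).trans hle

lemma tendsto_mul_two_rpow_neg_intCast {d : ℝ≥0∞} (hd : d ≠ ⊤) :
    Tendsto (fun k : ℤ => d * 2 ^ (-(k : ℝ))) atTop (𝓝 0) := by
  have h2 : Tendsto (fun k : ℤ => (2 : ℝ≥0∞) ^ (-(k : ℝ))) atTop (𝓝 0) :=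
    (ENNReal.tendsto_rpow_atBot_of_one_lt_base one_lt_two).comp
      (tendsto_neg_atTop_atBot.comp tendsto_intCast_atTop_atTop)
  simpa using ENNReal.Tendsto.const_mul h2 (Or.inr hd)

lemma mul_two_rpow_neg_rpow (d : ℝ≥0∞) {α : ℝ} (hα : 0 ≤ α) (k m : ℝ) :
    (d * 2 ^ (-(k + m))) ^ α = d ^ α * 2 ^ (-m * α) * 2 ^ (-k * α) := by
  rw [ENNReal.mul_rpow_of_nonneg _ _ hα, ← ENNReal.rpow_mul, mul_assoc, ← ENNReal.rpow_add _ _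
    two_ne_zero ofNat_ne_top]
  ring_nf

lemma Int.exists_sub_one_lt_le {x : ℤ → ℝ} {n : ℤ} {t : ℝ} (hnt : x n < t)
    (hex : ∃ k, n ≤ k ∧ t ≤ x k) : ∃ k, n < k ∧ x (k - 1) < t ∧ t ≤ x k := by
  obtain ⟨k, ⟨hnk, htk⟩, hmin⟩ :=
    Int.exists_least_of_bdd (P := fun k => n ≤ k ∧ t ≤ x k) ⟨n, fun _ hk => hk.1⟩ hex
  have hnk' : n < k := hnk.lt_of_ne fun h => (h ▸ hnt).not_ge htk
  refine ⟨k, hnk', not_le.mp fun h => ?_, htk⟩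
  linarith [hmin (k - 1) ⟨by omega, h⟩]

lemma le_iSup_add_one_add_of_lt {f : ℤ → ℝ≥0∞} {n k : ℤ} (hnk : n < k) :
    f k ≤ ⨆ j : ℕ, f (n + 1 + j) :=
  le_iSup_of_le (k - (n + 1)).toNat (le_of_eq (congrArg f (by omega)))

lemma measurableSet_io (a b : EReal) : MeasurableSet (io a b) :=
  measurableSet_Ioo.preimage measurable_coe_real_ereal

lemma Ioo_subset_io {a b : EReal} {c d : ℝ} (hc : c ∈ io a b) (hd : d ∈ io a b) :
    Ioo c d ⊆ io a b := fun _ hz =>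
  ⟨hc.1.trans (EReal.coe_lt_coe_iff.mpr hz.1), (EReal.coe_lt_coe_iff.mpr hz.2).trans hd.2⟩

lemma io_subset_io_left {a a' b : EReal} (h : a ≤ a') : io a' b ⊆ io a b :=
  fun _ hz => ⟨h.trans_lt hz.1, hz.2⟩

section Wstar

variable {a b : EReal} {w : ℝ → ℝ≥0∞}

lemma Wstar_antitone (b : EReal) (w : ℝ → ℝ≥0∞) : Antitone (Wstar b w) :=
  fun _ _ hst => lintegral_mono_set (io_subset_io_left (EReal.coe_le_coe_iff.mpr hst))

lemma Wstar_eq_zero_of_le {t : ℝ} (hbt : b ≤ t) : Wstar b w t = 0 := by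
  have : io t b = ∅ := eq_empty_of_forall_notMem fun _ hz => (hz.1.trans hz.2).not_ge hbt
  rw [Wstar, this, Measure.restrict_empty, lintegral_zero_measure]

lemma Wstar_pos (hw : IsWeight a b w) {t : ℝ} (hat : a ≤ t) (htb : (t : EReal) < b) :
    0 < Wstar b w t := by
  obtain ⟨r, htr, hrb⟩ := EReal.lt_iff_exists_real_btwn.mp htb
  have htr' : t < r := EReal.coe_lt_coe_iff.mp htr
  have hsub : Ioo t r ⊆ Function.support w ∩ io t b := fun z hz =>
    have hz' : z ∈ io t b := ⟨EReal.coe_lt_coe_iff.mpr hz.1,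
      (EReal.coe_lt_coe_iff.mpr hz.2).trans hrb⟩
    ⟨(hw.2 z (io_subset_io_left hat hz')).1.ne', hz'⟩
  rw [Wstar, setLIntegral_pos_iff hw.1]
  refine lt_of_lt_of_le ?_ (measure_mono hsub)
  simpa [Real.volume_Ioo] using htr'

end Wstar

namespace IsDiscretizing

variable {a b : EReal} {w : ℝ → ℝ≥0∞} {N : ℤ} {x : ℤ → ℝ} {d₁ d₂ : ℝ≥0∞}

lemma strictMonoOn (hx : IsDiscretizing a b w N x d₁ d₂) : StrictMonoOn x (Ici N) :=
  strictMonoOn_of_lt_add_one ordConnected_Ici fun k _ hk _ => hx.2.1 k hk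

lemma coe_lt (hx : IsDiscretizing a b w N x d₁ d₂) (hd₁ : d₁ ≠ 0) {k : ℤ} (hk : N ≤ k) :
    (x k : EReal) < b := by
  refine lt_of_not_ge fun hbk => ?_
  have hW := (hx.2.2.2 k hk).1
  rw [Wstar_eq_zero_of_le hbk, nonpos_iff_eq_zero, mul_eq_zero] at hW
  exact hW.elim hd₁ (ENNReal.rpow_pos two_pos ofNat_ne_top).ne'

lemma mem_io (hx : IsDiscretizing a b w N x d₁ d₂) (hd₁ : d₁ ≠ 0) {n k : ℤ} (hn : N ≤ n)
    (hnk : n < k) : x k ∈ io (x n) b :=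
  ⟨EReal.coe_lt_coe_iff.mpr (hx.strictMonoOn hn (mem_Ici.mpr (hn.trans hnk.le)) hnk),
    hx.coe_lt hd₁ (hn.trans hnk.le)⟩

lemma io_subset_io (hx : IsDiscretizing a b w N x d₁ d₂) {n : ℤ} (hn : N ≤ n) :
    io (x n) b ⊆ io a b :=
  io_subset_io_left <| hx.1 ▸
    EReal.coe_le_coe_iff.mpr (hx.strictMonoOn.monotoneOn self_mem_Ici hn hn)

lemma exists_lt_of_Wstar_pos (hx : IsDiscretizing a b w N x d₁ d₂) (hd₂ : d₂ ≠ ⊤) {t : ℝ}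
    (ht : 0 < Wstar b w t) (n : ℤ) :
    ∃ k, n ≤ k ∧ t < x k := by
  obtain ⟨k, hk⟩ := ((eventually_ge_atTop (max n N)).and
    ((tendsto_mul_two_rpow_neg_intCast hd₂).eventually_lt_const ht)).exists
  refine ⟨k, le_of_max_le_left hk.1, lt_of_not_ge fun hkt => ?_⟩
  exact ((Wstar_antitone b w hkt).trans ((hx.2.2.2 k (le_of_max_le_right hk.1)).2)).not_gt hk.2

variable {α : ℝ} {h : ℝ → ℝ≥0∞} {n : ℤ}

lemma le_essSup (hx : IsDiscretizing a b w N x d₁ d₂) (hd₁ : d₁ ≠ 0) (hα : 0 ≤ α)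
    (hh : MonotoneOn h (io a b)) (hn : N ≤ n) {k : ℤ} (hnk : n < k) :
    d₁ ^ α * 2 ^ (-α) * (2 ^ (-(k : ℝ) * α) * h (x k)) ≤
      essSup (fun t => Wstar b w t ^ α * h t) (volume.restrict (io (x n) b)) := by
  have hk := hx.mem_io hd₁ hn hnk
  have hk₁ := hx.mem_io hd₁ hn (hnk.trans (lt_add_one k))
  have hsub : Ioo (x k) (x (k + 1)) ⊆ io (x n) b := Ioo_subset_io hk hk₁
  refine le_essSup_of_forall_mem_le (s := Ioo (x k) (x (k + 1))) ?_ fun t ht => ?_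
  · rw [Measure.restrict_apply measurableSet_Ioo, inter_eq_self_of_subset_left hsub,
      Real.volume_Ioo, ENNReal.ofReal_ne_zero_iff, sub_pos]
    exact hx.2.1 k (hn.trans hnk.le)
  have hW : d₁ * 2 ^ (-((k + 1 : ℤ) : ℝ)) ≤ Wstar b w t :=
    (hx.2.2.2 (k + 1) (by omega)).1.trans (Wstar_antitone b w ht.2.le)
  have hht : h (x k) ≤ h t :=
    hh (hx.io_subset_io hn hk) (hx.io_subset_io hn (hsub ht)) ht.1.le
  calc d₁ ^ α * 2 ^ (-α) * (2 ^ (-(k : ℝ) * α) * h (x k))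
      = (d₁ * 2 ^ (-((k : ℝ) + 1))) ^ α * h (x k) := by
        rw [mul_two_rpow_neg_rpow d₁ hα, neg_one_mul]
        ring
    _ ≤ Wstar b w t ^ α * h t := by
        gcongr
        exact_mod_cast hW

lemma exists_le_of_mem_io (hx : IsDiscretizing a b w N x d₁ d₂) (hw : IsWeight a b w) (hd₁ : d₁ ≠ 0)
    (hd₂ : d₂ ≠ ⊤) (hα : 0 ≤ α) (hh : MonotoneOn h (io a b)) (hn : N ≤ n) {t : ℝ}
    (ht : t ∈ io (x n) b) :
    ∃ k, n < k ∧ Wstar b w t ^ α * h t ≤ d₂ ^ α * 2 ^ α * (2 ^ (-(k : ℝ) * α) * h (x k)) := by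
  have hta := hx.io_subset_io hn ht
  obtain ⟨k, hnk, hk_lt, hk_le⟩ := Int.exists_sub_one_lt_le (EReal.coe_lt_coe_iff.mp ht.1)
    ((hx.exists_lt_of_Wstar_pos hd₂ (Wstar_pos hw hta.1.le ht.2) n).imp
      fun _ hk => ⟨hk.1, hk.2.le⟩)
  have hW : Wstar b w t ≤ d₂ * 2 ^ (-((k - 1 : ℤ) : ℝ)) :=
    (Wstar_antitone b w hk_lt.le).trans (hx.2.2.2 (k - 1) (by omega)).2
  have hht : h t ≤ h (x k) := hh hta (hx.io_subset_io hn (hx.mem_io hd₁ hn hnk)) hk_le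
  refine ⟨k, hnk, ?_⟩
  calc Wstar b w t ^ α * h t ≤ (d₂ * 2 ^ (-((k : ℝ) + -1))) ^ α * h (x k) := by
        gcongr
        exact_mod_cast hW
    _ = d₂ ^ α * 2 ^ α * (2 ^ (-(k : ℝ) * α) * h (x k)) := by
        rw [mul_two_rpow_neg_rpow d₂ hα, neg_neg, one_mul]
        ring

end IsDiscretizing

theorem discretization_essSup_equiv (α : ℝ) (hα : 0 ≤ α) (d₁ d₂ : ℝ≥0∞)
    (hd₁ : 0 < d₁) (hd₂ : d₂ < ⊤) :
    ∃ c₁ c₂ : ℝ≥0∞, 0 < c₁ ∧ c₂ < ⊤ ∧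
      ∀ (a b : EReal), a < b → ∀ w : ℝ → ℝ≥0∞, IsWeight a b w →
        ∀ (N : ℤ) (x : ℤ → ℝ), IsDiscretizing a b w N x d₁ d₂ →
        ∀ n : ℤ, N ≤ n →
        ∀ h : ℝ → ℝ≥0∞, MonotoneOn h (io a b) →
          c₁ * (⨆ j : ℕ, (2 : ℝ≥0∞) ^ (-((n + 1 + j : ℤ) : ℝ) * α) *
                h (x (n + 1 + j))) ≤
              essSup (fun t : ℝ => Wstar b w t ^ α * h t) (volume.restrict (io (x n) b)) ∧
            essSup (fun t : ℝ => Wstar b w t ^ α * h t) (volume.restrict (io (x n) b)) ≤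
              c₂ * ⨆ j : ℕ, (2 : ℝ≥0∞) ^ (-((n + 1 + j : ℤ) : ℝ) * α) *
                h (x (n + 1 + j)) := by
  refine ⟨d₁ ^ α * 2 ^ (-α), d₂ ^ α * 2 ^ α, ?_, ?_, ?_⟩
  · exact ENNReal.mul_pos (ENNReal.rpow_pos_of_nonneg hd₁ hα).ne'
      (ENNReal.rpow_pos two_pos ofNat_ne_top).ne'
  · exact ENNReal.mul_lt_top (ENNReal.rpow_lt_top_of_nonneg hα hd₂.ne)
      (ENNReal.rpow_lt_top_of_nonneg hα ofNat_ne_top)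
  intro a b _ w hw N x hx n hn h hh
  constructor
  · rw [ENNReal.mul_iSup]
    exact iSup_le fun j => IsDiscretizing.le_essSup hx hd₁.ne' hα hh hn (by omega)
  · refine essSup_le_of_ae_le _ ((ae_restrict_mem (measurableSet_io _ _)).mono fun t ht => ?_)
    obtain ⟨k, hnk, hk⟩ := IsDiscretizing.exists_le_of_mem_io hx hw hd₁.ne' hd₂.ne hα hh hn ht
    exact hk.trans (mul_le_mul' le_rfl
      (le_iSup_add_one_add_of_lt (f := fun k : ℤ => 2 ^ (-(k : ℝ) * α) * h (x k)) hnk))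
end
end

section
/- Let 1 ≤ p < ∞, 0 < q, r < ∞, let u, v, w be weights on (a,b), and let {x_k}_{k=N}^∞ ⊂ [a,b] with N ∈ ℤ be a discretizing sequence of W*(t) = ∫_t^b w. For k ≥ N+1 let B(x_{k-1}, x_k) denote the best constant of the local Hardy inequality, i.e. B(x_{k-1}, x_k) := sup over h ∈ 𝔐⁺(x_{k-1}, x_k) of (∫_{x_{k-1}}^{x_k} (∫_{x_{k-1}}^t h(s) ds)^q u(t) dt)^{1/q} / (∫_{x_{k-1}}^{x_k} h(t)^p v(t) dt)^{1/p}. Then there exists a positive constant 𝒞' such that (Σ_{k=N+1}^∞ 2^{-k} (∫_{x_{k-1}}^{x_k} (∫_{x_{k-1}}^t f)^q u(t) dt)^{r/q})^{1/r} ≤ 𝒞' (Σ_{k=N+1}^∞ ∫_{x_{k-1}}^{x_k} f^p v)^{1/p} holds for all f ∈ 𝔐⁺(a,b) if and only if there exists a positive constant C' such that (Σ_{k=N+1}^∞ 2^{-k} a_k^r B(x_{k-1}, x_k)^r)^{1/r} ≤ C' (Σ_{k=N+1}^∞ a_k^p)^{1/p} holds for every sequence of non-negative numbers {a_k}_{k=N+1}^∞.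 Moreover, the best constants satisfy 𝒞' ≈ C'. -/
open MeasureTheory Set ENNReal NNReal

noncomputable section

/-- The left-hand side of the first discretized inequality `(3.3)`. -/
def lhsD1 (N : ℤ) (x : ℤ → ℝ) (q r : ℝ) (u f : ℝ → ℝ≥0∞) : ℝ≥0∞ :=
  (∑' j : ℕ, (2 : ℝ≥0∞) ^ (-((N + 1 + j : ℤ) : ℝ)) *
    (∫⁻ t in Ioo (x (N + j)) (x (N + 1 + j)),
      (∫⁻ s in Ioo (x (N + j)) t, f s) ^ q * u t) ^ (r / q)) ^ (1 / r)

/-- The right-hand side (without the constant) of the discretized inequalities. -/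
def rhsD (N : ℤ) (x : ℤ → ℝ) (p : ℝ) (v f : ℝ → ℝ≥0∞) : ℝ≥0∞ :=
  (∑' j : ℕ, ∫⁻ t in Ioo (x (N + j)) (x (N + 1 + j)), f t ^ p * v t) ^ (1 / p)

/-- `B(y, z)`: the best constant of the local weighted Hardy inequality on `(y, z)`. -/
def Bconst (y z : ℝ) (p q : ℝ) (u v : ℝ → ℝ≥0∞) : ℝ≥0∞ :=
  ⨆ (h : ℝ → ℝ≥0∞) (_ : Measurable h),
    (∫⁻ t in Ioo y z, (∫⁻ s in Ioo y t, h s) ^ q * u t) ^ (1 / q) /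
      (∫⁻ t in Ioo y z, h t ^ p * v t) ^ (1 / p)

/-!
Both best constants coincide. On each block `(x_{k-1}, x_k)` the local Hardy inequality holds
with its best constant `B(x_{k-1}, x_k)`, so the functional inequality follows from the sequence
inequality applied to `a_k = (∫_{x_{k-1}}^{x_k} f^p v)^{1/p}`. Conversely, since the blocks are
disjoint, near-extremal functions of the local Hardy inequalities, normalised so that their
weighted `L^p` norms are the `a_k`, can be glued into a single test function for the functional
inequality; testing the functional inequality on a single block first shows that every
`B(x_{k-1}, x_k)` is finite, so that such near-extremals exist.
-/

open Function

def hardyLeft (y z q : ℝ) (u f : ℝ → ℝ≥0∞) : ℝ≥0∞ :=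
  ∫⁻ t in Ioo y z, (∫⁻ s in Ioo y t, f s) ^ q * u t

def hardyRight (y z p : ℝ) (v f : ℝ → ℝ≥0∞) : ℝ≥0∞ :=
  ∫⁻ t in Ioo y z, f t ^ p * v t

section LocalHardy

variable {y z p q : ℝ} {u v f g : ℝ → ℝ≥0∞}

theorem Bconst_eq_iSup : Bconst y z p q u v = ⨆ (h : ℝ → ℝ≥0∞) (_ : Measurable h),
    hardyLeft y z q u h ^ (1 / q) / hardyRight y z p v h ^ (1 / p) := rfl

theorem hardyLeft_rpow_div_le_Bconst (hf : Measurable f) :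
    hardyLeft y z q u f ^ (1 / q) / hardyRight y z p v f ^ (1 / p) ≤ Bconst y z p q u v :=
  le_iSup₂ (f := fun h (_ : Measurable h) =>
    hardyLeft y z q u h ^ (1 / q) / hardyRight y z p v h ^ (1 / p)) f hf

theorem hardyLeft_congr (h : EqOn f g (Ioo y z)) : hardyLeft y z q u f = hardyLeft y z q u g :=
  setLIntegral_congr_fun measurableSet_Ioo fun _ ht => by
    rw [setLIntegral_congr_fun measurableSet_Ioo fun _ hs => h (Ioo_subset_Ioo_right ht.2.le hs)]

theorem hardyRight_congr (h : EqOn f g (Ioo y z)) : hardyRight y z p v f = hardyRight y z p v g :=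
  setLIntegral_congr_fun measurableSet_Ioo fun _ ht => by rw [h ht]

theorem hardyLeft_indicator : hardyLeft y z q u ((Ioo y z).indicator f) = hardyLeft y z q u f :=
  hardyLeft_congr fun _ ht => indicator_of_mem ht f

theorem hardyRight_indicator :
    hardyRight y z p v ((Ioo y z).indicator f) = hardyRight y z p v f :=
  hardyRight_congr fun _ ht => indicator_of_mem ht f

theorem hardyRight_eq_zero (hp : 0 < p) (h : EqOn f 0 (Ioo y z)) : hardyRight y z p v f = 0 := by
  rw [hardyRight_congr h]
  simp [hardyRight, hp]

theorem hardyLeft_const_mul {c : ℝ≥0∞} (hq : 0 ≤ q) (hc : c ≠ ⊤) :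
    hardyLeft y z q u (fun t => c * f t) = c ^ q * hardyLeft y z q u f := by
  simp only [hardyLeft, lintegral_const_mul' _ _ hc, ENNReal.mul_rpow_of_nonneg _ _ hq, mul_assoc]
  exact lintegral_const_mul' _ _ (ENNReal.rpow_ne_top_of_nonneg hq hc)

theorem hardyRight_const_mul {c : ℝ≥0∞} (hp : 0 ≤ p) (hc : c ≠ ⊤) :
    hardyRight y z p v (fun t => c * f t) = c ^ p * hardyRight y z p v f := by
  simp only [hardyRight, ENNReal.mul_rpow_of_nonneg _ _ hp, mul_assoc]
  exact lintegral_const_mul' _ _ (ENNReal.rpow_ne_top_of_nonneg hp hc)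

theorem hardyLeft_eq_zero_of_hardyRight_eq_zero (hp : 0 < p) (hq : 0 < q) (hf : Measurable f)
    (hv : Measurable v) (hv₀ : ∀ t ∈ Ioo y z, v t ≠ 0) (h : hardyRight y z p v f = 0) :
    hardyLeft y z q u f = 0 := by
  have hf₀ : ∀ᵐ s ∂volume.restrict (Ioo y z), f s = 0 := by
    filter_upwards [(lintegral_eq_zero_iff (by fun_prop)).1 h, ae_restrict_mem measurableSet_Ioo]
      with s hs hsJ
    simpa [hv₀ s hsJ, hp.not_gt, hp] using hs
  refine (setLIntegral_congr_fun measurableSet_Ioo fun t ht => ?_).trans lintegral_zero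
  rw [lintegral_congr_ae (ae_restrict_of_ae_restrict_of_subset (Ioo_subset_Ioo_right ht.2.le) hf₀)]
  simp [hq]

theorem hardyLeft_rpow_le_Bconst_mul (hp : 0 < p) (hq : 0 < q) (hf : Measurable f)
    (hv : Measurable v) (hv₀ : ∀ t ∈ Ioo y z, v t ≠ 0) (hR : hardyRight y z p v f ≠ ⊤) :
    hardyLeft y z q u f ^ (1 / q) ≤ Bconst y z p q u v * hardyRight y z p v f ^ (1 / p) := by
  rcases eq_or_ne (hardyRight y z p v f) 0 with hR₀ | hR₀
  · simp [hardyLeft_eq_zero_of_hardyRight_eq_zero hp hq hf hv hv₀ hR₀, hq]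
  · rw [← ENNReal.div_le_iff (ENNReal.rpow_pos (pos_iff_ne_zero.2 hR₀) hR).ne'
      (ENNReal.rpow_ne_top_of_nonneg (by positivity) hR)]
    exact hardyLeft_rpow_div_le_Bconst hf

theorem mul_Bconst_le {c K : ℝ≥0∞} (h : ∀ f, Measurable f →
    c * hardyLeft y z q u f ^ (1 / q) ≤ K * hardyRight y z p v f ^ (1 / p)) :
    c * Bconst y z p q u v ≤ K := by
  simp only [Bconst_eq_iSup, ENNReal.mul_iSup]
  refine iSup₂_le fun f hf => ?_
  rw [← mul_div_assoc]
  exact ENNReal.div_le_of_le_mul (h f hf)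

theorem exists_hardyRight_eq_and_hardyLeft_eq (hp : 0 < p) (hq : 0 < q) (hf : Measurable f)
    (hR₀ : hardyRight y z p v f ≠ 0) (hR : hardyRight y z p v f ≠ ⊤) {α : ℝ≥0∞} (hα : α ≠ ⊤) :
    ∃ g, Measurable g ∧ (∀ t ∉ Ioo y z, g t = 0) ∧ hardyRight y z p v g = α ^ p ∧
      hardyLeft y z q u g ^ (1 / q) =
        α * (hardyLeft y z q u f ^ (1 / q) / hardyRight y z p v f ^ (1 / p)) := by
  set Q := hardyRight y z p v f ^ (1 / p) with hQ
  have hQ₀ : Q ≠ 0 := (ENNReal.rpow_pos (pos_iff_ne_zero.2 hR₀) hR).ne'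
  have hQt : Q ≠ ⊤ := ENNReal.rpow_ne_top_of_nonneg (by positivity) hR
  have hc : α / Q ≠ ⊤ := ENNReal.div_ne_top hα hQ₀
  refine ⟨(Ioo y z).indicator fun t => α / Q * f t, (hf.const_mul _).indicator measurableSet_Ioo,
    fun t ht => indicator_of_notMem ht _, ?_, ?_⟩
  · rw [hardyRight_indicator, hardyRight_const_mul hp.le hc, ← ENNReal.rpow_inv_rpow hp.ne'
      (hardyRight y z p v f), ← one_div, ← hQ, ← ENNReal.mul_rpow_of_nonneg _ _ hp.le,
      ENNReal.div_mul_cancel hQ₀ hQt]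
  · rw [hardyLeft_indicator, hardyLeft_const_mul hq.le hc,
      ENNReal.mul_rpow_of_nonneg _ _ (by positivity), one_div, ENNReal.rpow_rpow_inv hq.ne',
      ← one_div]
    simp only [div_eq_mul_inv]
    ring

theorem exists_mul_Bconst_le_hardyLeft (hp : 0 < p) (hq : 0 < q) {θ α : ℝ≥0∞} (hθ : θ < 1)
    (hα : α ≠ ⊤) (hB : Bconst y z p q u v ≠ ⊤) :
    ∃ g, Measurable g ∧ (∀ t ∉ Ioo y z, g t = 0) ∧ hardyRight y z p v g ≤ α ^ p ∧
      θ * α * Bconst y z p q u v ≤ hardyLeft y z q u g ^ (1 / q) := by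
  set B := Bconst y z p q u v
  rcases eq_or_ne (α * B) 0 with hαB | hαB
  · refine ⟨0, measurable_const, fun _ _ => rfl, ?_, ?_⟩
    · rw [hardyRight_eq_zero hp fun _ _ => rfl]
      exact zero_le
    · rw [mul_assoc, hαB, mul_zero]
      exact zero_le
  obtain ⟨f, hf, hθf⟩ : ∃ f, Measurable f ∧
      θ * B < hardyLeft y z q u f ^ (1 / q) / hardyRight y z p v f ^ (1 / p) := by
    have : θ * B < B := by
      simpa only [mul_comm B, one_mul] using
        ENNReal.mul_lt_mul_right (right_ne_zero_of_mul hαB) hB hθ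
    simpa only [B, Bconst_eq_iSup, lt_iSup_iff, exists_prop] using this
  have hfB : hardyLeft y z q u f ^ (1 / q) / hardyRight y z p v f ^ (1 / p) ≤ B :=
    hardyLeft_rpow_div_le_Bconst hf
  have hR₀ : hardyRight y z p v f ≠ 0 := by
    intro h
    rw [h, ENNReal.zero_rpow_of_pos (by positivity)] at hθf hfB
    rcases eq_or_ne (hardyLeft y z q u f ^ (1 / q)) 0 with hL | hL
    · rw [hL, ENNReal.zero_div] at hθf
      exact ENNReal.not_lt_zero hθf
    · exact hB (top_le_iff.1 (ENNReal.div_zero hL ▸ hfB))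
  have hR : hardyRight y z p v f ≠ ⊤ := by
    intro h
    rw [h, ENNReal.top_rpow_of_pos (by positivity), ENNReal.div_top] at hθf
    exact ENNReal.not_lt_zero hθf
  obtain ⟨g, hg, hg₀, hgR, hgL⟩ := exists_hardyRight_eq_and_hardyLeft_eq (u := u) hp hq hf hR₀ hR hα
  refine ⟨g, hg, hg₀, hgR.le, ?_⟩
  rw [hgL, mul_comm θ α, mul_assoc]
  gcongr

end LocalHardy

theorem sInf_le_sInf_of_forall_lt_mem {α : Type*} [CompleteLinearOrder α] [DenselyOrdered α]
    {S T : Set α} (h : ∀ C ∈ S, ∀ D, C < D → D ∈ T) : sInf T ≤ sInf S :=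
  le_of_forall_gt_imp_ge_of_dense fun _ hD =>
    let ⟨C, hC, hCD⟩ := sInf_lt_iff.1 hD
    sInf_le (h C hC _ hCD)

theorem tsum_apply_eq_of_pairwise_disjoint {α ι : Type*} {J : ι → Set α}
    (hJ : Pairwise (Disjoint on J)) {g : ι → α → ℝ≥0∞} (hg : ∀ i, ∀ t ∉ J i, g i t = 0)
    {j : ι} {t : α} (ht : t ∈ J j) : ∑' i, g i t = g j t :=
  tsum_eq_single j fun _ hij => hg _ t fun hti => Set.disjoint_left.1 (hJ hij) hti ht

theorem pairwise_disjoint_Ioo_of_le_succ {N : ℤ} {x : ℤ → ℝ}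
    (hx : ∀ k : ℤ, N ≤ k → x k ≤ x (k + 1)) :
    Pairwise (Disjoint on fun j : ℕ => Ioo (x (N + j)) (x (N + 1 + j))) := by
  have hmono : Monotone fun j : ℕ => x (N + j) := monotone_nat_of_le_succ fun j => by
    simpa only [Nat.cast_succ, add_assoc] using hx (N + j) (by omega)
  convert hmono.pairwise_disjoint_on_Ioo_succ using 5 with j
  rw [Order.succ_eq_add_one]
  push_cast
  ring

theorem IsDiscretizing.Ioo_subset_io {a b : EReal} {w : ℝ → ℝ≥0∞} {N : ℤ} {x : ℤ → ℝ}
    {d₁ d₂ : ℝ≥0∞} (hx : IsDiscretizing a b w N x d₁ d₂) (j : ℕ) :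
    Ioo (x (N + j)) (x (N + 1 + j)) ⊆ io a b := fun _ ht =>
  ⟨(hx.2.2.1 (N + j) (by omega)).1.trans_lt (EReal.coe_lt_coe_iff.2 ht.1),
    (EReal.coe_lt_coe_iff.2 ht.2).trans_le (hx.2.2.1 (N + 1 + j) (by omega)).2⟩

def HardyFunIneq (N : ℤ) (x : ℤ → ℝ) (p q r : ℝ) (u v : ℝ → ℝ≥0∞) (C : ℝ≥0∞) : Prop :=
  ∀ f : ℝ → ℝ≥0∞, Measurable f → lhsD1 N x q r u f ≤ C * rhsD N x p v f

def HardySeqIneq (N : ℤ) (x : ℤ → ℝ) (p q r : ℝ) (u v : ℝ → ℝ≥0∞) (C : ℝ≥0∞) : Prop :=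
  ∀ a : ℕ → ℝ≥0,
    (∑' k : ℕ, (2 : ℝ≥0∞) ^ (-((N + 1 + k : ℤ) : ℝ)) * (a k : ℝ≥0∞) ^ r *
        Bconst (x (N + k)) (x (N + 1 + k)) p q u v ^ r) ^ (1 / r) ≤
      C * (∑' k : ℕ, (a k : ℝ≥0∞) ^ p) ^ (1 / p)

section Discrete

variable {N : ℤ} {x : ℤ → ℝ} {p q r : ℝ} {u v : ℝ → ℝ≥0∞} {C D : ℝ≥0∞}

theorem lhsD1_eq_tsum_hardyLeft (f : ℝ → ℝ≥0∞) : lhsD1 N x q r u f =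
    (∑' j : ℕ, (2 : ℝ≥0∞) ^ (-((N + 1 + j : ℤ) : ℝ)) *
      hardyLeft (x (N + j)) (x (N + 1 + j)) q u f ^ (r / q)) ^ (1 / r) := rfl

theorem rhsD_eq_tsum_hardyRight (f : ℝ → ℝ≥0∞) :
    rhsD N x p v f = (∑' j : ℕ, hardyRight (x (N + j)) (x (N + 1 + j)) p v f) ^ (1 / p) := rfl

theorem HardySeqIneq.mono (h : HardySeqIneq N x p q r u v C) (hCD : C ≤ D) :
    HardySeqIneq N x p q r u v D := fun a => (h a).trans (by gcongr)

theorem hardySeqIneq_top (hp : 0 < p) (hr : 0 < r) : HardySeqIneq N x p q r u v ⊤ := by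
  intro a
  rcases eq_or_ne (∑' k : ℕ, (a k : ℝ≥0∞) ^ p) 0 with h₀ | h₀
  · have ha : ∀ k, (a k : ℝ≥0∞) = 0 := fun k => by
      simpa [hp, hp.not_gt] using ENNReal.tsum_eq_zero.1 h₀ k
    simp [ha, hr]
  · rw [ENNReal.top_mul (by simp [h₀, hp, hp.le])]
    exact le_top

theorem rpow_mul_hardyLeft_le_of_hardyFunIneq (hp : 0 < p) (hq : 0 < q) (hr : 0 < r)
    (hdisj : Pairwise (Disjoint on fun j : ℕ => Ioo (x (N + j)) (x (N + 1 + j))))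
    (hC : HardyFunIneq N x p q r u v C) (j : ℕ) {h : ℝ → ℝ≥0∞} (hh : Measurable h)
    (hh₀ : ∀ t ∉ Ioo (x (N + j)) (x (N + 1 + j)), h t = 0) :
    ((2 : ℝ≥0∞) ^ (-((N + 1 + j : ℤ) : ℝ))) ^ (1 / r) *
        hardyLeft (x (N + j)) (x (N + 1 + j)) q u h ^ (1 / q) ≤
      C * hardyRight (x (N + j)) (x (N + 1 + j)) p v h ^ (1 / p) := by
  have hR : ∀ i ≠ j, hardyRight (x (N + i)) (x (N + 1 + i)) p v h = 0 := fun i hij =>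
    hardyRight_eq_zero hp fun t ht => hh₀ t fun htj => Set.disjoint_left.1 (hdisj hij) ht htj
  calc _ = ((2 : ℝ≥0∞) ^ (-((N + 1 + j : ℤ) : ℝ)) *
        hardyLeft (x (N + j)) (x (N + 1 + j)) q u h ^ (r / q)) ^ (1 / r) := by
        rw [ENNReal.mul_rpow_of_nonneg _ _ (by positivity),
          ← ENNReal.rpow_mul (hardyLeft _ _ _ _ _)]
        congr 2
        field_simp
    _ ≤ lhsD1 N x q r u h := by
        rw [lhsD1_eq_tsum_hardyLeft]
        gcongr
        exact ENNReal.le_tsum j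
    _ ≤ C * rhsD N x p v h := hC h hh
    _ = _ := by rw [rhsD_eq_tsum_hardyRight, tsum_eq_single j hR]

theorem Bconst_ne_top_of_hardyFunIneq (hp : 0 < p) (hq : 0 < q) (hr : 0 < r)
    (hdisj : Pairwise (Disjoint on fun j : ℕ => Ioo (x (N + j)) (x (N + 1 + j))))
    (hC : HardyFunIneq N x p q r u v C) (hCt : C ≠ ⊤) (j : ℕ) :
    Bconst (x (N + j)) (x (N + 1 + j)) p q u v ≠ ⊤ := by
  have hB : ((2 : ℝ≥0∞) ^ (-((N + 1 + j : ℤ) : ℝ))) ^ (1 / r) *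
      Bconst (x (N + j)) (x (N + 1 + j)) p q u v ≤ C := mul_Bconst_le fun f hf => by
    simpa only [hardyLeft_indicator, hardyRight_indicator] using
      rpow_mul_hardyLeft_le_of_hardyFunIneq hp hq hr hdisj hC j
        (hf.indicator measurableSet_Ioo) fun t ht => indicator_of_notMem ht f
  refine fun hBt => hCt (top_le_iff.1 (hB.trans_eq' ?_))
  rw [hBt, ENNReal.mul_top]
  exact (ENNReal.rpow_pos (ENNReal.rpow_pos (by norm_num) (by norm_num)) (by simp)).ne'

theorem hardySeqIneq_of_hardyFunIneq (hp : 0 < p) (hq : 0 < q) (hr : 0 < r)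
    (hdisj : Pairwise (Disjoint on fun j : ℕ => Ioo (x (N + j)) (x (N + 1 + j))))
    (hC : HardyFunIneq N x p q r u v C) : HardySeqIneq N x p q r u v C := by
  rcases eq_or_ne C ⊤ with rfl | hCt
  · exact hardySeqIneq_top hp hr
  intro a
  rw [one_div, ENNReal.rpow_inv_le_iff hr]
  refine ENNReal.le_of_forall_lt_one_mul_le fun θ hθ => ?_
  choose g hg hg₀ hgR hgL using fun j : ℕ => exists_mul_Bconst_le_hardyLeft (u := u) (v := v)
    hp hq (ENNReal.rpow_lt_one hθ (inv_pos.2 hr)) ENNReal.coe_ne_top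
    (Bconst_ne_top_of_hardyFunIneq hp hq hr hdisj hC hCt j)
  set f : ℝ → ℝ≥0∞ := fun t => ∑' i, g i t
  have hfg : ∀ j : ℕ, EqOn f (g j) (Ioo (x (N + j)) (x (N + 1 + j))) := fun j _ ht =>
    tsum_apply_eq_of_pairwise_disjoint hdisj hg₀ ht
  have hf : Measurable f := Measurable.tsum hg
  have hRf : rhsD N x p v f ≤ (∑' k : ℕ, (a k : ℝ≥0∞) ^ p) ^ (1 / p) := by
    rw [rhsD_eq_tsum_hardyRight]
    gcongr with j
    exact (hardyRight_congr (hfg j)).trans_le (hgR j)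
  calc θ * ∑' k : ℕ, (2 : ℝ≥0∞) ^ (-((N + 1 + k : ℤ) : ℝ)) * (a k : ℝ≥0∞) ^ r *
        Bconst (x (N + k)) (x (N + 1 + k)) p q u v ^ r
      = ∑' k : ℕ, (2 : ℝ≥0∞) ^ (-((N + 1 + k : ℤ) : ℝ)) *
          (θ ^ r⁻¹ * a k * Bconst (x (N + k)) (x (N + 1 + k)) p q u v) ^ r := by
        rw [← ENNReal.tsum_mul_left]
        congr 1 with k
        rw [ENNReal.mul_rpow_of_nonneg _ _ hr.le, ENNReal.mul_rpow_of_nonneg _ _ hr.le,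
          ENNReal.rpow_inv_rpow hr.ne']
        ring
    _ ≤ ∑' k : ℕ, (2 : ℝ≥0∞) ^ (-((N + 1 + k : ℤ) : ℝ)) *
          hardyLeft (x (N + k)) (x (N + 1 + k)) q u (g k) ^ (r / q) := by
        gcongr with k
        rw [← one_div_mul_eq_div, ENNReal.rpow_mul]
        gcongr
        exact hgL k
    _ = lhsD1 N x q r u f ^ r := by
        rw [lhsD1_eq_tsum_hardyLeft, one_div, ENNReal.rpow_inv_rpow hr.ne']
        congr 1 with k
        rw [hardyLeft_congr (hfg k)]
    _ ≤ (C * (∑' k : ℕ, (a k : ℝ≥0∞) ^ p) ^ (1 / p)) ^ r := by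
        gcongr
        exact (hC f hf).trans (by gcongr)

theorem hardyFunIneq_of_hardySeqIneq (hp : 0 < p) (hq : 0 < q) (hr : 0 < r) (hv : Measurable v)
    (hv₀ : ∀ j : ℕ, ∀ t ∈ Ioo (x (N + j)) (x (N + 1 + j)), v t ≠ 0) (hC₀ : C ≠ 0)
    (hC : HardySeqIneq N x p q r u v C) : HardyFunIneq N x p q r u v C := by
  intro f hf
  by_cases hR : ∃ j : ℕ, hardyRight (x (N + j)) (x (N + 1 + j)) p v f = ⊤
  · rw [rhsD_eq_tsum_hardyRight, ENNReal.tsum_eq_top_of_eq_top hR,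
      ENNReal.top_rpow_of_pos (by positivity), ENNReal.mul_top hC₀]
    exact le_top
  push Not at hR
  set a : ℕ → ℝ≥0 := fun j => (hardyRight (x (N + j)) (x (N + 1 + j)) p v f ^ (1 / p)).toNNReal
  have ha : ∀ j, (a j : ℝ≥0∞) = hardyRight (x (N + j)) (x (N + 1 + j)) p v f ^ (1 / p) :=
    fun j => ENNReal.coe_toNNReal (ENNReal.rpow_ne_top_of_nonneg (by positivity) (hR j))
  calc lhsD1 N x q r u f
      ≤ (∑' k : ℕ, (2 : ℝ≥0∞) ^ (-((N + 1 + k : ℤ) : ℝ)) * (a k : ℝ≥0∞) ^ r *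
          Bconst (x (N + k)) (x (N + 1 + k)) p q u v ^ r) ^ (1 / r) := by
        rw [lhsD1_eq_tsum_hardyLeft]
        refine ENNReal.rpow_le_rpow (ENNReal.tsum_le_tsum fun k => ?_) (by positivity)
        rw [mul_assoc, ← ENNReal.mul_rpow_of_nonneg _ _ hr.le, ← one_div_mul_eq_div,
          ENNReal.rpow_mul, mul_comm (a k : ℝ≥0∞), ha]
        gcongr
        exact hardyLeft_rpow_le_Bconst_mul hp hq hf hv (hv₀ k) (hR k)
    _ ≤ C * (∑' k : ℕ, (a k : ℝ≥0∞) ^ p) ^ (1 / p) := hC a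
    _ = C * rhsD N x p v f := by
        simp only [ha, one_div, ENNReal.rpow_inv_rpow hp.ne', rhsD_eq_tsum_hardyRight]

end Discrete

theorem discrete_reduction_first_general (p q r : ℝ) (hp : 1 ≤ p) (hq : 0 < q)
    (hr : 0 < r) (d₁ d₂ : ℝ≥0∞) :
    ∃ c₁ c₂ : ℝ≥0∞, 0 < c₁ ∧ c₂ < ⊤ ∧
      ∀ (a b : EReal), a < b → ∀ u v w : ℝ → ℝ≥0∞,
        IsWeight a b u → IsWeight a b v → IsWeight a b w →
        ∀ (N : ℤ) (x : ℤ → ℝ), IsDiscretizing a b w N x d₁ d₂ →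
        ((∃ C' : ℝ≥0∞, 0 < C' ∧ C' < ⊤ ∧ ∀ f : ℝ → ℝ≥0∞, Measurable f →
            lhsD1 N x q r u f ≤ C' * rhsD N x p v f) ↔
          (∃ C : ℝ≥0∞, 0 < C ∧ C < ⊤ ∧ ∀ aseq : ℕ → ℝ≥0,
            (∑' k : ℕ, (2 : ℝ≥0∞) ^ (-((N + 1 + k : ℤ) : ℝ)) * (aseq k : ℝ≥0∞) ^ r *
                Bconst (x (N + k)) (x (N + 1 + k)) p q u v ^ r) ^ (1 / r) ≤
              C * (∑' k : ℕ, (aseq k : ℝ≥0∞) ^ p) ^ (1 / p))) ∧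
        c₁ * sInf {C : ℝ≥0∞ | ∀ aseq : ℕ → ℝ≥0,
              (∑' k : ℕ, (2 : ℝ≥0∞) ^ (-((N + 1 + k : ℤ) : ℝ)) * (aseq k : ℝ≥0∞) ^ r *
                  Bconst (x (N + k)) (x (N + 1 + k)) p q u v ^ r) ^ (1 / r) ≤
                C * (∑' k : ℕ, (aseq k : ℝ≥0∞) ^ p) ^ (1 / p)} ≤
            sInf {C' : ℝ≥0∞ | ∀ f : ℝ → ℝ≥0∞, Measurable f →
              lhsD1 N x q r u f ≤ C' * rhsD N x p v f} ∧
        sInf {C' : ℝ≥0∞ | ∀ f : ℝ → ℝ≥0∞, Measurable f →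
            lhsD1 N x q r u f ≤ C' * rhsD N x p v f} ≤
          c₂ * sInf {C : ℝ≥0∞ | ∀ aseq : ℕ → ℝ≥0,
              (∑' k : ℕ, (2 : ℝ≥0∞) ^ (-((N + 1 + k : ℤ) : ℝ)) * (aseq k : ℝ≥0∞) ^ r *
                  Bconst (x (N + k)) (x (N + 1 + k)) p q u v ^ r) ^ (1 / r) ≤
                C * (∑' k : ℕ, (aseq k : ℝ≥0∞) ^ p) ^ (1 / p)} := by
  refine ⟨1, 1, one_pos, one_lt_top, fun a b _ u v w _ hv _ N x hx => ?_⟩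
  have hp₀ : 0 < p := by linarith
  have hdisj := pairwise_disjoint_Ioo_of_le_succ fun k hk => (hx.2.1 k hk).le
  have hv₀ : ∀ j : ℕ, ∀ t ∈ Ioo (x (N + j)) (x (N + 1 + j)), v t ≠ 0 := fun j t ht =>
    (hv.2 t (hx.Ioo_subset_io j ht)).1.ne'
  have hFS : ∀ C, HardyFunIneq N x p q r u v C → HardySeqIneq N x p q r u v C :=
    fun C => hardySeqIneq_of_hardyFunIneq hp₀ hq hr hdisj
  have hSF : ∀ C, C ≠ 0 → HardySeqIneq N x p q r u v C → HardyFunIneq N x p q r u v C :=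
    fun C => hardyFunIneq_of_hardySeqIneq hp₀ hq hr hv.1 hv₀
  refine ⟨⟨fun ⟨C, hC₀, hCt, hC⟩ => ⟨C, hC₀, hCt, hFS C hC⟩,
    fun ⟨C, hC₀, hCt, hC⟩ => ⟨C, hC₀, hCt, hSF C hC₀.ne' hC⟩⟩, ?_, ?_⟩
  · rw [one_mul]
    exact sInf_le_sInf hFS
  · rw [one_mul]
    exact sInf_le_sInf_of_forall_lt_mem fun C hC D hCD =>
      hSF D (pos_of_gt hCD).ne' (HardySeqIneq.mono hC hCD.le)

theorem discrete_reduction_first (p q r : ℝ) (hp : 1 ≤ p) (hq : 0 < q)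
    (hr : 0 < r) (d₁ d₂ : ℝ≥0∞) (hd₁ : 0 < d₁) (hd₂ : d₂ < ⊤) :
    ∃ c₁ c₂ : ℝ≥0∞, 0 < c₁ ∧ c₂ < ⊤ ∧
      ∀ (a b : EReal), a < b → ∀ u v w : ℝ → ℝ≥0∞,
        IsWeight a b u → IsWeight a b v → IsWeight a b w →
        ∀ (N : ℤ) (x : ℤ → ℝ), IsDiscretizing a b w N x d₁ d₂ →
        ((∃ C' : ℝ≥0∞, 0 < C' ∧ C' < ⊤ ∧ ∀ f : ℝ → ℝ≥0∞, Measurable f →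
            lhsD1 N x q r u f ≤ C' * rhsD N x p v f) ↔
          (∃ C : ℝ≥0∞, 0 < C ∧ C < ⊤ ∧ ∀ aseq : ℕ → ℝ≥0,
            (∑' k : ℕ, (2 : ℝ≥0∞) ^ (-((N + 1 + k : ℤ) : ℝ)) * (aseq k : ℝ≥0∞) ^ r *
                Bconst (x (N + k)) (x (N + 1 + k)) p q u v ^ r) ^ (1 / r) ≤
              C * (∑' k : ℕ, (aseq k : ℝ≥0∞) ^ p) ^ (1 / p))) ∧
        c₁ * sInf {C : ℝ≥0∞ | ∀ aseq : ℕ → ℝ≥0,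
              (∑' k : ℕ, (2 : ℝ≥0∞) ^ (-((N + 1 + k : ℤ) : ℝ)) * (aseq k : ℝ≥0∞) ^ r *
                  Bconst (x (N + k)) (x (N + 1 + k)) p q u v ^ r) ^ (1 / r) ≤
                C * (∑' k : ℕ, (aseq k : ℝ≥0∞) ^ p) ^ (1 / p)} ≤
            sInf {C' : ℝ≥0∞ | ∀ f : ℝ → ℝ≥0∞, Measurable f →
              lhsD1 N x q r u f ≤ C' * rhsD N x p v f} ∧
        sInf {C' : ℝ≥0∞ | ∀ f : ℝ → ℝ≥0∞, Measurable f →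
            lhsD1 N x q r u f ≤ C' * rhsD N x p v f} ≤
          c₂ * sInf {C : ℝ≥0∞ | ∀ aseq : ℕ → ℝ≥0,
              (∑' k : ℕ, (2 : ℝ≥0∞) ^ (-((N + 1 + k : ℤ) : ℝ)) * (aseq k : ℝ≥0∞) ^ r *
                  Bconst (x (N + k)) (x (N + 1 + k)) p q u v ^ r) ^ (1 / r) ≤
                C * (∑' k : ℕ, (aseq k : ℝ≥0∞) ^ p) ^ (1 / p)} :=
  discrete_reduction_first_general p q r hp hq hr d₁ d₂
end
end

section
/- Let 1 ≤ p < ∞, 0 < q, r < ∞, let u, v, w be weights on (a,b), and let {x_k}_{k=N}^∞ ⊂ [a,b] with N ∈ ℤ be a discretizing sequence of W*(t) = ∫_t^b w. Then there exists a positive constant 𝒞'' such that (Σ_{k=N+1}^∞ 2^{-k} (∫_a^{x_k} f)^r (∫_{x_k}^{x_{k+1}} u)^{r/q})^{1/r} ≤ 𝒞'' (Σ_{k=N+1}^∞ ∫_{x_{k-1}}^{x_k} f^p v)^{1/p} holds for all f ∈ 𝔐⁺(a,b) if and only if there exists a positive constant C'' such that (Σ_{k=N+1}^∞ 2^{-k}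 (∫_{x_k}^{x_{k+1}} u)^{r/q} (Σ_{j=N+1}^k a_j V_p(x_{j-1}, x_j))^r)^{1/r} ≤ C'' (Σ_{k=N+1}^∞ a_k^p)^{1/p} holds for every sequence of non-negative numbers {a_k}_{k=N+1}^∞. Moreover, the best constants satisfy 𝒞'' ≈ C''. -/
open MeasureTheory Set ENNReal NNReal

noncomputable section

/-- `V_p(x, y)` from the paper. -/
def Vp (p : ℝ) (v : ℝ → ℝ≥0∞) (x y : EReal) : ℝ≥0∞ :=
  if p = 1 then essSup (fun s => (v s)⁻¹) (volume.restrict (io x y))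
  else (∫⁻ s in io x y, v s ^ (-(1 / (p - 1)))) ^ ((p - 1) / p)

/-- The left-hand side of the second discretized inequality `(3.4)`. -/
def lhsD2 (a : EReal) (N : ℤ) (x : ℤ → ℝ) (q r : ℝ) (u f : ℝ → ℝ≥0∞) : ℝ≥0∞ :=
  (∑' j : ℕ, (2 : ℝ≥0∞) ^ (-((N + 1 + j : ℤ) : ℝ)) *
    (∫⁻ s in io a (x (N + 1 + j)), f s) ^ r *
    (∫⁻ t in Ioo (x (N + 1 + j)) (x (N + 2 + j)), u t) ^ (r / q)) ^ (1 / r)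

/-- The left-hand side of the discrete inequality `(3.6)`. -/
def lhsSeq (N : ℤ) (x : ℤ → ℝ) (p q r : ℝ) (u v : ℝ → ℝ≥0∞) (aseq : ℕ → ℝ≥0) : ℝ≥0∞ :=
  (∑' k : ℕ, (2 : ℝ≥0∞) ^ (-((N + 1 + k : ℤ) : ℝ)) *
    (∫⁻ t in Ioo (x (N + 1 + k)) (x (N + 2 + k)), u t) ^ (r / q) *
    (∑ j ∈ Finset.range (k + 1),
      (aseq j : ℝ≥0∞) * Vp p v (x (N + j)) (x (N + 1 + j))) ^ r) ^ (1 / r)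


/-!
Both inequalities are the same functional `hardySum` of block data, taken of the block integrals
`∫_{I_j} f` on the function side and of `a_j V_p(I_j)` on the sequence side, where
`I_j = (x_{N+j}, x_{N+j+1})`. Hölder's inequality `∫_{I_j} f ≤ ‖f‖_{L^p(v, I_j)} V_p(I_j)` with
`a_j = ‖f‖_{L^p(v, I_j)}` turns the sequence inequality into the function inequality. Conversely,
`V_p(I_j)` is the supremum of `∫_{I_j} g` over `‖g‖_{L^p(v, I_j)} ≤ 1`, so gluing near-extremal
functions `g_j`, scaled by `a_j`, into one test function turns the function inequality into the
sequence inequality; testing a single block first shows that every `V_p(I_j)` is finite once the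
constant is. Both transfers keep the constant, so the best constants coincide.
-/

theorem ENNReal.rpow_add_one {x : ℝ≥0∞} (h0 : x ≠ 0) (htop : x ≠ ⊤) (y : ℝ) :
    x ^ (y + 1) = x ^ y * x := by
  rw [ENNReal.rpow_add _ _ h0 htop, ENNReal.rpow_one]

def hardySum (r : ℝ) (w b : ℕ → ℝ≥0∞) : ℝ≥0∞ :=
  (∑' k, w k * (∑ j ∈ Finset.range (k + 1), b j) ^ r) ^ (1 / r)

section HardySum

variable {r : ℝ} {w b b' : ℕ → ℝ≥0∞}

lemma hardySum_mono (hr : 0 ≤ r) (h : ∀ j, b j ≤ b' j) : hardySum r w b ≤ hardySum r w b' := by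
  unfold hardySum
  gcongr with k j
  exact h j

lemma hardySum_const_mul (hr : 0 < r) (c : ℝ≥0∞) :
    hardySum r w (fun j => c * b j) = c * hardySum r w b := by
  have hc : c = (c ^ r) ^ (1 / r) := by
    rw [← ENNReal.rpow_mul, mul_one_div_cancel hr.ne', ENNReal.rpow_one]
  simp only [hardySum, ← Finset.mul_sum, ENNReal.mul_rpow_of_nonneg _ _ hr.le]
  conv_rhs => rw [hc]
  rw [← ENNReal.mul_rpow_of_nonneg _ _ (by positivity), ← ENNReal.tsum_mul_left]
  congr 1
  exact tsum_congr fun k => by ring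

lemma rpow_mul_sum_le_hardySum (hr : 0 < r) (k : ℕ) :
    w k ^ (1 / r) * ∑ j ∈ Finset.range (k + 1), b j ≤ hardySum r w b := by
  calc w k ^ (1 / r) * ∑ j ∈ Finset.range (k + 1), b j
      = (w k * (∑ j ∈ Finset.range (k + 1), b j) ^ r) ^ (1 / r) := by
        rw [ENNReal.mul_rpow_of_nonneg _ _ (by positivity), ← ENNReal.rpow_mul,
          mul_one_div_cancel hr.ne', ENNReal.rpow_one]
    _ ≤ hardySum r w b := by
        unfold hardySum
        gcongr
        exact ENNReal.le_tsum (f := fun k => w k * (∑ j ∈ Finset.range (k + 1), b j) ^ r) k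

end HardySum

lemma io_coe (α β : ℝ) : io (α : EReal) (β : EReal) = Ioo α β := by
  ext s; simp [io, EReal.coe_lt_coe_iff]

section Interval

variable {p : ℝ} {v : ℝ → ℝ≥0∞} {α β : ℝ} {t : ℝ≥0∞}

lemma lintegral_le_rpow_mul_Vp (hp : 1 ≤ p) (hv : Measurable v)
    (hvI : ∀ s ∈ Ioo α β, 0 < v s ∧ v s < ⊤) {f : ℝ → ℝ≥0∞} (hf : Measurable f) :
    ∫⁻ s in Ioo α β, f s ≤ (∫⁻ s in Ioo α β, f s ^ p * v s) ^ (1 / p) * Vp p v α β := by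
  rcases hp.eq_or_lt with rfl | hp1
  · set E := essSup (fun s => (v s)⁻¹) (volume.restrict (Ioo α β))
    simp only [Vp, if_pos, io_coe, ENNReal.rpow_one, div_one]
    calc ∫⁻ s in Ioo α β, f s = ∫⁻ s in Ioo α β, f s * v s * (v s)⁻¹ :=
          setLIntegral_congr_fun measurableSet_Ioo fun s hs => by
            rw [mul_assoc, ENNReal.mul_inv_cancel (hvI s hs).1.ne' (hvI s hs).2.ne, mul_one]
      _ ≤ ∫⁻ s in Ioo α β, f s * v s * E :=
          lintegral_mono_ae <| (ENNReal.ae_le_essSup _).mono fun s hs => by gcongr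
      _ = (∫⁻ s in Ioo α β, f s * v s) * E := lintegral_mul_const'' _ (hf.mul hv).aemeasurable
  · have hp0 : p ≠ 0 := by positivity
    have hpq : p.HolderConjugate (p / (p - 1)) := Real.HolderConjugate.conjExponent hp1
    have key := ENNReal.lintegral_mul_le_Lp_mul_Lq (volume.restrict (Ioo α β)) hpq
      (hf.mul (hv.pow_const (1 / p))).aemeasurable (hv.pow_const (-(1 / p))).aemeasurable
    have hfg : ∫⁻ s in Ioo α β, ((f * fun s => v s ^ (1 / p)) * fun s => v s ^ (-(1 / p))) s
        = ∫⁻ s in Ioo α β, f s :=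
      setLIntegral_congr_fun measurableSet_Ioo fun s hs => by
        rw [Pi.mul_apply, Pi.mul_apply, mul_assoc,
          ← ENNReal.rpow_add _ _ (hvI s hs).1.ne' (hvI s hs).2.ne, add_neg_cancel,
          ENNReal.rpow_zero, mul_one]
    have hF : ∫⁻ s in Ioo α β, (f * fun s => v s ^ (1 / p)) s ^ p
        = ∫⁻ s in Ioo α β, f s ^ p * v s := lintegral_congr fun s => by
      rw [Pi.mul_apply, ENNReal.mul_rpow_of_nonneg _ _ (by positivity), ← ENNReal.rpow_mul,
        one_div_mul_cancel hp0, ENNReal.rpow_one]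
    have hG : ∫⁻ s in Ioo α β, (v s ^ (-(1 / p))) ^ (p / (p - 1))
        = ∫⁻ s in Ioo α β, v s ^ (-(1 / (p - 1))) := lintegral_congr fun s => by
      rw [← ENNReal.rpow_mul]
      congr 1
      field_simp
    rw [hfg, hF, hG, show 1 / (p / (p - 1)) = (p - 1) / p by field_simp] at key
    rwa [Vp, if_neg hp1.ne', io_coe]

lemma Vp_ne_zero (hp : 1 ≤ p) (hv : Measurable v) (hαβ : α < β)
    (hvI : ∀ s ∈ Ioo α β, 0 < v s ∧ v s < ⊤) : Vp p v α β ≠ 0 := by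
  intro hV
  -- Hölder with `f = 1`: since `⊤ * 0 = 0`, the bound vanishes even when `∫ v = ⊤`.
  have h := lintegral_le_rpow_mul_Vp hp hv hvI (measurable_const (a := (1 : ℝ≥0∞)))
  rw [hV, mul_zero, setLIntegral_const, one_mul, Real.volume_Ioo] at h
  exact (ENNReal.ofReal_pos.2 (sub_pos.2 hαβ)).ne' (le_zero_iff.1 h)

lemma indicator_rpow_mul {S : Set ℝ} (hp : 0 < p) (h : ℝ → ℝ≥0∞) (s : ℝ) :
    S.indicator h s ^ p * v s = S.indicator (fun s => h s ^ p * v s) s := by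
  by_cases hs : s ∈ S <;> simp [hs, ENNReal.zero_rpow_of_pos hp]

lemma exists_lintegral_gt_of_lt_essSup (hv : Measurable v)
    (hvI : ∀ s ∈ Ioo α β, 0 < v s ∧ v s < ⊤)
    (ht : t < essSup (fun s => (v s)⁻¹) (volume.restrict (Ioo α β))) :
    ∃ g : ℝ → ℝ≥0∞, Measurable g ∧ ∫⁻ s in Ioo α β, g s * v s ≤ 1 ∧
      t < ∫⁻ s in Ioo α β, g s := by
  obtain ⟨t', htt', ht'⟩ := exists_between ht
  set S := {s | t' < (v s)⁻¹} ∩ Ioo α β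
  have hSm : MeasurableSet S := (hv.inv measurableSet_Ioi).inter measurableSet_Ioo
  have hS0 : volume S ≠ 0 := by
    intro hS
    refine ht'.not_ge (essSup_le_of_ae_le _ ?_)
    rw [Filter.EventuallyLE, ae_restrict_iff' measurableSet_Ioo]
    refine measure_eq_zero_iff_ae_notMem.1 hS |>.mono fun s hs hsI => ?_
    exact not_lt.1 fun h => hs ⟨h, hsI⟩
  have hStop : volume S ≠ ⊤ :=
    ((measure_mono inter_subset_right).trans_lt (by simp [Real.volume_Ioo])).ne
  refine ⟨S.indicator fun s => (v s)⁻¹ * (volume S)⁻¹,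
    (hv.inv.mul_const _).indicator hSm, le_of_eq ?_, htt'.trans_le ?_⟩
  · calc ∫⁻ s in Ioo α β, S.indicator (fun s => (v s)⁻¹ * (volume S)⁻¹) s * v s
        = ∫⁻ s in Ioo α β, S.indicator (fun _ => (volume S)⁻¹) s := by
          refine setLIntegral_congr_fun measurableSet_Ioo fun s hs => ?_
          by_cases hsS : s ∈ S
          · simp only [indicator_of_mem hsS]
            rw [mul_right_comm, ENNReal.inv_mul_cancel (hvI s hs).1.ne' (hvI s hs).2.ne, one_mul]
          · simp [indicator_of_notMem hsS]
      _ = 1 := by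
          rw [setLIntegral_indicator hSm, inter_eq_left.2 inter_subset_right,
            setLIntegral_const, ENNReal.inv_mul_cancel hS0 hStop]
  · calc t' = ∫⁻ _ in S, t' * (volume S)⁻¹ := by
          rw [setLIntegral_const, mul_assoc, ENNReal.inv_mul_cancel hS0 hStop, mul_one]
      _ ≤ ∫⁻ s in S, (v s)⁻¹ * (volume S)⁻¹ :=
          setLIntegral_mono' hSm fun s hs => by gcongr; exact hs.1.le
      _ = ∫⁻ s in Ioo α β, S.indicator (fun s => (v s)⁻¹ * (volume S)⁻¹) s := by
          rw [setLIntegral_indicator hSm, inter_eq_left.2 inter_subset_right]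

lemma exists_lintegral_gt_of_lt_rpow_lintegral (hp1 : 1 < p) (hv : Measurable v)
    (hvI : ∀ s ∈ Ioo α β, 0 < v s ∧ v s < ⊤)
    (ht : t < (∫⁻ s in Ioo α β, v s ^ (-(1 / (p - 1)))) ^ ((p - 1) / p)) :
    ∃ g : ℝ → ℝ≥0∞, Measurable g ∧ ∫⁻ s in Ioo α β, g s ^ p * v s ≤ 1 ∧
      t < ∫⁻ s in Ioo α β, g s := by
  have hp0 : 0 < p := by positivity
  have hp1' : p - 1 ≠ 0 := by linarith
  have he : 0 < (p - 1) / p := div_pos (by linarith) hp0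
  -- `φ` is the extremal function of Hölder's inequality (`φ ^ p * v = φ`); its truncations
  -- to `{φ ≤ n}` have finite norm.
  set φ : ℝ → ℝ≥0∞ := fun s => v s ^ (-(1 / (p - 1)))
  have hφm : Measurable φ := hv.pow_const _
  have hφv : ∀ s ∈ Ioo α β, φ s ^ p * v s = φ s := fun s hs => by
    rw [← ENNReal.rpow_mul, ← ENNReal.rpow_add_one (hvI s hs).1.ne' (hvI s hs).2.ne]
    congr 1
    field_simp
    ring
  set S : ℕ → Set ℝ := fun n => Ioo α β ∩ {s | φ s ≤ n}
  have hSm : ∀ n, MeasurableSet (S n) := fun n => measurableSet_Ioo.inter (hφm measurableSet_Iic)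
  have hSI : ⋃ n, S n = Ioo α β := by
    refine (iUnion_subset fun n => inter_subset_left).antisymm fun s hs => ?_
    have hφs : φ s ≠ ⊤ := by
      simp [φ, ENNReal.rpow_eq_top_iff, (hvI s hs).1.ne', (hvI s hs).2.ne]
    obtain ⟨n, hn⟩ := ENNReal.exists_nat_gt hφs
    exact mem_iUnion.2 ⟨n, hs, hn.le⟩
  have hSmono : Monotone S := fun m n hmn =>
    fun s hs => ⟨hs.1, (show φ s ≤ m from hs.2).trans (by exact_mod_cast hmn)⟩
  rw [← ENNReal.rpow_inv_lt_iff he, ← hSI,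
    setLIntegral_iUnion_of_directed _ hSmono.directed_le, lt_iSup_iff] at ht
  obtain ⟨n, hn⟩ := ht
  set Φ := ∫⁻ s in S n, φ s
  have hΦ0 : Φ ≠ 0 := (zero_le.trans_lt hn).ne'
  have hΦtop : Φ ≠ ⊤ := by
    refine ((setLIntegral_mono measurable_const fun s hs => hs.2).trans_lt ?_).ne
    rw [setLIntegral_const]
    exact ENNReal.mul_lt_top (by simp) ((measure_mono inter_subset_left).trans_lt (by simp))
  refine ⟨(S n).indicator fun s => φ s * Φ ^ (-(1 / p)),
    (hφm.mul_const _).indicator (hSm n), le_of_eq ?_, ?_⟩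
  · simp_rw [indicator_rpow_mul hp0]
    rw [setLIntegral_indicator (hSm n), inter_eq_left.2 inter_subset_left]
    calc ∫⁻ s in S n, (φ s * Φ ^ (-(1 / p))) ^ p * v s
        = ∫⁻ s in S n, Φ⁻¹ * φ s := setLIntegral_congr_fun (hSm n) fun s hs => by
          rw [ENNReal.mul_rpow_of_nonneg _ _ hp0.le, ← ENNReal.rpow_mul Φ,
            neg_mul, one_div_mul_cancel hp0.ne', ENNReal.rpow_neg_one, mul_right_comm,
            hφv s hs.1, mul_comm]
      _ = 1 := by rw [lintegral_const_mul _ hφm, ENNReal.inv_mul_cancel hΦ0 hΦtop]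
  · rw [setLIntegral_indicator (hSm n), inter_eq_left.2 inter_subset_left,
      lintegral_mul_const _ hφm, mul_comm, ← ENNReal.rpow_add_one hΦ0 hΦtop,
      show -(1 / p) + 1 = (p - 1) / p by field_simp; ring]
    exact (ENNReal.rpow_inv_lt_iff he).1 hn

lemma exists_lintegral_gt_of_lt_Vp (hp : 1 ≤ p) (hv : Measurable v)
    (hvI : ∀ s ∈ Ioo α β, 0 < v s ∧ v s < ⊤) (ht : t < Vp p v α β) :
    ∃ g : ℝ → ℝ≥0∞, Measurable g ∧ ∫⁻ s in Ioo α β, g s ^ p * v s ≤ 1 ∧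
      t < ∫⁻ s in Ioo α β, g s := by
  rcases hp.eq_or_lt with rfl | hp1
  · rw [Vp, if_pos rfl, io_coe] at ht
    simpa only [ENNReal.rpow_one] using exists_lintegral_gt_of_lt_essSup hv hvI ht
  · rw [Vp, if_neg hp1.ne', io_coe] at ht
    exact exists_lintegral_gt_of_lt_rpow_lintegral hp1 hv hvI ht

end Interval

lemma setLIntegral_Ioo_pos {u : ℝ → ℝ≥0∞} {α β : ℝ} (hu : Measurable u) (hαβ : α < β)
    (huI : ∀ s ∈ Ioo α β, 0 < u s) : 0 < ∫⁻ s in Ioo α β, u s := by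
  have hsupp : Function.support u ∩ Ioo α β = Ioo α β := inter_eq_right.2 fun s hs => (huI s hs).ne'
  rw [setLIntegral_pos_iff hu, hsupp, Real.volume_Ioo]
  exact ENNReal.ofReal_pos.2 (sub_pos.2 hαβ)

lemma lintegral_Ioo_eq_sum_of_monotone {y : ℕ → ℝ} (hy : Monotone y) (f : ℝ → ℝ≥0∞) (n : ℕ) :
    ∫⁻ s in Ioo (y 0) (y n), f s = ∑ j ∈ Finset.range n, ∫⁻ s in Ioo (y j) (y (j + 1)), f s := by
  induction n with
  | zero => simp
  | succ n ih =>
    simp only [Finset.sum_range_succ, setLIntegral_congr Ioo_ae_eq_Ioc] at ih ⊢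
    rw [← ih, ← Ioc_union_Ioc_eq_Ioc (hy n.zero_le) (hy n.le_succ),
      lintegral_union measurableSet_Ioc (Ioc_disjoint_Ioc_of_le le_rfl)]

lemma tsum_indicator_apply_of_mem {ι α : Type*} {I : ι → Set α}
    (hI : Pairwise (Function.onFun Disjoint I)) (h : ι → α → ℝ≥0∞) {j : ι} {s : α}
    (hs : s ∈ I j) : ∑' i, (I i).indicator (h i) s = h j s := by
  rw [tsum_eq_single j fun i hij => indicator_of_notMem (disjoint_left.1 (hI hij.symm) hs) _,
    indicator_of_mem hs]

def block (N : ℤ) (x : ℤ → ℝ) (j : ℕ) : Set ℝ := Ioo (x (N + j)) (x (N + 1 + j))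

def dyadicWeight (N : ℤ) (x : ℤ → ℝ) (q r : ℝ) (u : ℝ → ℝ≥0∞) (k : ℕ) : ℝ≥0∞ :=
  (2 : ℝ≥0∞) ^ (-((N + 1 + k : ℤ) : ℝ)) *
    (∫⁻ t in Ioo (x (N + 1 + k)) (x (N + 2 + k)), u t) ^ (r / q)

section Blocks

variable {p q r : ℝ} {a b : EReal} {u v : ℝ → ℝ≥0∞} {N : ℤ} {x : ℤ → ℝ}

lemma measurableSet_block (j : ℕ) : MeasurableSet (block N x j) := measurableSet_Ioo

lemma monotone_shift (hx : ∀ k, N ≤ k → x k < x (k + 1)) : Monotone fun j : ℕ => x (N + j) :=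
  monotone_nat_of_le_succ fun j => by
    simpa only [Nat.cast_succ, add_assoc] using (hx (N + j) (by omega)).le

lemma block_eq_Ioo_shift (j : ℕ) : block N x j = Ioo (x (N + j)) (x (N + (j + 1 : ℕ))) := by
  rw [block, Nat.cast_succ, add_comm (j : ℤ), add_assoc]

lemma pairwise_disjoint_block (hx : ∀ k, N ≤ k → x k < x (k + 1)) :
    Pairwise (Function.onFun Disjoint (block N x)) := by
  convert (monotone_shift hx).pairwise_disjoint_on_Ioo_succ using 2
  ext1 j
  rw [block_eq_Ioo_shift, Order.succ_eq_add_one]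

lemma lintegral_Ioo_eq_sum_block (hx : ∀ k, N ≤ k → x k < x (k + 1)) (f : ℝ → ℝ≥0∞) (k : ℕ) :
    ∫⁻ s in Ioo (x N) (x (N + 1 + k)), f s =
      ∑ j ∈ Finset.range (k + 1), ∫⁻ s in block N x j, f s := by
  have h := lintegral_Ioo_eq_sum_of_monotone (monotone_shift hx) f (k + 1)
  simp only [← block_eq_Ioo_shift, Nat.cast_zero, add_zero] at h
  rwa [Nat.cast_succ, add_comm (k : ℤ), ← add_assoc] at h

lemma Ioo_subset_io_s17 (hxab : ∀ k, N ≤ k → a ≤ (x k : EReal) ∧ (x k : EReal) ≤ b) {i j : ℤ}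
    (hi : N ≤ i) (hj : N ≤ j) : Ioo (x i) (x j) ⊆ io a b := fun _ hs =>
  ⟨(hxab i hi).1.trans_lt (EReal.coe_lt_coe_iff.2 hs.1),
    (EReal.coe_lt_coe_iff.2 hs.2).trans_le (hxab j hj).2⟩

lemma IsWeight.pos_lt_top_on_block (hv : IsWeight a b v)
    (hxab : ∀ k, N ≤ k → a ≤ (x k : EReal) ∧ (x k : EReal) ≤ b) (j : ℕ) :
    ∀ s ∈ block N x j, 0 < v s ∧ v s < ⊤ := fun s hs =>
  hv.2 s (Ioo_subset_io_s17 hxab (by omega) (by omega) hs)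

lemma Vp_block_ne_zero (hp : 1 ≤ p) (hv : IsWeight a b v) (hx : ∀ k, N ≤ k → x k < x (k + 1))
    (hxab : ∀ k, N ≤ k → a ≤ (x k : EReal) ∧ (x k : EReal) ≤ b) (j : ℕ) :
    Vp p v (x (N + j)) (x (N + 1 + j)) ≠ 0 :=
  Vp_ne_zero hp hv.1 (by simpa [add_right_comm] using hx (N + j) (by omega))
    (hv.pos_lt_top_on_block hxab j)

lemma dyadicWeight_ne_zero (hq : 0 < q) (hr : 0 < r) (hu : IsWeight a b u)
    (hx : ∀ k, N ≤ k → x k < x (k + 1))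
    (hxab : ∀ k, N ≤ k → a ≤ (x k : EReal) ∧ (x k : EReal) ≤ b) (k : ℕ) :
    dyadicWeight N x q r u k ≠ 0 := by
  have hlt : x (N + 1 + k) < x (N + 2 + k) := by
    have h := hx (N + 1 + k) (by omega)
    rwa [show N + 1 + (k : ℤ) + 1 = N + 2 + k by ring] at h
  have hU := setLIntegral_Ioo_pos hu.1 hlt
    fun s hs => (hu.2 s (Ioo_subset_io_s17 hxab (by omega) (by omega) hs)).1
  exact mul_ne_zero (by simp) (ENNReal.rpow_pos_of_nonneg hU (div_pos hr hq).le).ne'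

lemma lhsSeq_eq_hardySum (aseq : ℕ → ℝ≥0) :
    lhsSeq N x p q r u v aseq = hardySum r (dyadicWeight N x q r u)
      fun j => aseq j * Vp p v (x (N + j)) (x (N + 1 + j)) := rfl

lemma lhsD2_eq_hardySum (hxN : (x N : EReal) = a) (hx : ∀ k, N ≤ k → x k < x (k + 1))
    (f : ℝ → ℝ≥0∞) :
    lhsD2 a N x q r u f = hardySum r (dyadicWeight N x q r u)
      fun j => ∫⁻ s in block N x j, f s := by
  unfold lhsD2 hardySum dyadicWeight
  congr 1
  refine tsum_congr fun k => ?_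
  rw [← hxN, io_coe, lintegral_Ioo_eq_sum_block hx, mul_right_comm]

end Blocks

section Reduction

variable {p q r : ℝ} {a b : EReal} {u v : ℝ → ℝ≥0∞} {N : ℤ} {x : ℤ → ℝ} {C : ℝ≥0∞}

lemma ne_zero_of_lhsSeq_le (hp : 1 ≤ p) (hq : 0 < q) (hr : 0 < r) (hu : IsWeight a b u)
    (hv : IsWeight a b v) (hx : ∀ k, N ≤ k → x k < x (k + 1))
    (hxab : ∀ k, N ≤ k → a ≤ (x k : EReal) ∧ (x k : EReal) ≤ b)
    (hC : ∀ aseq : ℕ → ℝ≥0,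
      lhsSeq N x p q r u v aseq ≤ C * (∑' k, (aseq k : ℝ≥0∞) ^ p) ^ (1 / p)) :
    C ≠ 0 := by
  rintro rfl
  have h := (rpow_mul_sum_le_hardySum hr 0).trans
    ((lhsSeq_eq_hardySum (fun i => if i = 0 then 1 else 0)).symm.trans_le (hC _))
  simp only [zero_mul, nonpos_iff_eq_zero, zero_add, Finset.range_one, Finset.sum_singleton,
    if_pos, ENNReal.coe_one, one_mul, mul_eq_zero] at h
  rcases h with h | h
  · exact dyadicWeight_ne_zero hq hr hu hx hxab 0 (ENNReal.rpow_eq_zero_iff_of_pos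
      (by positivity) |>.1 h)
  · exact Vp_block_ne_zero hp hv hx hxab 0 (by simpa using h)

lemma lhsD2_le_of_lhsSeq_le (hp : 1 ≤ p) (hq : 0 < q) (hr : 0 < r) (hu : IsWeight a b u)
    (hv : IsWeight a b v) (hxN : (x N : EReal) = a) (hx : ∀ k, N ≤ k → x k < x (k + 1))
    (hxab : ∀ k, N ≤ k → a ≤ (x k : EReal) ∧ (x k : EReal) ≤ b)
    (hC : ∀ aseq : ℕ → ℝ≥0,
      lhsSeq N x p q r u v aseq ≤ C * (∑' k, (aseq k : ℝ≥0∞) ^ p) ^ (1 / p))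
    {f : ℝ → ℝ≥0∞} (hf : Measurable f) :
    lhsD2 a N x q r u f ≤ C * rhsD N x p v f := by
  have hp0 : 0 < p := by positivity
  set B : ℕ → ℝ≥0∞ := fun j => ∫⁻ s in block N x j, f s ^ p * v s
  by_cases hB : ∃ j, B j = ⊤
  · have hrhs : rhsD N x p v f = ⊤ := by
      change (∑' j, B j) ^ (1 / p) = ⊤
      rw [ENNReal.tsum_eq_top_of_eq_top hB, ENNReal.top_rpow_of_pos (by positivity)]
    rw [hrhs, ENNReal.mul_top (ne_zero_of_lhsSeq_le hp hq hr hu hv hx hxab hC)]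
    exact le_top
  simp only [not_exists] at hB
  have hBp : ∀ j, ((B j ^ (1 / p)).toNNReal : ℝ≥0∞) = B j ^ (1 / p) := fun j =>
    ENNReal.coe_toNNReal (ENNReal.rpow_ne_top_of_nonneg (by positivity) (hB j))
  calc lhsD2 a N x q r u f
      = hardySum r (dyadicWeight N x q r u) fun j => ∫⁻ s in block N x j, f s :=
        lhsD2_eq_hardySum hxN hx f
    _ ≤ hardySum r (dyadicWeight N x q r u)
          fun j => (B j ^ (1 / p)).toNNReal * Vp p v (x (N + j)) (x (N + 1 + j)) :=
        hardySum_mono hr.le fun j => by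
          rw [hBp]; exact lintegral_le_rpow_mul_Vp hp hv.1 (hv.pos_lt_top_on_block hxab j) hf
    _ ≤ C * (∑' j, ((B j ^ (1 / p)).toNNReal : ℝ≥0∞) ^ p) ^ (1 / p) := hC _
    _ = C * rhsD N x p v f := by
        simp only [hBp, ← ENNReal.rpow_mul, one_div_mul_cancel hp0.ne', ENNReal.rpow_one]
        rfl

lemma hardySum_le_of_lhsD2_le (hp : 0 ≤ p) (hv : Measurable v) (hxN : (x N : EReal) = a)
    (hx : ∀ k, N ≤ k → x k < x (k + 1))
    (hC : ∀ f : ℝ → ℝ≥0∞, Measurable f → lhsD2 a N x q r u f ≤ C * rhsD N x p v f)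
    (A : ℕ → ℝ≥0∞) {g : ℕ → ℝ → ℝ≥0∞} (hg : ∀ j, Measurable (g j)) :
    hardySum r (dyadicWeight N x q r u) (fun j => A j * ∫⁻ s in block N x j, g j s) ≤
      C * (∑' j, A j ^ p * ∫⁻ s in block N x j, g j s ^ p * v s) ^ (1 / p) := by
  set f : ℝ → ℝ≥0∞ := fun s => ∑' i, (block N x i).indicator (fun s => A i * g i s) s
  have hf : Measurable f :=
    Measurable.tsum fun i => ((hg i).const_mul _).indicator measurableSet_Ioo
  have hfj : ∀ j, ∀ s ∈ block N x j, f s = A j * g j s := fun j s hs =>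
    tsum_indicator_apply_of_mem (pairwise_disjoint_block hx) _ hs
  have hf1 : ∀ j, ∫⁻ s in block N x j, f s = A j * ∫⁻ s in block N x j, g j s := fun j => by
    rw [setLIntegral_congr_fun (measurableSet_block j) (hfj j), lintegral_const_mul _ (hg j)]
  have hfp : ∀ j, ∫⁻ s in block N x j, f s ^ p * v s =
      A j ^ p * ∫⁻ s in block N x j, g j s ^ p * v s := fun j => by
    rw [← lintegral_const_mul _
      (show Measurable fun s => g j s ^ p * v s from ((hg j).pow_const p).mul hv)]
    refine setLIntegral_congr_fun (measurableSet_block j) fun s hs => ?_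
    rw [hfj j s hs, ENNReal.mul_rpow_of_nonneg _ _ hp, mul_assoc]
  calc hardySum r (dyadicWeight N x q r u) (fun j => A j * ∫⁻ s in block N x j, g j s)
      = lhsD2 a N x q r u f := by simp only [lhsD2_eq_hardySum hxN hx, hf1]
    _ ≤ C * rhsD N x p v f := hC f hf
    _ = C * (∑' j, A j ^ p * ∫⁻ s in block N x j, g j s ^ p * v s) ^ (1 / p) := by
        simp only [← hfp]
        rfl

lemma Vp_ne_top_of_lhsD2_le (hp : 1 ≤ p) (hq : 0 < q) (hr : 0 < r) (hu : IsWeight a b u)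
    (hv : IsWeight a b v) (hxN : (x N : EReal) = a) (hx : ∀ k, N ≤ k → x k < x (k + 1))
    (hxab : ∀ k, N ≤ k → a ≤ (x k : EReal) ∧ (x k : EReal) ≤ b)
    (hC : ∀ f : ℝ → ℝ≥0∞, Measurable f → lhsD2 a N x q r u f ≤ C * rhsD N x p v f)
    (hCtop : C ≠ ⊤) (j : ℕ) :
    Vp p v (x (N + j)) (x (N + 1 + j)) ≠ ⊤ := by
  intro hV
  have hp0 : 0 < p := by positivity
  set c := dyadicWeight N x q r u j ^ (1 / r)
  have hc : c ≠ 0 := (ENNReal.rpow_pos_of_nonneg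
    (pos_iff_ne_zero.2 (dyadicWeight_ne_zero hq hr hu hx hxab j)) (by positivity)).ne'
  have hct : ∀ t < ⊤, c * t ≤ C := fun t ht => by
    obtain ⟨g, hg, hgv, htg⟩ :=
      exists_lintegral_gt_of_lt_Vp hp hv.1 (hv.pos_lt_top_on_block hxab j) (hV ▸ ht)
    set δ : ℕ → ℝ≥0∞ := fun i => if i = j then 1 else 0
    have hδ : ∑' i, δ i ^ p * ∫⁻ s in block N x i, g s ^ p * v s =
        ∫⁻ s in block N x j, g s ^ p * v s := by
      rw [tsum_eq_single j fun i hi => by simp [δ, hi, ENNReal.zero_rpow_of_pos hp0]]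
      simp [δ]
    calc c * t ≤ c * ∫⁻ s in block N x j, g s := by gcongr; exact htg.le
      _ = c * ∑ i ∈ Finset.range (j + 1), δ i * ∫⁻ s in block N x i, g s := by simp [δ]
      _ ≤ hardySum r (dyadicWeight N x q r u) fun i => δ i * ∫⁻ s in block N x i, g s :=
          rpow_mul_sum_le_hardySum hr j
      _ ≤ C * (∑' i, δ i ^ p * ∫⁻ s in block N x i, g s ^ p * v s) ^ (1 / p) :=
          hardySum_le_of_lhsD2_le hp0.le hv.1 hxN hx hC δ fun _ => hg
      _ ≤ C := by
          rw [hδ]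
          exact mul_le_of_le_one_right' (ENNReal.rpow_le_one hgv (by positivity))
  refine hCtop (top_le_iff.1 ?_)
  rw [← ENNReal.mul_top hc, ← ENNReal.iSup_natCast, ENNReal.mul_iSup]
  exact iSup_le fun n => hct n (ENNReal.natCast_lt_top n)

lemma lhsSeq_le_top_mul (hp : 0 < p) (hr : 0 < r) (aseq : ℕ → ℝ≥0) :
    lhsSeq N x p q r u v aseq ≤ ⊤ * (∑' k, (aseq k : ℝ≥0∞) ^ p) ^ (1 / p) := by
  -- Not trivial, since `⊤ * 0 = 0`: the zero sequence is handled separately.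
  by_cases h : ∃ k, aseq k ≠ 0
  · obtain ⟨k, hk⟩ := h
    have hpos : 0 < ∑' k, (aseq k : ℝ≥0∞) ^ p :=
      (ENNReal.rpow_pos (by simpa [pos_iff_ne_zero] using hk) ENNReal.coe_ne_top).trans_le
        (ENNReal.le_tsum k)
    rw [ENNReal.top_mul (ENNReal.rpow_pos_of_nonneg hpos (by positivity)).ne']
    exact le_top
  · simp only [not_exists, not_not] at h
    rw [lhsSeq_eq_hardySum]
    simp only [h, ENNReal.coe_zero]
    rw [hardySum_const_mul hr, zero_mul]
    exact zero_le

lemma lhsSeq_le_of_lhsD2_le (hp : 1 ≤ p) (hq : 0 < q) (hr : 0 < r) (hu : IsWeight a b u)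
    (hv : IsWeight a b v) (hxN : (x N : EReal) = a) (hx : ∀ k, N ≤ k → x k < x (k + 1))
    (hxab : ∀ k, N ≤ k → a ≤ (x k : EReal) ∧ (x k : EReal) ≤ b)
    (hC : ∀ f : ℝ → ℝ≥0∞, Measurable f → lhsD2 a N x q r u f ≤ C * rhsD N x p v f)
    (aseq : ℕ → ℝ≥0) :
    lhsSeq N x p q r u v aseq ≤ C * (∑' k, (aseq k : ℝ≥0∞) ^ p) ^ (1 / p) := by
  by_cases hCtop : C = ⊤
  · exact hCtop ▸ lhsSeq_le_top_mul (by positivity) hr aseq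
  set V : ℕ → ℝ≥0∞ := fun j => Vp p v (x (N + j)) (x (N + 1 + j))
  refine ENNReal.le_of_forall_lt_one_mul_le fun ε hε => ?_
  have hεV : ∀ j, ε * V j < V j := fun j => by
    simpa using (ENNReal.mul_lt_mul_iff_left (Vp_block_ne_zero hp hv hx hxab j)
      (Vp_ne_top_of_lhsD2_le hp hq hr hu hv hxN hx hxab hC hCtop j)).2 hε
  choose g hg hgv hgV using fun j =>
    exists_lintegral_gt_of_lt_Vp hp hv.1 (hv.pos_lt_top_on_block hxab j) (hεV j)
  calc ε * lhsSeq N x p q r u v aseq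
      = hardySum r (dyadicWeight N x q r u) fun j => aseq j * (ε * V j) := by
        rw [lhsSeq_eq_hardySum, ← hardySum_const_mul hr]
        simp only [mul_left_comm, V]
    _ ≤ hardySum r (dyadicWeight N x q r u) fun j => aseq j * ∫⁻ s in block N x j, g j s :=
        hardySum_mono hr.le fun j => by gcongr; exact (hgV j).le
    _ ≤ C * (∑' j, (aseq j : ℝ≥0∞) ^ p * ∫⁻ s in block N x j, g j s ^ p * v s) ^ (1 / p) :=
        hardySum_le_of_lhsD2_le (by positivity) hv.1 hxN hx hC _ hg
    _ ≤ C * (∑' j, (aseq j : ℝ≥0∞) ^ p) ^ (1 / p) := by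
        gcongr with j
        exact mul_le_of_le_one_right' (hgv j)

end Reduction

theorem discrete_reduction_second_general (p q r : ℝ) (hp : 1 ≤ p) (hq : 0 < q)
    (hr : 0 < r) (d₁ d₂ : ℝ≥0∞) :
    ∃ c₁ c₂ : ℝ≥0∞, 0 < c₁ ∧ c₂ < ⊤ ∧
      ∀ (a b : EReal), a < b → ∀ u v w : ℝ → ℝ≥0∞,
        IsWeight a b u → IsWeight a b v → IsWeight a b w →
        ∀ (N : ℤ) (x : ℤ → ℝ), IsDiscretizing a b w N x d₁ d₂ →
        ((∃ C'' : ℝ≥0∞, 0 < C'' ∧ C'' < ⊤ ∧ ∀ f : ℝ → ℝ≥0∞, Measurable f →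
            lhsD2 a N x q r u f ≤ C'' * rhsD N x p v f) ↔
          (∃ C : ℝ≥0∞, 0 < C ∧ C < ⊤ ∧ ∀ aseq : ℕ → ℝ≥0,
            lhsSeq N x p q r u v aseq ≤ C * (∑' k : ℕ, (aseq k : ℝ≥0∞) ^ p) ^ (1 / p))) ∧
        c₁ * sInf {C : ℝ≥0∞ | ∀ aseq : ℕ → ℝ≥0,
              lhsSeq N x p q r u v aseq ≤ C * (∑' k : ℕ, (aseq k : ℝ≥0∞) ^ p) ^ (1 / p)} ≤
            sInf {C'' : ℝ≥0∞ | ∀ f : ℝ → ℝ≥0∞, Measurable f →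
              lhsD2 a N x q r u f ≤ C'' * rhsD N x p v f} ∧
        sInf {C'' : ℝ≥0∞ | ∀ f : ℝ → ℝ≥0∞, Measurable f →
            lhsD2 a N x q r u f ≤ C'' * rhsD N x p v f} ≤
          c₂ * sInf {C : ℝ≥0∞ | ∀ aseq : ℕ → ℝ≥0,
              lhsSeq N x p q r u v aseq ≤ C * (∑' k : ℕ, (aseq k : ℝ≥0∞) ^ p) ^ (1 / p)} := by
  refine ⟨1, 1, one_pos, ENNReal.one_lt_top, fun a b _ u v w hu hv _ N x hx => ?_⟩
  obtain ⟨hxN, hxlt, hxab, -⟩ := hx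
  have seq_of_fun := fun C (hC : ∀ f : ℝ → ℝ≥0∞, Measurable f →
      lhsD2 a N x q r u f ≤ C * rhsD N x p v f) =>
    lhsSeq_le_of_lhsD2_le hp hq hr hu hv hxN hxlt hxab hC
  have fun_of_seq := fun C (hC : ∀ aseq : ℕ → ℝ≥0,
      lhsSeq N x p q r u v aseq ≤ C * (∑' k, (aseq k : ℝ≥0∞) ^ p) ^ (1 / p)) f hf =>
    lhsD2_le_of_lhsSeq_le (f := f) hp hq hr hu hv hxN hxlt hxab hC hf
  refine ⟨⟨fun ⟨C, h0, htop, hC⟩ => ⟨C, h0, htop, seq_of_fun C hC⟩,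
    fun ⟨C, h0, htop, hC⟩ => ⟨C, h0, htop, fun_of_seq C hC⟩⟩, ?_, ?_⟩
  · rw [one_mul]
    exact sInf_le_sInf fun C hC => seq_of_fun C hC
  · rw [one_mul]
    exact sInf_le_sInf fun C hC => fun_of_seq C hC

theorem discrete_reduction_second (p q r : ℝ) (hp : 1 ≤ p) (hq : 0 < q)
    (hr : 0 < r) (d₁ d₂ : ℝ≥0∞) (hd₁ : 0 < d₁) (hd₂ : d₂ < ⊤) :
    ∃ c₁ c₂ : ℝ≥0∞, 0 < c₁ ∧ c₂ < ⊤ ∧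
      ∀ (a b : EReal), a < b → ∀ u v w : ℝ → ℝ≥0∞,
        IsWeight a b u → IsWeight a b v → IsWeight a b w →
        ∀ (N : ℤ) (x : ℤ → ℝ), IsDiscretizing a b w N x d₁ d₂ →
        ((∃ C'' : ℝ≥0∞, 0 < C'' ∧ C'' < ⊤ ∧ ∀ f : ℝ → ℝ≥0∞, Measurable f →
            lhsD2 a N x q r u f ≤ C'' * rhsD N x p v f) ↔
          (∃ C : ℝ≥0∞, 0 < C ∧ C < ⊤ ∧ ∀ aseq : ℕ → ℝ≥0,
            lhsSeq N x p q r u v aseq ≤ C * (∑' k : ℕ, (aseq k : ℝ≥0∞) ^ p) ^ (1 / p))) ∧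
        c₁ * sInf {C : ℝ≥0∞ | ∀ aseq : ℕ → ℝ≥0,
              lhsSeq N x p q r u v aseq ≤ C * (∑' k : ℕ, (aseq k : ℝ≥0∞) ^ p) ^ (1 / p)} ≤
            sInf {C'' : ℝ≥0∞ | ∀ f : ℝ → ℝ≥0∞, Measurable f →
              lhsD2 a N x q r u f ≤ C'' * rhsD N x p v f} ∧
        sInf {C'' : ℝ≥0∞ | ∀ f : ℝ → ℝ≥0∞, Measurable f →
            lhsD2 a N x q r u f ≤ C'' * rhsD N x p v f} ≤
          c₂ * sInf {C : ℝ≥0∞ | ∀ aseq : ℕ → ℝ≥0,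
              lhsSeq N x p q r u v aseq ≤ C * (∑' k : ℕ, (aseq k : ℝ≥0∞) ^ p) ^ (1 / p)} :=
  discrete_reduction_second_general p q r hp hq hr d₁ d₂
end
end
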